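/- arXiv:2205.07346 — 8 statements merged into one kernel-verified Lean document; each statement's English description precedes it below -/
import Mathlib

section
/- Let (X, ≼) be a finite partially ordered set with a rank function ρ : X → ℕ such that ρ(y) = ρ(x) + 1 whenever y covers x, and with level sets X_ℓ = { x : ρ(x) = ℓ }. Assume X is normal: there exists a nonempty finite list of L maximal chains of X such that for every ℓ with X_ℓ ≠ ∅, every element of rank ℓ belongs to exactly L/|X_ℓ| chains of the list. Assume further that X is rank-unimodal: the sequence |X_ℓ| is unimodal in ℓ. Then for every natural number t, the maximum cardinality of a set C ⊆ X such that for all distinct x, y ∈ C, x ≼ y implies ρ(y) − ρ(x) > t, equals max over residues m of the sum of |X_ℓ| over all ℓ with ℓ ≡ m (mod t+1). -/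
open Finset

section Stmt2Aux

def stmt2Pdp (a : ℕ → ℕ) (t : ℕ) : ℕ → ℕ
  | 0 => 0
  | n+1 => max (stmt2Pdp a t n) (a n + stmt2Pdp a t (n - t))

lemma stmt2Pdp_succ (a : ℕ → ℕ) (t n : ℕ) :
    stmt2Pdp a t (n+1) = max (stmt2Pdp a t n) (a n + stmt2Pdp a t (n - t)) := by
  simp [stmt2Pdp]

lemma stmt2Pdp_mono (a : ℕ → ℕ) (t : ℕ) : Monotone (stmt2Pdp a t) :=
  monotone_nat_of_le_succ fun n => by rw [stmt2Pdp_succ]; exact le_max_left _ _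

lemma stmt2_le_Pdp (a : ℕ → ℕ) (t n : ℕ) :
    a n + stmt2Pdp a t (n - t) ≤ stmt2Pdp a t (n+1) := by
  rw [stmt2Pdp_succ]; exact le_max_right _ _

lemma stmt2_mono_telescope (f : ℕ → ℕ) (hf : Monotone f) (u v : ℕ) (h : u ≤ v) :
    ∑ s ∈ Finset.Ico u v, (f (s+1) - f s) = f v - f u := by
  obtain ⟨d, rfl⟩ := Nat.exists_eq_add_of_le h
  induction d with
  | zero => simp
  | succ d ih =>
    rw [← Nat.add_assoc, Finset.sum_Ico_succ_top (by omega), ih (by omega)]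
    have h1 : f u ≤ f (u+d) := hf (by omega)
    have h2 : f (u+d) ≤ f (u+d+1) := hf (by omega)
    omega

lemma stmt2_spaced_gap {k t : ℕ} {r : ℕ → ℕ}
    (hsp : ∀ i, i+1 < k → r i + (t+1) ≤ r (i+1)) :
    ∀ d i, i + d < k → r i + d*(t+1) ≤ r (i+d) := by
  intro d
  induction d with
  | zero => intro i _; simp
  | succ d ih =>
    intro i h
    have h1 := ih i (by omega)
    have h2 := hsp (i+d) (by omega)
    have he : i + (d+1) = (i+d) + 1 := by omega
    have hm : (d+1)*(t+1) = d*(t+1) + (t+1) := by ring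
    rw [he, hm]
    omega

lemma stmt2Pdp_spaced (a : ℕ → ℕ) (t : ℕ) : ∀ n, ∃ k : ℕ, ∃ r : ℕ → ℕ,
    (∀ i, i+1 < k → r i + (t+1) ≤ r (i+1)) ∧ (∀ i, i < k → r i < n) ∧
    stmt2Pdp a t n = ∑ i ∈ Finset.range k, a (r i) := by
  intro n
  induction n using Nat.strong_induction_on with
  | _ n ih =>
    match n with
    | 0 => exact ⟨0, fun _ => 0, by simp, by simp, by simp [stmt2Pdp]⟩
    | n+1 =>
      rw [stmt2Pdp_succ]
      rcases max_cases (stmt2Pdp a t n) (a n + stmt2Pdp a t (n - t)) with ⟨hm, _⟩ | ⟨hm, _⟩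
      · obtain ⟨k, r, h1, h2, h3⟩ := ih n (by omega)
        exact ⟨k, r, h1, fun i hi => by have := h2 i hi; omega, by rw [hm, h3]⟩
      · obtain ⟨k, r, h1, h2, h3⟩ := ih (n - t) (by omega)
        refine ⟨k+1, fun i => if i < k then r i else n, ?_, ?_, ?_⟩
        · intro i hi
          by_cases hik : i + 1 < k
          · have hik2 : i < k := by omega
            simp only [if_pos hik2, if_pos hik]
            exact h1 i hik
          · have hik' : i + 1 = k := by omega
            have hik2 : i < k := by omega
            have h2' := h2 i hik2
            simp only [if_pos hik2, if_neg (show ¬ i + 1 < k by omega)]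
            omega
        · intro i hi
          by_cases hik : i < k
          · simp only [if_pos hik]; have := h2 i hik; omega
          · simp only [if_neg hik]; omega
        · rw [hm, h3, Finset.sum_range_succ]
          simp only [if_neg (lt_irrefl k)]
          rw [add_comm]
          congr 1
          exact Finset.sum_congr rfl fun i hi => by
            simp only [if_pos (Finset.mem_range.mp hi)]

section ShiftSec
variable {a : ℕ → ℕ} {t N p M : ℕ}
variable (hinc : ∀ ℓ₁ ℓ₂ : ℕ, ℓ₁ ≤ ℓ₂ → ℓ₂ ≤ p → a ℓ₁ ≤ a ℓ₂)
variable (hdec : ∀ ℓ₁ ℓ₂ : ℕ, p ≤ ℓ₁ → ℓ₁ ≤ ℓ₂ → a ℓ₂ ≤ a ℓ₁)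
variable (hpN : p ≤ N)
variable (hM : ∀ m, ∑ ℓ ∈ Finset.range (N+1), (if ℓ % (t+1) = m then a ℓ else 0) ≤ M)

lemma stmt2_exists_min_witness {P : ℕ → Prop} (h : ∃ i, P i) :
    ∃ i, P i ∧ ∀ j, j < i → ¬ P j := by
  classical
  exact ⟨Nat.find h, Nat.find_spec h, fun j hj => Nat.find_min h hj⟩

include hM in
lemma stmt2_class_bound (k : ℕ) (r : ℕ → ℕ)
    (hall : ∀ i, i < k → r i = r 0 + i*(t+1))
    (hN : ∀ i, i < k → r i ≤ N) :
    ∑ i ∈ Finset.range k, a (r i) ≤ M := by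
  set m := r 0 % (t+1) with hm
  calc ∑ i ∈ Finset.range k, a (r i)
      = ∑ ℓ ∈ (Finset.range k).image (fun i => r 0 + i*(t+1)), a ℓ := by
        rw [Finset.sum_image ?_]
        · exact Finset.sum_congr rfl fun i hi => by
            rw [hall i (Finset.mem_range.mp hi)]
        · intro x _ y _ h
          have h2 := Nat.add_left_cancel h
          exact Nat.eq_of_mul_eq_mul_right (Nat.succ_pos t) h2
    _ = ∑ ℓ ∈ (Finset.range k).image (fun i => r 0 + i*(t+1)),
          (if ℓ % (t+1) = m then a ℓ else 0) := by
        refine Finset.sum_congr rfl fun ℓ hℓ => ?_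
        obtain ⟨i, _, rfl⟩ := Finset.mem_image.mp hℓ
        rw [if_pos (by rw [Nat.add_mul_mod_self_right])]
    _ ≤ ∑ ℓ ∈ Finset.range (N+1), (if ℓ % (t+1) = m then a ℓ else 0) := by
        refine Finset.sum_le_sum_of_subset_of_nonneg ?_ (fun _ _ _ => Nat.zero_le _)
        intro ℓ hℓ
        obtain ⟨i, hi, rfl⟩ := Finset.mem_image.mp hℓ
        have h1 := hN i (Finset.mem_range.mp hi)
        rw [← hall i (Finset.mem_range.mp hi)] at *
        exact Finset.mem_range.mpr (by omega)
    _ ≤ M := hM m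

include hinc hdec hpN hM in
lemma stmt2_spaced_bound : ∀ E k : ℕ, ∀ r : ℕ → ℕ,
    (∀ i, i+1 < k → r i + (t+1) ≤ r (i+1)) →
    (∀ i, i < k → r i ≤ N) →
    (r (k-1) ≤ r 0 + (k-1)*(t+1) + E) →
    ∑ i ∈ Finset.range k, a (r i) ≤ M := by
  intro E
  induction E with
  | zero =>
    intro k r hsp hN hex
    rcases Nat.eq_zero_or_pos k with rfl | hk
    · simp only [Finset.range_zero, Finset.sum_empty]; exact Nat.zero_le M
    refine stmt2_class_bound hM k r (fun i hi => ?_) hN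
    have hlow := stmt2_spaced_gap hsp i 0 (by omega)
    have hhigh := stmt2_spaced_gap hsp (k-1-i) i (by omega)
    have hmul : i*(t+1) + (k-1-i)*(t+1) = (k-1)*(t+1) := by
      rw [← Nat.add_mul]; congr 1; omega
    have he : i + (k-1-i) = k-1 := by omega
    rw [he] at hhigh
    simp only [Nat.zero_add] at hlow
    omega
  | succ E ihE =>
    intro k r hsp hN hex
    rcases Nat.eq_zero_or_pos k with rfl | hk
    · simp only [Finset.range_zero, Finset.sum_empty]; exact Nat.zero_le M
    by_cases hall : ∀ i, i < k → r i = r 0 + i*(t+1)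
    · exact stmt2_class_bound hM k r hall hN
    push_neg at hall
    obtain ⟨i₀, ⟨hi₀k, hi₀ne⟩, hi₀min⟩ :=
      stmt2_exists_min_witness (P := fun i => i < k ∧ r i ≠ r 0 + i*(t+1))
        (by obtain ⟨i, hi, hne⟩ := hall; exact ⟨i, hi, hne⟩)
    have hmin : ∀ j, j < i₀ → r j = r 0 + j*(t+1) := by
      intro j hj
      by_contra hc
      exact hi₀min j hj ⟨by omega, hc⟩
    have hi₀pos : 0 < i₀ := by
      rcases Nat.eq_zero_or_pos i₀ with h0 | h
      · exfalso; apply hi₀ne; rw [h0]; simp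
      · exact h
    have hmul1 : i₀*(t+1) = (i₀-1)*(t+1) + (t+1) := by
      nth_rewrite 1 [show i₀ = (i₀-1)+1 by omega]
      rw [Nat.succ_mul]
    have hprev : r (i₀ - 1) = r 0 + (i₀-1)*(t+1) := hmin _ (by omega)
    have hgap : r 0 + i₀*(t+1) + 1 ≤ r i₀ := by
      have h1 := hsp (i₀-1) (by omega)
      rw [show i₀ - 1 + 1 = i₀ by omega] at h1
      have h2 : r i₀ ≠ r 0 + i₀*(t+1) := hi₀ne
      omega
    by_cases hcase : r (i₀ - 1) < p
    · -- shift left block up by one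
      set r' : ℕ → ℕ := fun j => if j < i₀ then r j + 1 else r j with hr'
      have hle : ∀ j, j < i₀ → r j + 1 ≤ p := by
        intro j hj
        have h1 := hmin j hj
        have hmulj : j*(t+1) ≤ (i₀-1)*(t+1) := Nat.mul_le_mul_right _ (by omega)
        omega
      have hsum : ∑ i ∈ Finset.range k, a (r i) ≤ ∑ i ∈ Finset.range k, a (r' i) := by
        refine Finset.sum_le_sum fun i _ => ?_
        by_cases hik : i < i₀
        · simp only [hr', if_pos hik]
          exact hinc (r i) (r i + 1) (by omega) (hle i hik)
        · simp only [hr', if_neg hik]; exact le_rfl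
      refine le_trans hsum (ihE k r' ?_ ?_ ?_)
      · intro i hi
        by_cases h1 : i + 1 < i₀
        · simp only [hr', if_pos (show i < i₀ by omega), if_pos h1]
          have := hsp i hi; omega
        by_cases h2 : i + 1 = i₀
        · simp only [hr', if_pos (show i < i₀ by omega), if_neg (show ¬ i+1 < i₀ by omega)]
          have hpv : r i = r (i₀ - 1) := by rw [show i = i₀ - 1 by omega]
          rw [h2, hpv, hprev]
          omega
        · simp only [hr', if_neg (show ¬ i < i₀ by omega), if_neg (show ¬ i+1 < i₀ by omega)]
          exact hsp i hi
      · intro i hi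
        by_cases hik : i < i₀
        · simp only [hr', if_pos hik]
          exact le_trans (hle i hik) hpN
        · simp only [hr', if_neg hik]; exact hN i hi
      · have h0 : r' 0 = r 0 + 1 := by simp only [hr', if_pos hi₀pos]
        have hk1 : r' (k-1) = r (k-1) := by
          simp only [hr', if_neg (show ¬ k-1 < i₀ by omega)]
        rw [h0, hk1]
        omega
    · -- shift right block down by one
      push_neg at hcase
      set r' : ℕ → ℕ := fun j => if j < i₀ then r j else r j - 1 with hr'
      have hge : ∀ j, i₀ ≤ j → j < k → p + t + 1 ≤ r j := by
        intro j hj hjk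
        have h1 := stmt2_spaced_gap hsp (j - i₀) i₀ (by omega)
        rw [show i₀ + (j - i₀) = j by omega] at h1
        omega
      have hsum : ∑ i ∈ Finset.range k, a (r i) ≤ ∑ i ∈ Finset.range k, a (r' i) := by
        refine Finset.sum_le_sum fun i hi => ?_
        by_cases hik : i < i₀
        · simp only [hr', if_pos hik]; exact le_rfl
        · simp only [hr', if_neg hik]
          have h := hge i (by omega) (Finset.mem_range.mp hi)
          exact hdec (r i - 1) (r i) (by omega) (by omega)
      refine le_trans hsum (ihE k r' ?_ ?_ ?_)
      · intro i hi
        by_cases h1 : i + 1 < i₀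
        · simp only [hr', if_pos (show i < i₀ by omega), if_pos h1]
          exact hsp i hi
        by_cases h2 : i + 1 = i₀
        · simp only [hr', if_pos (show i < i₀ by omega), if_neg (show ¬ i+1 < i₀ by omega)]
          have hpv : r i = r (i₀ - 1) := by rw [show i = i₀ - 1 by omega]
          have h2' : r (i+1) = r i₀ := by rw [h2]
          rw [hpv, hprev, h2']
          omega
        · simp only [hr', if_neg (show ¬ i < i₀ by omega), if_neg (show ¬ i+1 < i₀ by omega)]
          have h3 := hsp i hi
          have h4 := hge i (by omega) (by omega)
          omega
      · intro i hi
        by_cases hik : i < i₀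
        · simp only [hr', if_pos hik]; exact hN i hi
        · simp only [hr', if_neg hik]
          have := hN i hi; omega
      · have h0 : r' 0 = r 0 := by simp only [hr', if_pos hi₀pos]
        have hk1 : r' (k-1) = r (k-1) - 1 := by
          simp only [hr', if_neg (show ¬ k-1 < i₀ by omega)]
        have hlast : p + t + 1 ≤ r (k-1) := hge (k-1) (by omega) (by omega)
        rw [h0, hk1]
        omega

end ShiftSec

lemma stmt2_sum_countP_le {X : Type*} [DecidableEq X] (D : Finset X) (l : List (Finset X))
    (h : ∀ c ∈ l, (D ∩ c).card ≤ 1) :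
    ∑ x ∈ D, l.countP (fun c => decide (x ∈ c)) ≤ l.length := by
  induction l with
  | nil => simp
  | cons c cs ih =>
    simp only [List.countP_cons, List.length_cons]
    rw [Finset.sum_add_distrib]
    have h1 : ∑ x ∈ D, (if decide (x ∈ c) = true then 1 else 0) = (D ∩ c).card := by
      simp only [decide_eq_true_eq]
      rw [Finset.sum_ite_mem]
      simp
    have h2 := ih (fun c' hc' => h c' (List.mem_cons_of_mem _ hc'))
    have h3 := h c List.mem_cons_self
    omega

end Stmt2Aux

/-- Kleitman's theorem for finite normal rank-unimodal posets: the maximum size of a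
set `C` such that comparable distinct elements of `C` have ranks differing by more
than `t` equals the maximum, over residues `m` mod `t+1`, of the total size of the
level sets whose rank is congruent to `m`. -/
theorem stmt2 {X : Type*} [Fintype X] [PartialOrder X] [DecidableEq X]
    (ρ : X → ℕ)
    -- `ρ` is a rank function: ranks increase by one along covering relations
    (hrank : ∀ x y : X, x ⋖ y → ρ y = ρ x + 1)
    -- normality: a nonempty list of maximal chains such that each element of rank ℓ
    -- lies in exactly `L / |X_ℓ|` of them (equivalently, count · |X_ℓ| = L)
    (chains : List (Finset X)) (hne : chains ≠ [])
    (hmaxchain : ∀ c ∈ chains, IsMaxChain (· ≤ ·) (↑c : Set X))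
    (hregular : ∀ x : X,
      (chains.countP (fun c => decide (x ∈ c))) *
        (Finset.univ.filter (fun y => ρ y = ρ x)).card = chains.length)
    -- rank-unimodality of the level-set sizes
    (hunimodal : ∃ ℓ' : ℕ,
      (∀ ℓ₁ ℓ₂ : ℕ, ℓ₁ ≤ ℓ₂ → ℓ₂ ≤ ℓ' →
        (Finset.univ.filter (fun y => ρ y = ℓ₁)).card ≤
          (Finset.univ.filter (fun y => ρ y = ℓ₂)).card) ∧
      (∀ ℓ₁ ℓ₂ : ℕ, ℓ' ≤ ℓ₁ → ℓ₁ ≤ ℓ₂ →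
        (Finset.univ.filter (fun y => ρ y = ℓ₂)).card ≤
          (Finset.univ.filter (fun y => ρ y = ℓ₁)).card))
    (t : ℕ) :
    IsGreatest {k | ∃ C : Finset X,
        (∀ x ∈ C, ∀ y ∈ C, x ≠ y → x ≤ y → ρ y - ρ x > t) ∧ C.card = k}
      ((Finset.range (t + 1)).sup fun m =>
        ∑ ℓ ∈ Finset.range (Finset.univ.sup ρ + 1),
          if ℓ % (t + 1) = m then (Finset.univ.filter (fun y => ρ y = ℓ)).card else 0) := by
  classical
  set a : ℕ → ℕ := fun ℓ => (Finset.univ.filter (fun y => ρ y = ℓ)).card with ha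
  set N : ℕ := Finset.univ.sup ρ with hN
  set M : ℕ := (Finset.range (t + 1)).sup fun m =>
      ∑ ℓ ∈ Finset.range (N + 1), if ℓ % (t + 1) = m then a ℓ else 0 with hMdef
  obtain ⟨ℓ', hup, hdown⟩ := hunimodal
  have hρle : ∀ x : X, ρ x ≤ N := fun x => Finset.le_sup (Finset.mem_univ x)
  have hvan : ∀ ℓ, N < ℓ → a ℓ = 0 := by
    intro ℓ hℓ
    rw [ha]
    rw [Finset.card_eq_zero, Finset.filter_eq_empty_iff]
    intro x _
    have := hρle x
    omega
  set p : ℕ := min ℓ' N with hp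
  have hpN : p ≤ N := min_le_right _ _
  have hinc : ∀ ℓ₁ ℓ₂ : ℕ, ℓ₁ ≤ ℓ₂ → ℓ₂ ≤ p → a ℓ₁ ≤ a ℓ₂ := by
    intro ℓ₁ ℓ₂ h1 h2
    exact hup ℓ₁ ℓ₂ h1 (le_trans h2 (min_le_left _ _))
  have hdec : ∀ ℓ₁ ℓ₂ : ℕ, p ≤ ℓ₁ → ℓ₁ ≤ ℓ₂ → a ℓ₂ ≤ a ℓ₁ := by
    intro ℓ₁ ℓ₂ h1 h2
    by_cases hc : ℓ' ≤ ℓ₁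
    · exact hdown ℓ₁ ℓ₂ hc h2
    · have hpn : p = N := by omega
      rcases eq_or_lt_of_le h2 with rfl | hlt
      · exact le_rfl
      · rw [hvan ℓ₂ (by omega)]
        exact Nat.zero_le _
  have hM : ∀ m, ∑ ℓ ∈ Finset.range (N+1), (if ℓ % (t+1) = m then a ℓ else 0) ≤ M := by
    intro m
    by_cases hm : m < t + 1
    · rw [hMdef]
      exact Finset.le_sup (f := fun m => ∑ ℓ ∈ Finset.range (N+1),
        if ℓ % (t+1) = m then a ℓ else 0) (Finset.mem_range.mpr hm)
    · have : ∀ ℓ ∈ Finset.range (N+1), (if ℓ % (t+1) = m then a ℓ else 0) = 0 := by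
        intro ℓ _
        rw [if_neg]
        have := Nat.mod_lt ℓ (show 0 < t+1 by omega)
        omega
      rw [Finset.sum_congr rfl this]
      simp
  have hPdpM : stmt2Pdp a t (N+1) ≤ M := by
    obtain ⟨k, r, hsp, hlt, heq⟩ := stmt2Pdp_spaced a t (N+1)
    rw [heq]
    exact stmt2_spaced_bound hinc hdec hpN hM (r (k-1)) k r hsp
      (fun i hi => by have := hlt i hi; omega) (Nat.le_add_left _ _)
  -- strict monotonicity of rank
  have hstrict : ∀ y x : X, x < y → ρ x < ρ y := by
    have hwf : WellFounded ((· < ·) : X → X → Prop) := (Finite.to_wellFoundedLT).wf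
    intro y
    refine hwf.induction (C := fun y => ∀ x, x < y → ρ x < ρ y) y ?_
    intro y IH x hxy
    set S := Finset.univ.filter (fun w => x ≤ w ∧ w < y) with hS
    have hSne : S.Nonempty := ⟨x, by simp [hS, hxy]⟩
    obtain ⟨z, hzS, hzmax⟩ := S.exists_maximal hSne
    rw [hS, Finset.mem_filter] at hzS
    obtain ⟨-, hxz, hzy⟩ := hzS
    have hcov : z ⋖ y := by
      refine ⟨hzy, fun w hzw hwy => ?_⟩
      refine absurd (hzmax (y := w) (show w ∈ S from ?_) hzw.le) (not_le_of_gt hzw)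
      rw [hS, Finset.mem_filter]
      exact ⟨Finset.mem_univ _, le_trans hxz (le_of_lt hzw), hwy⟩
    have hr := hrank z y hcov
    rcases eq_or_lt_of_le hxz with rfl | hlt2
    · omega
    · have := IH z hzy x hlt2; omega
  constructor
  · -- membership: the best residue class achieves M
    obtain ⟨m₀, hm₀mem, hm₀⟩ := Finset.exists_mem_eq_sup (Finset.range (t+1))
      ⟨0, Finset.mem_range.mpr (by omega)⟩
      (fun m => ∑ ℓ ∈ Finset.range (N + 1), if ℓ % (t + 1) = m then a ℓ else 0)
    refine ⟨Finset.univ.filter (fun x => ρ x % (t+1) = m₀), ?_, ?_⟩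
    · intro x hx y hy hxyne hxyle
      have h1 : ρ x % (t+1) = m₀ := (Finset.mem_filter.mp hx).2
      have h2 : ρ y % (t+1) = m₀ := (Finset.mem_filter.mp hy).2
      have hxy : x < y := lt_of_le_of_ne hxyle hxyne
      have h3 : ρ x < ρ y := hstrict y x hxy
      have hdvd : (t+1) ∣ ρ y - ρ x :=
        (Nat.modEq_iff_dvd' (le_of_lt h3)).mp (h1.trans h2.symm)
      have h4 : t+1 ≤ ρ y - ρ x := Nat.le_of_dvd (by omega) hdvd
      omega
    · rw [hMdef, hm₀]
      rw [Finset.card_eq_sum_card_fiberwise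
        (f := ρ) (t := Finset.range (N+1)) (fun x _ => Finset.mem_range.mpr (by
          have := hρle x; omega))]
      refine Finset.sum_congr rfl fun ℓ hℓ => ?_
      rw [Finset.filter_filter]
      by_cases hc : ℓ % (t+1) = m₀
      · rw [if_pos hc]
        congr 1
        refine Finset.filter_congr fun x _ => ?_
        constructor
        · exact fun h => h.2
        · exact fun h => ⟨by rw [h, hc], h⟩
      · rw [if_neg hc]
        rw [Finset.card_eq_zero, Finset.filter_eq_empty_iff]
        rintro x _ ⟨hh1, hh2⟩
        exact hc (hh2 ▸ hh1)
  · -- upper bound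
    rintro k ⟨C, hC, rfl⟩
    set L : ℕ := chains.length with hL
    have hLpos : 0 < L := List.length_pos_iff.mpr hne
    set cnt : X → ℕ := fun x => chains.countP (fun c => decide (x ∈ c)) with hcnt
    set y : ℕ → ℕ := fun s => stmt2Pdp a t (s+1) - stmt2Pdp a t s with hy
    have hcov : ∀ ℓ, a ℓ ≤ ∑ s ∈ Finset.Icc (ℓ - t) ℓ, y s := by
      intro ℓ
      rw [← Finset.Ico_add_one_right_eq_Icc]
      rw [hy]
      rw [stmt2_mono_telescope _ (stmt2Pdp_mono a t) _ _ (by omega)]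
      have h1 := stmt2_le_Pdp a t ℓ
      have h2 : stmt2Pdp a t (ℓ - t) ≤ stmt2Pdp a t (ℓ+1) := stmt2Pdp_mono a t (by omega)
      omega
    have hwin : ∀ s : ℕ,
        ∑ x ∈ C.filter (fun x => ρ x ∈ Finset.Icc s (s+t)), cnt x ≤ L := by
      intro s
      refine stmt2_sum_countP_le _ _ fun c hc => ?_
      rw [Finset.card_le_one]
      intro u hu v hv
      rw [Finset.mem_inter, Finset.mem_filter, Finset.mem_Icc] at hu hv
      obtain ⟨⟨huC, hus⟩, huc⟩ := hu
      obtain ⟨⟨hvC, hvs⟩, hvc⟩ := hv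
      by_contra hne'
      have hchain := (hmaxchain c hc).1
      rcases hchain huc hvc hne' with hle | hle
      · have := hC u huC v hvC hne' hle
        omega
      · have := hC v hvC u huC (Ne.symm hne') hle
        omega
    have key : C.card * L ≤ L * stmt2Pdp a t (N+1) := by
      calc C.card * L = ∑ _x ∈ C, L := by rw [Finset.sum_const, smul_eq_mul]
        _ = ∑ x ∈ C, cnt x * a (ρ x) := by
            refine Finset.sum_congr rfl fun x _ => ?_
            rw [hcnt, ha, hL]
            exact (hregular x).symm
        _ ≤ ∑ x ∈ C, cnt x * (∑ s ∈ Finset.Icc (ρ x - t) (ρ x), y s) := by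
            refine Finset.sum_le_sum fun x _ => ?_
            exact Nat.mul_le_mul_left _ (hcov (ρ x))
        _ = ∑ x ∈ C, ∑ s ∈ Finset.Icc (ρ x - t) (ρ x), cnt x * y s := by
            refine Finset.sum_congr rfl fun x _ => ?_
            rw [Finset.mul_sum]
        _ = ∑ x ∈ C, ∑ s ∈ Finset.range (N+1),
              (if s ∈ Finset.Icc (ρ x - t) (ρ x) then cnt x * y s else 0) := by
            refine Finset.sum_congr rfl fun x _ => ?_
            rw [Finset.sum_ite_mem]
            congr 1
            rw [Finset.inter_eq_right.mpr]
            intro s hs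
            rw [Finset.mem_Icc] at hs
            have := hρle x
            exact Finset.mem_range.mpr (by omega)
        _ = ∑ s ∈ Finset.range (N+1), ∑ x ∈ C,
              (if ρ x ∈ Finset.Icc s (s+t) then cnt x * y s else 0) := by
            rw [Finset.sum_comm]
            refine Finset.sum_congr rfl fun s _ => Finset.sum_congr rfl fun x _ => ?_
            refine if_congr ?_ rfl rfl
            simp only [Finset.mem_Icc]
            omega
        _ = ∑ s ∈ Finset.range (N+1),
              (∑ x ∈ C.filter (fun x => ρ x ∈ Finset.Icc s (s+t)), cnt x) * y s := by
            refine Finset.sum_congr rfl fun s _ => ?_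
            rw [Finset.sum_mul, Finset.sum_filter]
        _ ≤ ∑ s ∈ Finset.range (N+1), L * y s := by
            refine Finset.sum_le_sum fun s _ => ?_
            exact Nat.mul_le_mul_right _ (hwin s)
        _ = L * ∑ s ∈ Finset.range (N+1), y s := by rw [Finset.mul_sum]
        _ = L * stmt2Pdp a t (N+1) := by
            rw [hy, Finset.range_eq_Ico,
              stmt2_mono_telescope _ (stmt2Pdp_mono a t) 0 (N+1) (by omega)]
            simp [stmt2Pdp]
    have hcard : C.card ≤ stmt2Pdp a t (N+1) := by
      rw [mul_comm L _] at key
      exact Nat.le_of_mul_le_mul_right key hLpos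
    exact le_trans hcard hPdpM
end

section
/- For natural numbers n and t, the maximum cardinality of a family C of subsets of {1, …, n} with the property that for all distinct A, B ∈ C, B ⊆ A implies |A| − |B| > t, equals the sum of the binomial coefficients C(n, ℓ) over all ℓ with 0 ≤ ℓ ≤ n and ℓ ≡ ⌊n/2⌋ (mod t+1). -/
open Finset

namespace Katona

variable (d : ℕ)

/-- number of binomial paths with endpoint congruent to `s` mod `2d`. -/
def W (n : ℕ) (s : ℤ) : ℕ :=
  ∑ ℓ ∈ Finset.range (n+1), if (2*(ℓ:ℤ) - n) % (2*d) = s % (2*d) then n.choose ℓ else 0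

lemma W_congr {s s' : ℤ} (h : s % (2*d) = s' % (2*d)) (n : ℕ) : W d n s = W d n s' := by
  unfold W; rw [h]

lemma W_period (n : ℕ) (s : ℤ) : W d n (s + 2*d) = W d n s := by
  refine W_congr d ?_ n
  have := Int.add_mul_emod_self_left (a := s) (b := 2*(d:ℤ)) (c := 1)
  simpa using this

lemma emod_shift_iff (m x y a : ℤ) : ((x + a) % m = (y + a) % m) ↔ (x % m = y % m) := by
  constructor
  · intro h; have := Int.ModEq.sub_right a h; simp at this; exact this
  · intro h; exact Int.ModEq.add_right a h

lemma W_neg (n : ℕ) (s : ℤ) : W d n (-s) = W d n s := by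
  unfold W
  rw [← Finset.sum_range_reflect]
  refine Finset.sum_congr rfl ?_
  intro ℓ hℓ
  have hℓn : ℓ ≤ n := by
    have := Finset.mem_range.mp hℓ; omega
  have h1 : n + 1 - 1 - ℓ = n - ℓ := by omega
  rw [h1]
  have hcast : ((n - ℓ : ℕ) : ℤ) = (n : ℤ) - ℓ := by
    have : (ℓ:ℤ) ≤ n := by exact_mod_cast hℓn
    push_cast [hℓn]; ring
  have hc : (2*((n - ℓ : ℕ) : ℤ) - n) = -(2*(ℓ:ℤ) - n) := by rw [hcast]; ring
  rw [hc, Nat.choose_symm hℓn]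
  have hiff : ((-(2*(ℓ:ℤ) - n)) % (2*d) = (-s) % (2*d)) ↔ ((2*(ℓ:ℤ) - n) % (2*d) = s % (2*d)) := by
    constructor
    · intro h; have := Int.ModEq.neg h; simp at this; exact this
    · intro h; exact Int.ModEq.neg h
  simp only [hiff]

lemma W_succ (n : ℕ) (s : ℤ) : W d (n+1) s = W d n (s-1) + W d n (s+1) := by
  have key0 : ∀ x : ℤ, ((x + 1) % (2*(d:ℤ)) = s % (2*d)) ↔ (x % (2*d) = (s-1) % (2*d)) := by
    intro x
    have := emod_shift_iff (2*(d:ℤ)) x (s-1) 1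
    simpa using this
  have key2 : ∀ x : ℤ, (x % (2*(d:ℤ)) = (s-1) % (2*d)) ↔ ((x + 2) % (2*d) = (s+1) % (2*d)) := by
    intro x
    have h : s + 1 = (s - 1) + 2 := by ring
    rw [h, emod_shift_iff]
  unfold W
  rw [Finset.sum_range_succ']
  have hterm : ∀ i ∈ Finset.range (n+1),
      (if (2*((i+1:ℕ):ℤ) - ((n+1:ℕ):ℤ)) % (2*d) = s % (2*d) then (n+1).choose (i+1) else 0)
      = (if (2*((i:ℕ):ℤ) - n) % (2*d) = (s-1) % (2*d) then n.choose i else 0)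
        + (if (2*((i:ℕ):ℤ) - n) % (2*d) = (s-1) % (2*d) then n.choose (i+1) else 0) := by
    intro i _
    have hc : (2*((i+1:ℕ):ℤ) - ((n+1:ℕ):ℤ)) = (2*(i:ℤ) - n) + 1 := by push_cast; ring
    rw [hc, if_congr (key0 (2*(i:ℤ) - (n:ℤ))) rfl rfl, Nat.choose_succ_succ]
    split_ifs <;> simp
  rw [Finset.sum_congr rfl hterm, Finset.sum_add_distrib]
  have hsecond : (∑ i ∈ Finset.range (n+1),
        (if (2*((i:ℕ):ℤ) - n) % (2*d) = (s-1) % (2*d) then n.choose (i+1) else 0))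
      + (if (2*((0:ℕ):ℤ) - ((n+1:ℕ):ℤ)) % (2*d) = s % (2*d) then (n+1).choose 0 else 0)
      = W d n (s+1) := by
    unfold W
    rw [Finset.sum_range_succ, Finset.sum_range_succ' (fun ℓ => if (2*((ℓ:ℕ):ℤ) - n) % (2*d) = (s+1) % (2*d) then n.choose ℓ else 0) n]
    have h1 : ∀ i ∈ Finset.range n,
        (if (2*((i:ℕ):ℤ) - n) % (2*d) = (s-1) % (2*d) then n.choose (i+1) else 0)
        = (if (2*((i+1:ℕ):ℤ) - n) % (2*d) = (s+1) % (2*d) then n.choose (i+1) else 0) := by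
      intro i _
      have hc : (2*((i+1:ℕ):ℤ) - (n:ℤ)) = (2*(i:ℤ) - n) + 2 := by push_cast; ring
      rw [hc, if_congr (key2 (2*(i:ℤ) - (n:ℤ))) rfl rfl]
    rw [Finset.sum_congr rfl h1]
    have h2 : (if (2*((n:ℕ):ℤ) - n) % (2*d) = (s-1) % (2*d) then n.choose (n+1) else 0) = 0 := by
      simp [Nat.choose_succ_self]
    have h3 : (if (2*((0:ℕ):ℤ) - ((n+1:ℕ):ℤ)) % (2*d) = s % (2*d) then (n+1).choose 0 else 0)
        = (if (2*((0:ℕ):ℤ) - (n:ℤ)) % (2*d) = (s+1) % (2*d) then n.choose 0 else 0) := by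
      have hc : (2*((0:ℕ):ℤ) - (n:ℤ)) = (2*((0:ℕ):ℤ) - ((n+1:ℕ):ℤ)) + 1 := by push_cast; ring
      rw [hc]
      have := emod_shift_iff (2*(d:ℤ)) (2*((0:ℕ):ℤ) - ((n+1:ℕ):ℤ)) s 1
      rw [if_congr this rfl rfl]
      simp
    rw [h2, h3]
    omega
  have hfirst : (∑ i ∈ Finset.range (n+1),
      (if (2*((i:ℕ):ℤ) - n) % (2*d) = (s-1) % (2*d) then n.choose i else 0)) = W d n (s-1) := rfl
  have h4 : (∑ ℓ ∈ Finset.range (n+1),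
      (if (2*((ℓ:ℕ):ℤ) - n) % (2*d) = (s+1) % (2*d) then n.choose ℓ else 0)) = W d n (s+1) := rfl
  omega

lemma W_anti (hd : 0 < d) (n : ℕ) : ∀ s s' : ℕ, s % 2 = n % 2 → s' % 2 = n % 2 →
    s ≤ s' → s' ≤ d → W d n (s') ≤ W d n s := by
  induction n with
  | zero =>
    intro s s' hs hs' hss hsd
    by_cases h0 : s' = 0
    · subst h0
      have : s = 0 := by omega
      subst this; exact le_rfl
    · have hz : W d 0 (s' : ℤ) = 0 := by
        unfold W
        have h1 : ((s':ℕ):ℤ) % (2*(d:ℤ)) = (s' : ℤ) := Int.emod_eq_of_lt (by omega) (by omega)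
        rw [Finset.sum_range_one, if_neg]
        intro hcon
        rw [h1] at hcon
        norm_num at hcon
        omega
      rw [hz]; exact Nat.zero_le _
  | succ n IH =>
    intro s s' hs hs' hss hsd
    rcases eq_or_lt_of_le hss with rfl | hlt
    · exact le_rfl
    have hs2 : s + 2 ≤ s' := by omega
    rw [W_succ, W_succ]
    have t1 : W d n ((s':ℤ) - 1) ≤ W d n ((s:ℤ) - 1) := by
      by_cases h0 : s = 0
      · subst h0
        have e1 : ((0:ℕ):ℤ) - 1 = -(((1:ℕ)):ℤ) := by norm_num
        have e2 : ((s':ℤ) - 1) = ((s' - 1 : ℕ) : ℤ) := by omega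
        rw [e1, W_neg, e2]
        exact IH 1 (s'-1) (by omega) (by omega) (by omega) (by omega)
      · have e1 : ((s:ℤ) - 1) = ((s-1:ℕ):ℤ) := by omega
        have e2 : ((s':ℤ) - 1) = ((s'-1:ℕ):ℤ) := by omega
        rw [e1, e2]
        exact IH (s-1) (s'-1) (by omega) (by omega) (by omega) (by omega)
    have t2 : W d n ((s':ℤ) + 1) ≤ W d n ((s:ℤ) + 1) := by
      have e1 : ((s:ℤ) + 1) = ((s+1:ℕ):ℤ) := by push_cast; ring
      by_cases hd' : s' = d
      · rw [hd']
        have h1 : W d n (((d:ℕ):ℤ) + 1) = W d n (((d:ℕ):ℤ) + 1 - 2*d) := by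
          have := W_period d n (((d:ℕ):ℤ) + 1 - 2*d)
          rw [show ((d:ℕ):ℤ) + 1 - 2*(d:ℤ) + 2*(d:ℤ) = ((d:ℕ):ℤ) + 1 by ring] at this
          omega
        have h2 : ((d:ℕ):ℤ) + 1 - 2*(d:ℤ) = -(((d - 1:ℕ)):ℤ) := by omega
        rw [h1, h2, W_neg, e1]
        exact IH (s+1) (d-1) (by omega) (by omega) (by omega) (by omega)
      · have e2 : ((s':ℤ) + 1) = ((s'+1:ℕ):ℤ) := by push_cast; ring
        rw [e1, e2]
        exact IH (s+1) (s'+1) (by omega) (by omega) (by omega) (by omega)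
    omega

lemma classSum_eq_W (n c : ℕ) :
    (∑ ℓ ∈ Finset.range (n+1), if ℓ % d = c % d then n.choose ℓ else 0)
      = W d n (2*(c:ℤ) - n) := by
  unfold W
  refine Finset.sum_congr rfl (fun ℓ _ => ?_)
  have h : (ℓ % d = c % d) ↔ ((2*(ℓ:ℤ) - n) % (2*(d:ℤ)) = (2*(c:ℤ) - n) % (2*(d:ℤ))) := by
    rw [show (ℓ % d = c % d) ↔ Nat.ModEq d ℓ c from Iff.rfl, Nat.modEq_iff_dvd]
    rw [show ((2*(ℓ:ℤ) - n) % (2*(d:ℤ)) = (2*(c:ℤ) - n) % (2*(d:ℤ)))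
        ↔ Int.ModEq (2*(d:ℤ)) (2*(ℓ:ℤ)-n) (2*(c:ℤ)-n) from Iff.rfl, Int.modEq_iff_dvd]
    rw [show (2*(c:ℤ) - n) - (2*(ℓ:ℤ) - n) = 2*((c:ℤ) - ℓ) by ring]
    exact (mul_dvd_mul_iff_left (by norm_num : (2:ℤ) ≠ 0)).symm
  rw [if_congr h rfl rfl]

lemma classSum_le_mid (n : ℕ) (hd : 0 < d) (c : ℕ) :
    (∑ ℓ ∈ Finset.range (n+1), if ℓ % d = c % d then n.choose ℓ else 0)
    ≤ (∑ ℓ ∈ Finset.range (n+1), if ℓ % d = (n/2) % d then n.choose ℓ else 0) := by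
  rw [classSum_eq_W d n c, classSum_eq_W d n (n/2)]
  have hmid : (2*((n/2 : ℕ):ℤ) - n) = -(((n % 2 : ℕ)) : ℤ) := by omega
  rw [hmid, W_neg]
  set r := (2*(c:ℤ) - n) % (2*(d:ℤ)) with hr
  have h2d : (0:ℤ) < 2*(d:ℤ) := by positivity
  have hr0 : 0 ≤ r := Int.emod_nonneg _ (by omega)
  have hrlt : r < 2*d := Int.emod_lt_of_pos _ h2d
  have hW : W d n (2*(c:ℤ) - n) = W d n r := by
    refine W_congr d ?_ n
    rw [hr, Int.emod_emod_of_dvd _ dvd_rfl]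
  rw [hW]
  have hpar : ∃ e : ℤ, r = 2*(c:ℤ) - n - 2*e := by
    refine ⟨(d:ℤ) * ((2*(c:ℤ) - n) / (2*(d:ℤ))), ?_⟩
    rw [hr, Int.emod_def]
    ring
  obtain ⟨e, he⟩ := hpar
  by_cases hcase : r ≤ d
  · have hcast : ((r.toNat : ℕ) : ℤ) = r := Int.toNat_of_nonneg hr0
    have : W d n r = W d n ((r.toNat : ℕ) : ℤ) := by rw [hcast]
    rw [this]
    exact W_anti d hd n (n % 2) r.toNat (by omega) (by omega) (by omega) (by omega)
  · have h1 : W d n r = W d n (r - 2*(d:ℤ)) := by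
      have := W_period d n (r - 2*(d:ℤ))
      rw [show r - 2*(d:ℤ) + 2*(d:ℤ) = r by ring] at this
      omega
    have h2 : r - 2*(d:ℤ) = -(((2*d - r.toNat : ℕ)) : ℤ) := by push_cast; omega
    rw [h1, h2, W_neg]
    exact W_anti d hd n (n % 2) (2*d - r.toNat) (by omega) (by omega) (by omega) (by omega)

lemma choose_le_succ_of_lt_half (n x : ℕ) (h : 2*x < n) : n.choose x ≤ n.choose (x+1) := by
  rcases Nat.lt_or_ge (2*x+1) n with h2 | h2
  · exact Nat.choose_le_succ_of_lt_half_left (by omega)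
  · have hn : n = 2*x+1 := by omega
    subst hn
    have e : (2*x+1) - (x+1) = x := by omega
    have e2 : (2*x+1).choose ((2*x+1) - (x+1)) = (2*x+1).choose (x+1) := Nat.choose_symm (by omega)
    rw [e] at e2
    exact e2.le

lemma choose_pred_ge_of_half_le (n x : ℕ) (h : n ≤ 2*x) : n.choose (x+1) ≤ n.choose x := by
  by_cases hx : x+1 ≤ n
  · have e1 : n.choose (x+1) = n.choose (n - (x+1)) := (Nat.choose_symm hx).symm
    have e2 : n.choose x = n.choose (n - x) := (Nat.choose_symm (by omega)).symm
    rw [e1, e2]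
    have e3 : n - x = (n - (x+1)) + 1 := by omega
    rw [e3]
    exact choose_le_succ_of_lt_half n (n-(x+1)) (by omega)
  · have : n.choose (x+1) = 0 := Nat.choose_eq_zero_of_lt (by omega)
    rw [this]; exact Nat.zero_le _

lemma class_bound (n : ℕ) (hd : 0 < d) (S : Finset ℕ) (c : ℕ)
    (hc : ∀ a ∈ S, a % d = c % d) :
    (∑ ℓ ∈ S, n.choose ℓ) ≤ ∑ ℓ ∈ Finset.range (n+1), if ℓ % d = (n/2) % d then n.choose ℓ else 0 := by
  have h1 : (∑ ℓ ∈ S, n.choose ℓ) = ∑ ℓ ∈ S.filter (· ≤ n), n.choose ℓ := by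
    symm
    apply Finset.sum_subset (Finset.filter_subset _ _)
    intro x hx hnx
    have hxn : ¬ x ≤ n := fun hc2 => hnx (Finset.mem_filter.mpr ⟨hx, hc2⟩)
    exact Nat.choose_eq_zero_of_lt (by omega)
  rw [h1]
  calc ∑ ℓ ∈ S.filter (· ≤ n), n.choose ℓ
      ≤ ∑ ℓ ∈ (Finset.range (n+1)).filter (fun ℓ => ℓ % d = c % d), n.choose ℓ := by
        apply Finset.sum_le_sum_of_subset
        intro x hx
        obtain ⟨hxS, hxn⟩ := Finset.mem_filter.mp hx
        exact Finset.mem_filter.mpr ⟨Finset.mem_range.mpr (by omega), hc x hxS⟩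
    _ = ∑ ℓ ∈ Finset.range (n+1), if ℓ % d = c % d then n.choose ℓ else 0 :=
        Finset.sum_filter _ _
    _ ≤ _ := classSum_le_mid d n hd c

lemma spaced_sum_le (n : ℕ) (hd : 0 < d) :
    ∀ μ : ℕ, ∀ S : Finset ℕ, (∀ a ∈ S, ∀ b ∈ S, a < b → a + d ≤ b) →
      (∀ a ∈ S, ∀ b ∈ S, b ≤ a + μ) →
      (∑ ℓ ∈ S, n.choose ℓ) ≤ ∑ ℓ ∈ Finset.range (n+1), if ℓ % d = (n/2) % d then n.choose ℓ else 0 := by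
  intro μ
  induction μ with
  | zero =>
    intro S hsp hdiam
    rcases S.eq_empty_or_nonempty with rfl | ⟨c, hc⟩
    · simp
    · apply class_bound d n hd S c
      intro a ha
      have h1 := hdiam a ha c hc
      have h2 := hdiam c hc a ha
      have : a = c := by omega
      rw [this]
  | succ μ' IH =>
    intro S hsp hdiam
    by_cases hcl : ∀ a ∈ S, ∀ b ∈ S, a % d = b % d
    · rcases S.eq_empty_or_nonempty with rfl | ⟨c, hc⟩
      · simp
      · exact class_bound d n hd S c (fun a ha => hcl a ha c hc)
    · push_neg at hcl
      obtain ⟨x, hx, y, hy, hxy⟩ := hcl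
      have hSne : S.Nonempty := ⟨x, hx⟩
      set m0 := S.min' hSne with hm0
      have hm0S : m0 ∈ S := S.min'_mem hSne
      set T := S.filter (fun s => ¬ (s % d = m0 % d)) with hT
      have hTne : T.Nonempty := by
        by_cases hxm : x % d = m0 % d
        · exact ⟨y, Finset.mem_filter.mpr ⟨hy, by rw [← hxm]; omega⟩⟩
        · exact ⟨x, Finset.mem_filter.mpr ⟨hx, hxm⟩⟩
      set b0 := T.min' hTne with hb0
      have hb0T : b0 ∈ T := T.min'_mem hTne
      have hb0S : b0 ∈ S := (Finset.mem_filter.mp hb0T).1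
      have hb0r : ¬ (b0 % d = m0 % d) := by
        have := (Finset.mem_filter.mp hb0T).2
        simpa using this
      set L := S.filter (fun s => s < b0) with hLdef
      set U := S.filter (fun s => ¬ s < b0) with hUdef
      have hLres : ∀ ℓ ∈ L, ℓ % d = m0 % d := by
        intro ℓ hℓ
        obtain ⟨hℓS, hℓlt⟩ := Finset.mem_filter.mp hℓ
        by_contra hres
        have : b0 ≤ ℓ := T.min'_le ℓ (Finset.mem_filter.mpr ⟨hℓS, by simpa using hres⟩)
        omega
      have hm0L : m0 ∈ L := by
        refine Finset.mem_filter.mpr ⟨hm0S, ?_⟩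
        have h1 : m0 ≤ b0 := S.min'_le b0 hb0S
        have h2 : m0 ≠ b0 := by intro h; exact hb0r (by rw [h])
        omega
      have hLne : L.Nonempty := ⟨m0, hm0L⟩
      set a0 := L.max' hLne with ha0
      have ha0L : a0 ∈ L := L.max'_mem hLne
      have ha0S : a0 ∈ S := (Finset.mem_filter.mp ha0L).1
      have ha0lt : a0 < b0 := by
        have := (Finset.mem_filter.mp ha0L).2
        simpa using this
      have hgap : a0 + d + 1 ≤ b0 := by
        have h1 : a0 + d ≤ b0 := hsp a0 ha0S b0 hb0S ha0lt
        have h2 : a0 % d = m0 % d := hLres a0 ha0L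
        have h3 : b0 ≠ a0 + d := by
          intro h
          exact hb0r (by rw [h, Nat.add_mod_right, h2])
        omega
      have hLmax : ∀ ℓ ∈ L, ℓ ≤ a0 := fun ℓ h => L.le_max' ℓ h
      have hUmin : ∀ u ∈ U, b0 ≤ u := by
        intro u hu
        have := (Finset.mem_filter.mp hu).2
        simp only [not_lt] at this
        exact this
      have hUS : ∀ u ∈ U, u ∈ S := fun u hu => (Finset.mem_filter.mp hu).1
      have hLS : ∀ ℓ ∈ L, ℓ ∈ S := fun ℓ h => (Finset.mem_filter.mp h).1
      have hsplit : (∑ ℓ ∈ S, n.choose ℓ) = (∑ ℓ ∈ L, n.choose ℓ) + (∑ ℓ ∈ U, n.choose ℓ) :=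
        (Finset.sum_filter_add_sum_filter_not S _ _).symm
      have hdiamS := hdiam
      by_cases hmono : ∀ ℓ ∈ L, n.choose ℓ ≤ n.choose (ℓ+1)
      · -- shift L up by one
        have hdisj : Disjoint (L.image (· + 1)) U := by
          rw [Finset.disjoint_left]
          intro z hzi hzu
          obtain ⟨ℓ, hℓL, rfl⟩ := Finset.mem_image.mp hzi
          have := hLmax ℓ hℓL
          have := hUmin _ hzu
          omega
        set S' := (L.image (· + 1)) ∪ U with hS'
        have hmem : ∀ z ∈ S', (∃ ℓ, ℓ ∈ L ∧ z = ℓ + 1) ∨ z ∈ U := by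
          intro z hz
          rcases Finset.mem_union.mp hz with h | h
          · obtain ⟨ℓ, hℓ, rfl⟩ := Finset.mem_image.mp h; exact Or.inl ⟨ℓ, hℓ, rfl⟩
          · exact Or.inr h
        have hsp' : ∀ a ∈ S', ∀ b ∈ S', a < b → a + d ≤ b := by
          intro a ha b hb hab
          rcases hmem a ha with ⟨ℓ1, hℓ1, rfl⟩ | haU <;>
            rcases hmem b hb with ⟨ℓ2, hℓ2, rfl⟩ | hbU
          · have := hsp ℓ1 (hLS _ hℓ1) ℓ2 (hLS _ hℓ2) (by omega)
            omega
          · have := hLmax ℓ1 hℓ1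
            have := hUmin b hbU
            omega
          · have := hLmax ℓ2 hℓ2
            have := hUmin a haU
            omega
          · exact hsp a (hUS _ haU) b (hUS _ hbU) hab
        have hdiam' : ∀ a ∈ S', ∀ b ∈ S', b ≤ a + μ' := by
          intro a ha b hb
          rcases hmem a ha with ⟨ℓ1, hℓ1, rfl⟩ | haU <;>
            rcases hmem b hb with ⟨ℓ2, hℓ2, rfl⟩ | hbU
          · have h1 := hdiam ℓ1 (hLS _ hℓ1) b0 hb0S
            have h2 := hLmax ℓ2 hℓ2
            omega
          · have := hdiam ℓ1 (hLS _ hℓ1) b (hUS _ hbU)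
            omega
          · have h1 := hLmax ℓ2 hℓ2
            have h2 := hUmin a haU
            omega
          · have h1 := hdiam a0 ha0S b (hUS _ hbU)
            have h2 := hUmin a haU
            omega
        have hsum : (∑ ℓ ∈ S, n.choose ℓ) ≤ ∑ ℓ ∈ S', n.choose ℓ := by
          rw [hsplit, hS', Finset.sum_union hdisj,
            Finset.sum_image (by intro a _ b _ h; have h' : a + 1 = b + 1 := h; omega)]
          have := Finset.sum_le_sum hmono
          omega
        exact le_trans hsum (IH S' hsp' hdiam')
      · -- shift U down by one
        push_neg at hmono
        obtain ⟨ℓ0, hℓ0L, hℓ0⟩ := hmono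
        have hℓ0n : n ≤ 2*ℓ0 := by
          by_contra hcon
          exact absurd (choose_le_succ_of_lt_half n ℓ0 (by omega)) (by omega)
        have hℓ0a : ℓ0 ≤ a0 := hLmax ℓ0 hℓ0L
        have hUdec : ∀ u ∈ U, n.choose u ≤ n.choose (u - 1) := by
          intro u hu
          have hub := hUmin u hu
          have h1 : u - 1 + 1 = u := by omega
          have := choose_pred_ge_of_half_le n (u-1) (by omega)
          rw [h1] at this
          exact this
        have hdisj : Disjoint L (U.image (· - 1)) := by
          rw [Finset.disjoint_left]
          intro z hzL hzi
          obtain ⟨u, huU, rfl⟩ := Finset.mem_image.mp hzi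
          have := hLmax _ hzL
          have := hUmin _ huU
          omega
        set S' := L ∪ (U.image (· - 1)) with hS'
        have hmem : ∀ z ∈ S', z ∈ L ∨ (∃ u, u ∈ U ∧ z = u - 1) := by
          intro z hz
          rcases Finset.mem_union.mp hz with h | h
          · exact Or.inl h
          · obtain ⟨u, hu, rfl⟩ := Finset.mem_image.mp h; exact Or.inr ⟨u, hu, rfl⟩
        have hsp' : ∀ a ∈ S', ∀ b ∈ S', a < b → a + d ≤ b := by
          intro a ha b hb hab
          rcases hmem a ha with haL | ⟨u1, hu1, rfl⟩ <;>
            rcases hmem b hb with hbL | ⟨u2, hu2, rfl⟩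
          · exact hsp a (hLS _ haL) b (hLS _ hbL) hab
          · have := hLmax a haL
            have := hUmin u2 hu2
            omega
          · have := hLmax b hbL
            have := hUmin u1 hu1
            omega
          · have h1 := hUmin u1 hu1
            have h2 := hUmin u2 hu2
            have := hsp u1 (hUS _ hu1) u2 (hUS _ hu2) (by omega)
            omega
        have hdiam' : ∀ a ∈ S', ∀ b ∈ S', b ≤ a + μ' := by
          intro a ha b hb
          rcases hmem a ha with haL | ⟨u1, hu1, rfl⟩ <;>
            rcases hmem b hb with hbL | ⟨u2, hu2, rfl⟩
          · have h1 := hdiam a (hLS _ haL) b0 hb0S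
            have h2 := hLmax b hbL
            omega
          · have h1 := hdiam a (hLS _ haL) u2 (hUS _ hu2)
            omega
          · have h1 := hLmax b hbL
            have h2 := hUmin u1 hu1
            omega
          · have h1 := hdiam a0 ha0S u2 (hUS _ hu2)
            have h2 := hUmin u1 hu1
            omega
        have hinj : ∀ p ∈ U, ∀ q ∈ U, p - 1 = q - 1 → p = q := by
          intro p hp q hq h
          have := hUmin p hp
          have := hUmin q hq
          omega
        have hsum : (∑ ℓ ∈ S, n.choose ℓ) ≤ ∑ ℓ ∈ S', n.choose ℓ := by
          rw [hsplit, hS', Finset.sum_union hdisj, Finset.sum_image hinj]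
          have := Finset.sum_le_sum hUdec
          omega
        exact le_trans hsum (IH S' hsp' hdiam')

/-- the first `k` positions under a permutation -/
def pfx (n : ℕ) (σ : Equiv.Perm (Fin n)) (k : ℕ) : Finset (Fin n) :=
  (Finset.univ.filter (fun j : Fin n => (j:ℕ) < k)).image σ

lemma card_lt_filter (n k : ℕ) (hk : k ≤ n) :
    (Finset.univ.filter (fun j : Fin n => (j:ℕ) < k)).card = k := by
  have he : (Finset.univ.filter (fun j : Fin n => (j:ℕ) < k))
      = (Finset.range k).attachFin (fun m hm => by
          have := Finset.mem_range.mp hm; omega) := by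
    ext j
    simp [Finset.mem_attachFin, Finset.mem_range]
  rw [he, Finset.card_attachFin, Finset.card_range]

lemma card_pfx (n : ℕ) (σ : Equiv.Perm (Fin n)) (k : ℕ) (hk : k ≤ n) :
    (pfx n σ k).card = k := by
  unfold pfx
  rw [Finset.card_image_of_injective _ σ.injective, card_lt_filter n k hk]

lemma pfx_mono (n : ℕ) (σ : Equiv.Perm (Fin n)) {k k' : ℕ} (h : k ≤ k') :
    pfx n σ k ⊆ pfx n σ k' := by
  apply Finset.image_subset_image
  intro j hj
  simp only [Finset.mem_filter, Finset.mem_univ, true_and] at *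
  omega

lemma pfx_mul (n : ℕ) (τ σ : Equiv.Perm (Fin n)) (k : ℕ) :
    pfx n (τ * σ) k = (pfx n σ k).image τ := by
  unfold pfx
  rw [Finset.image_image]
  rfl

/-- permutations whose prefix of length `A.card` is exactly `A` -/
def fib (n : ℕ) (A : Finset (Fin n)) : Finset (Equiv.Perm (Fin n)) :=
  Finset.univ.filter (fun σ => pfx n σ A.card = A)

lemma fib_card_le (n : ℕ) (A B : Finset (Fin n)) (τ : Equiv.Perm (Fin n))
    (hτ : A.image τ = B) (h : A.card = B.card) : (fib n A).card ≤ (fib n B).card := by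
  apply Finset.card_le_card_of_injOn (fun σ => τ * σ)
  · intro σ hσ
    have hσ' := (Finset.mem_filter.mp hσ).2
    refine Finset.mem_filter.mpr ⟨Finset.mem_univ _, ?_⟩
    rw [← h, pfx_mul, hσ', hτ]
  · intro σ1 _ σ2 _ hh
    exact mul_left_cancel hh

lemma fib_card_eq (n : ℕ) (A B : Finset (Fin n)) (h : A.card = B.card) :
    (fib n A).card = (fib n B).card := by
  classical
  obtain ⟨τ, hτ⟩ : ∃ τ : Equiv.Perm (Fin n), A.image τ = B := by
    have hcard : Fintype.card {x // x ∈ A} = Fintype.card {x // x ∈ B} := by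
      rw [Fintype.card_coe, Fintype.card_coe, h]
    have e : {x // x ∈ A} ≃ {x // x ∈ B} := Fintype.equivOfCardEq hcard
    refine ⟨Equiv.extendSubtype e, ?_⟩
    apply Finset.eq_of_subset_of_card_le
    · intro b hb
      obtain ⟨a, ha, rfl⟩ := Finset.mem_image.mp hb
      exact Equiv.extendSubtype_mem e a ha
    · rw [Finset.card_image_of_injective _ (Equiv.extendSubtype e).injective, h]
  have h1 := fib_card_le n A B τ hτ h
  have h2 : (fib n B).card ≤ (fib n A).card := by
    refine fib_card_le n B A τ⁻¹ ?_ h.symm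
    rw [← hτ, Finset.image_image]
    have : (⇑τ⁻¹ ∘ ⇑τ) = id := by
      funext x; simp
    rw [this, Finset.image_id]
  omega

lemma sum_fib (n k : ℕ) (hk : k ≤ n) :
    ∑ B ∈ Finset.powersetCard k (Finset.univ : Finset (Fin n)), (fib n B).card
      = n.factorial := by
  classical
  have h1 : ∀ B ∈ Finset.powersetCard k (Finset.univ : Finset (Fin n)),
      (fib n B).card = ∑ σ : Equiv.Perm (Fin n), if pfx n σ k = B then 1 else 0 := by
    intro B hB
    have hBk : B.card = k := (Finset.mem_powersetCard.mp hB).2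
    unfold fib
    rw [Finset.card_filter, hBk]
  rw [Finset.sum_congr rfl h1, Finset.sum_comm]
  have h2 : ∀ σ : Equiv.Perm (Fin n),
      (∑ B ∈ Finset.powersetCard k (Finset.univ : Finset (Fin n)),
        if pfx n σ k = B then 1 else 0) = 1 := by
    intro σ
    rw [Finset.sum_ite_eq]
    rw [if_pos]
    exact Finset.mem_powersetCard.mpr ⟨Finset.subset_univ _, card_pfx n σ k hk⟩
  rw [Finset.sum_congr rfl (fun σ _ => h2 σ), Finset.sum_const, smul_eq_mul, mul_one,
    Finset.card_univ, Fintype.card_perm, Fintype.card_fin]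

lemma choose_mul_fib (n : ℕ) (A : Finset (Fin n)) :
    n.choose A.card * (fib n A).card = n.factorial := by
  classical
  have hk : A.card ≤ n := by
    have := Finset.card_le_univ A
    simpa using this
  have h1 : ∀ B ∈ Finset.powersetCard A.card (Finset.univ : Finset (Fin n)),
      (fib n B).card = (fib n A).card := by
    intro B hB
    exact (fib_card_eq n A B ((Finset.mem_powersetCard.mp hB).2.symm)).symm
  have h2 := sum_fib n A.card hk
  rw [Finset.sum_congr rfl h1, Finset.sum_const, smul_eq_mul,
    Finset.card_powersetCard, Finset.card_univ, Fintype.card_fin] at h2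
  exact h2

lemma upper_bound (n t : ℕ) (F : Finset (Finset (Fin n)))
    (hF : ∀ A ∈ F, ∀ B ∈ F, A ≠ B → B ⊆ A → A.card - B.card > t) :
    F.card ≤ ∑ ℓ ∈ Finset.range (n+1),
      if ℓ % (t+1) = (n/2) % (t+1) then n.choose ℓ else 0 := by
  classical
  set M := ∑ ℓ ∈ Finset.range (n+1),
      if ℓ % (t+1) = (n/2) % (t+1) then n.choose ℓ else 0 with hM
  -- per permutation bound
  have hper : ∀ σ : Equiv.Perm (Fin n),
      (∑ k ∈ Finset.range (n+1), if pfx n σ k ∈ F then n.choose k else 0) ≤ M := by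
    intro σ
    rw [← Finset.sum_filter]
    apply spaced_sum_le (t+1) n (by omega) n
    · intro a ha b hb hab
      rw [Finset.mem_filter, Finset.mem_range] at ha hb
      have hsub : pfx n σ a ⊆ pfx n σ b := pfx_mono n σ (le_of_lt hab)
      have hca : (pfx n σ a).card = a := card_pfx n σ a (by omega)
      have hcb : (pfx n σ b).card = b := card_pfx n σ b (by omega)
      have hne : pfx n σ b ≠ pfx n σ a := by
        intro h
        rw [h] at hcb
        omega
      have := hF (pfx n σ b) hb.2 (pfx n σ a) ha.2 hne hsub
      omega
    · intro a ha b hb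
      rw [Finset.mem_filter, Finset.mem_range] at ha hb
      omega
  have hglob : (∑ σ : Equiv.Perm (Fin n),
      ∑ k ∈ Finset.range (n+1), if pfx n σ k ∈ F then n.choose k else 0)
      ≤ n.factorial * M := by
    calc (∑ σ : Equiv.Perm (Fin n),
        ∑ k ∈ Finset.range (n+1), if pfx n σ k ∈ F then n.choose k else 0)
        ≤ ∑ _σ : Equiv.Perm (Fin n), M := Finset.sum_le_sum (fun σ _ => hper σ)
      _ = n.factorial * M := by
          rw [Finset.sum_const, smul_eq_mul, Finset.card_univ, Fintype.card_perm,
            Fintype.card_fin]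
  have hLHS : (∑ σ : Equiv.Perm (Fin n),
      ∑ k ∈ Finset.range (n+1), if pfx n σ k ∈ F then n.choose k else 0)
      = F.card * n.factorial := by
    have h1 : ∀ σ : Equiv.Perm (Fin n), ∀ k ∈ Finset.range (n+1),
        (if pfx n σ k ∈ F then n.choose k else 0)
        = ∑ A ∈ F, if pfx n σ k = A then n.choose k else 0 := by
      intro σ k _
      exact (Finset.sum_ite_eq F (pfx n σ k) (fun _ => n.choose k)).symm
    calc (∑ σ : Equiv.Perm (Fin n),
        ∑ k ∈ Finset.range (n+1), if pfx n σ k ∈ F then n.choose k else 0)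
        = ∑ σ : Equiv.Perm (Fin n), ∑ k ∈ Finset.range (n+1),
            ∑ A ∈ F, if pfx n σ k = A then n.choose k else 0 := by
          refine Finset.sum_congr rfl (fun σ _ => Finset.sum_congr rfl (h1 σ))
      _ = ∑ A ∈ F, ∑ σ : Equiv.Perm (Fin n), ∑ k ∈ Finset.range (n+1),
            if pfx n σ k = A then n.choose k else 0 := by
          have e1 : ∀ σ : Equiv.Perm (Fin n),
              (∑ k ∈ Finset.range (n+1), ∑ A ∈ F, if pfx n σ k = A then n.choose k else 0)
              = ∑ A ∈ F, ∑ k ∈ Finset.range (n+1), if pfx n σ k = A then n.choose k else 0 :=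
            fun σ => Finset.sum_comm
          rw [Finset.sum_congr rfl (fun σ _ => e1 σ)]
          exact Finset.sum_comm
      _ = ∑ A ∈ F, ∑ σ : Equiv.Perm (Fin n),
            (if pfx n σ A.card = A then n.choose A.card else 0) := by
          refine Finset.sum_congr rfl (fun A hA => Finset.sum_congr rfl (fun σ _ => ?_))
          have hcard : A.card ≤ n := by
            have := Finset.card_le_univ A
            simpa using this
          apply Finset.sum_eq_single A.card
          · intro k hk hkne
            rw [if_neg]
            intro hcon
            have : (pfx n σ k).card = k := card_pfx n σ k (by
              have := Finset.mem_range.mp hk; omega)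
            rw [hcon] at this
            omega
          · intro hnot
            exact absurd (Finset.mem_range.mpr (by omega)) hnot
      _ = ∑ A ∈ F, (fib n A).card * n.choose A.card := by
          refine Finset.sum_congr rfl (fun A hA => ?_)
          rw [← Finset.sum_filter, Finset.sum_const, smul_eq_mul]
          rfl
      _ = ∑ A ∈ F, n.factorial := by
          refine Finset.sum_congr rfl (fun A hA => ?_)
          rw [mul_comm]
          exact choose_mul_fib n A
      _ = F.card * n.factorial := by
          rw [Finset.sum_const, smul_eq_mul]
  rw [hLHS] at hglob
  have hfac : 0 < n.factorial := Nat.factorial_pos n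
  calc F.card = F.card * n.factorial / n.factorial := by
        rw [Nat.mul_div_cancel _ hfac]
    _ ≤ n.factorial * M / n.factorial := Nat.div_le_div_right hglob
    _ = M := by rw [mul_comm, Nat.mul_div_cancel _ hfac]

lemma mem_part (n t : ℕ) :
    ∃ C : Finset (Finset (Fin n)),
      (∀ A ∈ C, ∀ B ∈ C, A ≠ B → B ⊆ A → A.card - B.card > t) ∧
      C.card = ∑ ℓ ∈ Finset.range (n+1),
        if ℓ % (t+1) = (n/2) % (t+1) then n.choose ℓ else 0 := by
  classical
  refine ⟨Finset.univ.filter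
      (fun A : Finset (Fin n) => A.card % (t+1) = (n/2) % (t+1)), ?_, ?_⟩
  · intro A hA B hB hne hsub
    have hA' := (Finset.mem_filter.mp hA).2
    have hB' := (Finset.mem_filter.mp hB).2
    have hlt : B.card < A.card :=
      Finset.card_lt_card (Finset.ssubset_iff_subset_ne.mpr ⟨hsub, fun h => hne h.symm⟩)
    have hmod : A.card % (t+1) = B.card % (t+1) := by rw [hA', hB']
    have hdvd : (t+1) ∣ (A.card - B.card) := by
      have := (Nat.modEq_iff_dvd' (le_of_lt hlt)).mp (Nat.ModEq.symm hmod)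
      exact this
    have := Nat.le_of_dvd (by omega) hdvd
    omega
  · rw [Finset.card_eq_sum_card_fiberwise
      (f := fun A : Finset (Fin n) => A.card) (t := Finset.range (n+1))
      (fun A _ => Finset.mem_range.mpr (by
        show A.card < n + 1
        have := Finset.card_le_univ A
        simp at this
        omega))]
    refine Finset.sum_congr rfl (fun ℓ hℓ => ?_)
    by_cases hcond : ℓ % (t+1) = (n/2) % (t+1)
    · rw [if_pos hcond]
      have he : (Finset.univ.filter
            (fun A : Finset (Fin n) => A.card % (t+1) = (n/2) % (t+1))).filter
            (fun A => A.card = ℓ)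
          = Finset.powersetCard ℓ (Finset.univ : Finset (Fin n)) := by
        ext A
        simp only [Finset.mem_filter, Finset.mem_univ, true_and,
          Finset.mem_powersetCard_univ]
        constructor
        · rintro ⟨_, h2⟩; exact h2
        · intro h; exact ⟨by rw [h]; exact hcond, h⟩
      rw [he, Finset.card_powersetCard, Finset.card_univ, Fintype.card_fin]
    · rw [if_neg hcond]
      have he : (Finset.univ.filter
            (fun A : Finset (Fin n) => A.card % (t+1) = (n/2) % (t+1))).filter
            (fun A => A.card = ℓ) = ∅ := by
        ext A
        simp only [Finset.mem_filter, Finset.mem_univ, true_and,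
          Finset.notMem_empty, iff_false]
        rintro ⟨h1, h2⟩
        rw [h2] at h1
        exact hcond h1
      rw [he, Finset.card_empty]

end Katona

/-- Katona's theorem: the maximum cardinality of a family of subsets of `{1,…,n}`
detecting up to `t` deletions (distinct `B ⊆ A` in the family have `|A| - |B| > t`)
is the sum of `C(n,ℓ)` over `0 ≤ ℓ ≤ n` with `ℓ ≡ ⌊n/2⌋ (mod t+1)`. -/
theorem stmt4 (n t : ℕ) :
    IsGreatest {k | ∃ C : Finset (Finset (Fin n)),
        (∀ A ∈ C, ∀ B ∈ C, A ≠ B → B ⊆ A → A.card - B.card > t) ∧ C.card = k}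
      (∑ ℓ ∈ Finset.range (n + 1),
        if ℓ % (t + 1) = (n / 2) % (t + 1) then n.choose ℓ else 0) := by
  constructor
  · obtain ⟨C, h1, h2⟩ := Katona.mem_part n t
    exact ⟨C, h1, h2⟩
  · rintro k ⟨C, hC, rfl⟩
    exact Katona.upper_bound n t C hC
end

section
/- For natural numbers n and t, the maximum cardinality of a family C of subsets of {1, …, n} with the property that for all distinct A, B ∈ C, A ⊆ B implies |B| − |A| > t, equals the sum of the binomial coefficients C(n, ℓ) over all ℓ with 0 ≤ ℓ ≤ n and ℓ ≡ ⌊n/2⌋ (mod t+1). -/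
/-!
Katona's weighted LYM argument. For every `b`, the members of the family whose sizes lie in the
window `[b - t, b]` form an antichain, so by the LYM inequality they contribute at most `1` to
`∑ 1 / C(n, |A|)`. Hence if nonnegative weights `w b` satisfy `C(n, ℓ) ≤ ∑_{i ≤ t} w (ℓ + i)` for
every level `ℓ`, the family has at most `∑ w b` members. Weights whose total is the class sum
`S(⌊n/2⌋) = ∑_{ℓ ≡ ⌊n/2⌋} C(n, ℓ)` come from telescoping the class sums from the bottom below the
middle level and from the top above it; the windows straddling the middle are covered because
`S(r) ≤ S(⌊n/2⌋)` for every `r`. That inequality holds because `S(r)` counts the `±1` walks of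
length `n` on `ℤ/2(t+1)` ending at `2r - n`, and by Pascal's rule this count is symmetric and,
among points of the same parity, decreases with the distance from `0`. The sets whose size is
`≡ ⌊n/2⌋` attain the bound.
-/

open Finset

lemma Nat.choose_succ_le_of_half_le {n r : ℕ} (h : n / 2 ≤ r) :
    n.choose (r + 1) ≤ n.choose r := by
  refine Nat.le_of_mul_le_mul_right ?_ r.succ_pos
  rw [Nat.choose_succ_right_eq]
  exact Nat.mul_le_mul_left _ (by omega)

namespace Katona

theorem card_le_of_monotone_window_cover {α : Type*} [Fintype α] {F : Finset (Finset α)} {t : ℕ}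
    (hF : ∀ A ∈ F, ∀ B ∈ F, A ≠ B → A ⊆ B → B.card - A.card > t)
    {G : ℕ → ℤ} (hG : Monotone G)
    (hcover : ∀ ℓ ≤ Fintype.card α, ((Fintype.card α).choose ℓ : ℤ) ≤ G (ℓ + (t + 1)) - G ℓ) :
    (F.card : ℤ) ≤ G (Fintype.card α + (t + 1)) - G 0 := by
  classical
  set n := Fintype.card α
  set m := t + 1
  have hcard : ∀ A ∈ F, A.card ≤ n := fun A _ => card_le_univ A
  have hwindow : ∀ b, ∑ A ∈ F with A.card ≤ b ∧ b < A.card + m, (n.choose A.card : ℚ)⁻¹ ≤ 1 := by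
    intro b
    apply lubell_yamamoto_meshalkin_inequality_sum_inv_choose
    intro A hA B hB hAB hsub
    rw [mem_coe, mem_filter] at hA hB
    have := hF A hA.1 B hB.1 hAB hsub
    omega
  have hw : ∀ b, (0 : ℚ) ≤ G (b + 1) - G b := fun b => by
    have := hG b.le_succ
    rw [sub_nonneg]
    exact_mod_cast this
  suffices (F.card : ℚ) ≤ G (n + m) - G 0 by exact_mod_cast this
  calc (F.card : ℚ) = ∑ A ∈ F, 1 := by simp
    _ ≤ ∑ A ∈ F, ∑ b ∈ Ico A.card (A.card + m),
          ((G (b + 1) : ℚ) - G b) * (n.choose A.card : ℚ)⁻¹ := by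
        gcongr with A hA
        have hpos : (0 : ℚ) < n.choose A.card := by exact_mod_cast Nat.choose_pos (hcard A hA)
        rw [← sum_mul, sum_Ico_sub (fun b => (G b : ℚ)) (by omega), le_mul_inv_iff₀ hpos, one_mul]
        exact_mod_cast hcover A.card (hcard A hA)
    _ = ∑ b ∈ range (n + m), ∑ A ∈ F with A.card ≤ b ∧ b < A.card + m,
          ((G (b + 1) : ℚ) - G b) * (n.choose A.card : ℚ)⁻¹ := by
        refine sum_comm' fun A b => ?_
        simp only [mem_Ico, mem_filter, mem_range]
        constructor
        · rintro ⟨hA, hb⟩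
          have := hcard A hA
          exact ⟨⟨hA, hb⟩, by omega⟩
        · rintro ⟨⟨hA, hb⟩, -⟩
          exact ⟨hA, hb⟩
    _ ≤ ∑ b ∈ range (n + m), ((G (b + 1) : ℚ) - G b) := by
        gcongr with b
        rw [← mul_sum]
        exact mul_le_of_le_one_right (hw b) (hwindow b)
    _ = G (n + m) - G 0 := sum_range_sub (fun b => (G b : ℚ)) _

/-- Number of `±1` walks of length `N` on `ZMod M` from `0` to `x`: a walk with `ℓ` up-steps
ends at `ℓ - (N - ℓ)`. -/
def walkCount (M N : ℕ) (x : ZMod M) : ℕ :=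
  ∑ ℓ ∈ range (N + 1), if 2 * (ℓ : ZMod M) = x + N then N.choose ℓ else 0

section Walks

variable {M : ℕ}

lemma walkCount_zero (x : ZMod M) : walkCount M 0 x = if x = 0 then 1 else 0 := by
  simp [walkCount, eq_comm]

lemma walkCount_neg (N : ℕ) (x : ZMod M) : walkCount M N (-x) = walkCount M N x := by
  rw [walkCount, ← sum_range_reflect]
  refine sum_congr rfl fun ℓ hℓ => ?_
  have hℓ : ℓ ≤ N := Nat.lt_succ_iff.mp (mem_range.mp hℓ)
  have hcond : 2 * ((N - ℓ : ℕ) : ZMod M) = -x + N ↔ 2 * (ℓ : ZMod M) = x + N := by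
    rw [Nat.cast_sub hℓ]
    constructor <;> intro h <;> linear_combination -h
  rw [Nat.add_sub_cancel, Nat.choose_symm hℓ]
  simp only [hcond]

lemma walkCount_succ (N : ℕ) (x : ZMod M) :
    walkCount M (N + 1) x = walkCount M N (x - 1) + walkCount M N (x + 1) := by
  have hext : walkCount M N (x + 1) =
      ∑ ℓ ∈ range (N + 2), if 2 * (ℓ : ZMod M) = x + 1 + N then N.choose ℓ else 0 := by
    rw [sum_range_succ, Nat.choose_succ_self, ite_self, add_zero, walkCount]
  have hdown : ∀ ℓ : ℕ, 2 * ((ℓ + 1 : ℕ) : ZMod M) = x + (N + 1 : ℕ) ↔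
      2 * (ℓ : ZMod M) = x - 1 + N := fun ℓ => by
    push_cast; constructor <;> intro h <;> linear_combination h
  have hup : ∀ ℓ : ℕ, 2 * ((ℓ : ℕ) : ZMod M) = x + (N + 1 : ℕ) ↔
      2 * (ℓ : ZMod M) = x + 1 + N := fun ℓ => by
    push_cast; constructor <;> intro h <;> linear_combination h
  rw [walkCount, sum_range_succ', hext, sum_range_succ' _ (N + 1)]
  simp only [Nat.choose_succ_succ', ite_add_zero, sum_add_distrib, Nat.choose_zero_right]
  rw [add_assoc]
  congr 1
  · simp only [hdown, walkCount]
  · simp only [hup]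

lemma walkCount_add_two_le {m : ℕ} (N d : ℕ) (hd : d + 2 ≤ m) :
    walkCount (2 * m) N (d + 2) ≤ walkCount (2 * m) N d := by
  induction N generalizing d with
  | zero =>
    have hne : ((d : ZMod (2 * m)) + 2) ≠ 0 := by
      rw [show (d : ZMod (2 * m)) + 2 = (d + 2 : ℕ) by push_cast; rfl, Ne,
        ZMod.natCast_eq_zero_iff]
      exact fun h => absurd (Nat.le_of_dvd (by omega) h) (by omega)
    simp [walkCount_zero, hne]
  | succ N ih =>
    rw [walkCount_succ, walkCount_succ, show (d : ZMod (2 * m)) + 2 - 1 = d + 1 by ring,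
      show (d : ZMod (2 * m)) + 2 + 1 = (d + 1 : ℕ) + 2 by push_cast; ring]
    have hout : walkCount (2 * m) N ((d + 1 : ℕ) + 2) ≤ walkCount (2 * m) N (d + 1) := by
      rcases Nat.lt_or_ge (d + 2) m with h | h
      · exact_mod_cast ih (d + 1) h
      · -- `d + 3` is the reflection of `d + 1` through the antipode `m = d + 2`
        have hm : ((d + 1 : ℕ) : ZMod (2 * m)) + 2 = -((d : ZMod (2 * m)) + 1) := by
          have : ((d + 2 + (d + 2) : ℕ) : ZMod (2 * m)) = 0 := by
            rw [show d + 2 + (d + 2) = 2 * m by omega, ZMod.natCast_self]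
          push_cast at this ⊢
          linear_combination this
        rw [hm, walkCount_neg]
    have hin : walkCount (2 * m) N ((d : ZMod (2 * m)) + 1) ≤
        walkCount (2 * m) N ((d : ZMod (2 * m)) - 1) := by
      rcases d with _ | e
      · simp only [Nat.cast_zero, zero_add, zero_sub, walkCount_neg, le_refl]
      · have := ih e (by omega)
        push_cast
        rwa [add_sub_cancel_right, add_assoc, one_add_one_eq_two]
    omega

lemma walkCount_le_mod_two {m : ℕ} (N d : ℕ) (hd : d ≤ m) :
    walkCount (2 * m) N d ≤ walkCount (2 * m) N (d % 2 : ℕ) := by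
  induction d using Nat.strong_induction_on with
  | _ d ih =>
    rcases Nat.lt_or_ge d 2 with h | h
    · rw [Nat.mod_eq_of_lt h]
    · obtain ⟨e, rfl⟩ : ∃ e, d = e + 2 := ⟨d - 2, by omega⟩
      calc walkCount (2 * m) N ((e + 2 : ℕ) : ZMod (2 * m))
          ≤ walkCount (2 * m) N e := by push_cast; exact walkCount_add_two_le N e hd
        _ ≤ walkCount (2 * m) N ((e % 2 : ℕ)) := ih e (by omega) (by omega)
        _ = walkCount (2 * m) N (((e + 2) % 2 : ℕ)) := by rw [Nat.add_mod_right]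

end Walks

def classSum (n m r : ℕ) : ℕ :=
  ∑ ℓ ∈ range (n + 1), if ℓ % m = r % m then n.choose ℓ else 0

lemma classSum_eq_walkCount (n m r : ℕ) :
    classSum n m r = walkCount (2 * m) n (2 * r - n) := by
  refine sum_congr rfl fun ℓ _ => ?_
  have hcond : ℓ % m = r % m ↔ 2 * (ℓ : ZMod (2 * m)) = 2 * r - n + n := by
    have hcast : 2 * (ℓ : ZMod (2 * m)) = 2 * r - n + n ↔
        ((2 * ℓ : ℕ) : ZMod (2 * m)) = ((2 * r : ℕ) : ZMod (2 * m)) := by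
      push_cast; rw [sub_add_cancel]
    rw [hcast, ZMod.natCast_eq_natCast_iff', Nat.mul_mod_mul_left, Nat.mul_mod_mul_left]
    omega
  simp only [hcond]

lemma classSum_le_middle {m : ℕ} (hm : 0 < m) (n r : ℕ) :
    classSum n m r ≤ classSum n m (n / 2) := by
  have : NeZero (2 * m) := ⟨by omega⟩
  rw [classSum_eq_walkCount, classSum_eq_walkCount]
  set x : ZMod (2 * m) := 2 * r - n
  set d := x.valMinAbs.natAbs
  have hdx := ZMod.natCast_natAbs_valMinAbs x
  have hd : d ≤ m := by simpa using ZMod.natAbs_valMinAbs_le x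
  have hx : walkCount (2 * m) n x = walkCount (2 * m) n d := by
    rw [hdx]; split_ifs
    · rfl
    · rw [walkCount_neg]
  have hpar : d % 2 = n % 2 := by
    have h2 : (2 : ZMod 2) = 0 := rfl
    rw [← ZMod.natCast_eq_natCast_iff']
    split_ifs at hdx <;>
    · have h := congrArg (ZMod.castHom (dvd_mul_right 2 m) (ZMod 2)) hdx
      simp only [map_natCast, map_neg, map_sub, map_mul, map_ofNat, ZMod.neg_eq_self_mod_two,
        x] at h
      rw [h]
      linear_combination (r - n : ZMod 2) * h2
  have hmid : 2 * ((n / 2 : ℕ) : ZMod (2 * m)) - n = -((n % 2 : ℕ) : ZMod (2 * m)) := by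
    have h : ((2 * (n / 2) + n % 2 : ℕ) : ZMod (2 * m)) = n := by rw [Nat.div_add_mod]
    push_cast at h
    linear_combination h
  calc walkCount (2 * m) n x = walkCount (2 * m) n d := hx
    _ ≤ walkCount (2 * m) n (d % 2 : ℕ) := walkCount_le_mod_two n d hd
    _ = walkCount (2 * m) n (2 * ((n / 2 : ℕ) : ZMod (2 * m)) - n) := by
      rw [hmid, walkCount_neg, hpar]

lemma choose_eq_sum_ite (n ℓ : ℕ) (hℓ : ℓ ≤ n) :
    n.choose ℓ = ∑ j ∈ range (n + 1), if j = ℓ then n.choose j else 0 := by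
  rw [sum_ite_eq', if_pos (mem_range.mpr (by omega))]

def lowerClassSum (n m x : ℕ) : ℕ :=
  ∑ ℓ ∈ range (n + 1), if ℓ < x ∧ ℓ % m = x % m then n.choose ℓ else 0

def upperClassSum (n m x : ℕ) : ℕ :=
  ∑ ℓ ∈ range (n + 1), if x ≤ ℓ ∧ ℓ % m = x % m then n.choose ℓ else 0

section ClassSums

variable {n m : ℕ}

lemma lowerClassSum_add_upperClassSum (x : ℕ) :
    lowerClassSum n m x + upperClassSum n m x = classSum n m x := by
  rw [lowerClassSum, upperClassSum, ← sum_add_distrib]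
  refine sum_congr rfl fun ℓ _ => ?_
  split_ifs <;> omega

lemma lowerClassSum_zero : lowerClassSum n m 0 = 0 := by
  simp [lowerClassSum]

lemma upperClassSum_eq_zero {x : ℕ} (hx : n < x) : upperClassSum n m x = 0 :=
  sum_eq_zero fun ℓ hℓ => if_neg fun h => by have := mem_range.mp hℓ; omega

lemma lowerClassSum_add_modulus (hm : 0 < m) {ℓ : ℕ} (hℓ : ℓ ≤ n) :
    lowerClassSum n m (ℓ + m) = lowerClassSum n m ℓ + n.choose ℓ := by
  rw [choose_eq_sum_ite n ℓ hℓ, lowerClassSum, lowerClassSum, ← sum_add_distrib, Nat.add_mod_right]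
  refine sum_congr rfl fun j _ => ?_
  by_cases hj : j = ℓ
  · simp [hj, hm.ne']
  · have : ℓ % m = j % m → ℓ < j → ℓ + m ≤ j := fun h => Nat.ModEq.add_le_of_lt h
    split_ifs <;> omega

lemma upperClassSum_eq_add_modulus (hm : 0 < m) {ℓ : ℕ} (hℓ : ℓ ≤ n) :
    upperClassSum n m ℓ = n.choose ℓ + upperClassSum n m (ℓ + m) := by
  rw [choose_eq_sum_ite n ℓ hℓ, upperClassSum, upperClassSum, ← sum_add_distrib, Nat.add_mod_right]
  refine sum_congr rfl fun j _ => ?_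
  by_cases hj : j = ℓ
  · simp [hj, hm.ne']
  · have : ℓ % m = j % m → ℓ < j → ℓ + m ≤ j := fun h => Nat.ModEq.add_le_of_lt h
    split_ifs <;> omega

lemma mod_succ_eq_mod_succ_iff (j b : ℕ) : (j + 1) % m = (b + 1) % m ↔ j % m = b % m :=
  ⟨Nat.ModEq.add_right_cancel' 1, Nat.ModEq.add_right 1⟩

lemma lowerClassSum_le_succ {b : ℕ} (hb : b < n / 2) :
    lowerClassSum n m b ≤ lowerClassSum n m (b + 1) := by
  calc lowerClassSum n m b
      = ∑ j ∈ range n, if j < b ∧ j % m = b % m then n.choose j else 0 := by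
        rw [lowerClassSum, sum_range_succ, if_neg (by omega), add_zero]
    _ ≤ ∑ j ∈ range n,
          if j + 1 < b + 1 ∧ (j + 1) % m = (b + 1) % m then n.choose (j + 1) else 0 := by
        refine sum_le_sum fun j _ => ?_
        simp only [mod_succ_eq_mod_succ_iff, Nat.add_lt_add_iff_right]
        split_ifs with h
        · exact Nat.choose_le_succ_of_lt_half_left (by omega)
        · rfl
    _ ≤ lowerClassSum n m (b + 1) := by
        rw [lowerClassSum, sum_range_succ']
        exact Nat.le_add_right _ _

lemma upperClassSum_succ_le {b : ℕ} (hb : n / 2 ≤ b) :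
    upperClassSum n m (b + 1) ≤ upperClassSum n m b := by
  calc upperClassSum n m (b + 1)
      = ∑ j ∈ range n,
          if b + 1 ≤ j + 1 ∧ (j + 1) % m = (b + 1) % m then n.choose (j + 1) else 0 := by
        rw [upperClassSum, sum_range_succ', if_neg (by omega), add_zero]
    _ ≤ ∑ j ∈ range n, if b ≤ j ∧ j % m = b % m then n.choose j else 0 := by
        refine sum_le_sum fun j _ => ?_
        simp only [mod_succ_eq_mod_succ_iff, Nat.add_le_add_iff_right]
        split_ifs with h
        · exact Nat.choose_succ_le_of_half_le (by omega)
        · rfl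
    _ ≤ upperClassSum n m b := by
        rw [upperClassSum, sum_range_succ]
        exact Nat.le_add_right _ _

end ClassSums

/-- Partial sums of the weights `w b = G (b + 1) - G b` of the window argument: class sums counted
from the bottom up to the middle level, and from the top above it. -/
def cumulativeWeight (n m x : ℕ) : ℤ :=
  if x ≤ n / 2 then lowerClassSum n m x else classSum n m (n / 2) - upperClassSum n m x

section CumulativeWeight

variable {n m : ℕ}

lemma cumulativeWeight_of_half_le {x : ℕ} (hx : n / 2 ≤ x) :
    cumulativeWeight n m x = classSum n m (n / 2) - upperClassSum n m x := by
  rw [cumulativeWeight]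
  split_ifs with h
  · obtain rfl : x = n / 2 := le_antisymm h hx
    rw [← lowerClassSum_add_upperClassSum]
    push_cast
    ring
  · rfl

lemma monotone_cumulativeWeight : Monotone (cumulativeWeight n m) := by
  refine monotone_nat_of_le_succ fun b => ?_
  rcases Nat.lt_or_ge b (n / 2) with hb | hb
  · rw [cumulativeWeight, cumulativeWeight, if_pos hb.le, if_pos (show b + 1 ≤ n / 2 from hb)]
    exact_mod_cast lowerClassSum_le_succ hb
  · rw [cumulativeWeight_of_half_le hb, cumulativeWeight_of_half_le (by omega)]
    have := upperClassSum_succ_le (m := m) hb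
    omega

lemma choose_le_cumulativeWeight_sub (hm : 0 < m) {ℓ : ℕ} (hℓ : ℓ ≤ n) :
    (n.choose ℓ : ℤ) ≤ cumulativeWeight n m (ℓ + m) - cumulativeWeight n m ℓ := by
  have hL := lowerClassSum_add_modulus hm hℓ
  have hU := upperClassSum_eq_add_modulus hm hℓ
  rcases le_or_gt (ℓ + m) (n / 2) with h | h
  · rw [cumulativeWeight, cumulativeWeight, if_pos h, if_pos (by omega)]
    omega
  rcases le_or_gt (n / 2) ℓ with h' | h'
  · rw [cumulativeWeight_of_half_le h', cumulativeWeight_of_half_le (by omega)]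
    omega
  · have hS := classSum_le_middle hm n ℓ
    have hLU := lowerClassSum_add_upperClassSum (n := n) (m := m) ℓ
    rw [cumulativeWeight_of_half_le h.le, cumulativeWeight, if_pos h'.le]
    omega

lemma cumulativeWeight_sub_zero (hm : 0 < m) :
    cumulativeWeight n m (n + m) - cumulativeWeight n m 0 = classSum n m (n / 2) := by
  rw [cumulativeWeight_of_half_le (by omega), upperClassSum_eq_zero (by omega), cumulativeWeight,
    if_pos (Nat.zero_le _), lowerClassSum_zero]
  simp

end CumulativeWeight

theorem card_le_classSum_middle {n t : ℕ} {F : Finset (Finset (Fin n))}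
    (hF : ∀ A ∈ F, ∀ B ∈ F, A ≠ B → A ⊆ B → B.card - A.card > t) :
    F.card ≤ classSum n (t + 1) (n / 2) := by
  have h := card_le_of_monotone_window_cover hF monotone_cumulativeWeight <| by
    simpa only [Fintype.card_fin] using fun ℓ hℓ => choose_le_cumulativeWeight_sub t.succ_pos hℓ
  rw [Fintype.card_fin, cumulativeWeight_sub_zero t.succ_pos] at h
  exact_mod_cast h

lemma card_filter_card_mod_eq (n m r : ℕ) :
    (univ.filter fun A : Finset (Fin n) => A.card % m = r % m).card = classSum n m r := by
  rw [card_filter, ← powerset_univ,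
    sum_powerset_apply_card (f := fun k => if k % m = r % m then 1 else 0), card_univ,
    Fintype.card_fin]
  simp only [smul_eq_mul, mul_ite, mul_one, mul_zero]
  rfl

lemma lt_card_sub_card_of_ssubset {α : Type*} {A B : Finset α} {t : ℕ} (hAB : A ⊂ B)
    (hmod : A.card % (t + 1) = B.card % (t + 1)) : t < B.card - A.card := by
  have := Nat.ModEq.add_le_of_lt hmod (card_lt_card hAB)
  omega

end Katona

/-- Dual (insertion) form of Katona's theorem: the maximum cardinality of a family of
subsets of `{1,…,n}` detecting up to `t` insertions (distinct `A ⊆ B` in the family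
have `|B| - |A| > t`) is the sum of `C(n,ℓ)` over `0 ≤ ℓ ≤ n` with
`ℓ ≡ ⌊n/2⌋ (mod t+1)`. -/
theorem stmt5 (n t : ℕ) :
    IsGreatest {k | ∃ C : Finset (Finset (Fin n)),
        (∀ A ∈ C, ∀ B ∈ C, A ≠ B → A ⊆ B → B.card - A.card > t) ∧ C.card = k}
      (∑ ℓ ∈ Finset.range (n + 1),
        if ℓ % (t + 1) = (n / 2) % (t + 1) then n.choose ℓ else 0) := by
  refine ⟨⟨univ.filter fun A : Finset (Fin n) => A.card % (t + 1) = (n / 2) % (t + 1),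
    fun A hA B hB hAB hsub => ?_, Katona.card_filter_card_mod_eq n (t + 1) (n / 2)⟩, ?_⟩
  · simp only [mem_filter, mem_univ, true_and] at hA hB
    exact Katona.lt_card_sub_card_of_ssubset (ssubset_of_subset_of_ne hsub hAB) (hA.trans hB.symm)
  · rintro k ⟨C, hC, rfl⟩
    exact Katona.card_le_classSum_middle hC
end

section
/- Let n ≥ 1, t ≥ 0, and 0 ≤ ℓ̲ ≤ ℓ̄ be natural numbers. The maximum cardinality of a set C of vectors μ ∈ ℕ^n with ℓ̲ ≤ Σ_{i=1}^n μ(i) ≤ ℓ̄, having the property that for all distinct μ, ν ∈ C, μ ≤ ν coordinatewise implies Σ_i ν(i) − Σ_i μ(i) > t, equals Σ_{i=0}^{⌊(ℓ̄−ℓ̲)/(t+1)⌋} C(ℓ̄ − i(t+1) + n − 1, n − 1). -/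
open Finset

lemma level_card (n s : ℕ) (hn : 1 ≤ n) :
    ((piAntidiag (univ : Finset (Fin n)) s)).card = (s + n - 1).choose (n - 1) := by
  rw [← map_sym_eq_piAntidiag, card_map, sym_univ, card_univ,
    Sym.card_sym_eq_choose, Fintype.card_fin,
    show n + s - 1 = s + (n-1) by omega, show (s + n - 1) = s + (n-1) by omega,
    Nat.choose_symm_add]

lemma level_mem {n s : ℕ} {f : Fin n → ℕ} :
    f ∈ piAntidiag (univ : Finset (Fin n)) s ↔ ∑ i, f i = s := by
  simp [mem_piAntidiag]

/-- Optimal multiset codes detecting up to `t` deletions: among multiplicity vectors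
`μ ∈ ℕ^n` with `l ≤ Σ μ i ≤ u`, the maximum size of a code such that distinct
coordinatewise-comparable codewords have cardinalities differing by more than `t`
equals `Σ_{i=0}^{⌊(u-l)/(t+1)⌋} C(u - i(t+1) + n - 1, n - 1)`. -/
theorem stmt6 (n t l u : ℕ) (hn : 1 ≤ n) (hlu : l ≤ u) :
    IsGreatest {k | ∃ C : Finset (Fin n → ℕ),
        (∀ μ ∈ C, l ≤ ∑ i, μ i ∧ ∑ i, μ i ≤ u) ∧
        (∀ μ ∈ C, ∀ ν ∈ C, μ ≠ ν → (∀ i, μ i ≤ ν i) →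
          (∑ i, ν i) - (∑ i, μ i) > t) ∧ C.card = k}
      (∑ i ∈ Finset.range ((u - l) / (t + 1) + 1),
        Nat.choose (u - i * (t + 1) + n - 1) (n - 1)) := by
  obtain ⟨m, rfl⟩ : ∃ m, n = m + 1 := ⟨n - 1, by omega⟩
  set N := (u - l) / (t + 1) + 1 with hN
  have hmul : ∀ i, i < N → i * (t + 1) ≤ u - l := by
    intro i hi
    calc i * (t+1) ≤ ((u-l)/(t+1)) * (t+1) :=
          Nat.mul_le_mul_right _ (by omega)
      _ ≤ u - l := Nat.div_mul_le_self _ _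
  set T : Finset (Fin (m+1) → ℕ) :=
    (Finset.range N).biUnion (fun i => piAntidiag univ (u - i * (t+1))) with hT
  have hTcard : T.card = ∑ i ∈ Finset.range N,
      Nat.choose (u - i * (t + 1) + (m+1) - 1) ((m+1) - 1) := by
    rw [hT, card_biUnion]
    · exact Finset.sum_congr rfl fun i _ => level_card (m+1) _ (by omega)
    · intro i hi j hj hij
      simp only [mem_coe, mem_range] at hi hj
      have h1 := hmul i hi
      have h2 := hmul j hj
      have : u - i * (t+1) ≠ u - j * (t+1) := by
        intro h
        have : i * (t+1) = j * (t+1) := by omega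
        exact hij (Nat.eq_of_mul_eq_mul_right (by omega) this)
      intro s hs1 hs2 x hx
      have m1 := level_mem.mp (hs1 hx)
      have m2 := level_mem.mp (hs2 hx)
      exact absurd (m1.symm.trans m2) this
  have hsumT : ∀ μ ∈ T, ∃ i < N, ∑ k, μ k = u - i * (t+1) := by
    intro μ hμ
    obtain ⟨i, hi, hμi⟩ := mem_biUnion.mp hμ
    exact ⟨i, mem_range.mp hi, level_mem.mp hμi⟩
  constructor
  · -- membership: T itself is a valid code
    refine ⟨T, ?_, ?_, hTcard⟩
    · intro μ hμ
      obtain ⟨i, hi, hs⟩ := hsumT μ hμ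
      have := hmul i hi
      omega
    · intro μ hμ ν hν hne hle
      obtain ⟨i, hi, hsμ⟩ := hsumT μ hμ
      obtain ⟨j, hj, hsν⟩ := hsumT ν hν
      have hmi := hmul i hi
      have hmj := hmul j hj
      have hss : ∑ k, μ k ≤ ∑ k, ν k := Finset.sum_le_sum fun k _ => hle k
      have hlt : ∑ k, μ k < ∑ k, ν k := by
        rcases lt_or_eq_of_le hss with h | h
        · exact h
        · exfalso
          apply hne
          funext k
          by_contra hk
          have : μ k < ν k := lt_of_le_of_ne (hle k) hk
          exact absurd h (ne_of_lt (Finset.sum_lt_sum (fun i _ => hle i) ⟨k, mem_univ k, this⟩))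
      have hji : j * (t+1) < i * (t+1) := by omega
      have : j < i := Nat.lt_of_mul_lt_mul_right hji
      have : (j+1) * (t+1) ≤ i * (t+1) := Nat.mul_le_mul_right _ this
      have : j * (t+1) + (t+1) ≤ i * (t+1) := by
        calc j * (t+1) + (t+1) = (j+1)*(t+1) := by ring
          _ ≤ i * (t+1) := this
      omega
  · -- upper bound
    rintro k ⟨C, hCrange, hCcode, rfl⟩
    rw [show (∑ i ∈ Finset.range N,
        Nat.choose (u - i * (t + 1) + (m+1) - 1) ((m+1) - 1)) = T.card from hTcard.symm]
    set F : (Fin (m+1) → ℕ) → (Fin (m+1) → ℕ) :=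
      fun μ j => if j = 0 then μ 0 + (u - ∑ i, μ i) % (t+1) else μ j with hF
    have hsumF : ∀ μ : Fin (m+1) → ℕ,
        ∑ j, F μ j = (∑ j, μ j) + (u - ∑ i, μ i) % (t+1) := by
      intro μ
      have : ∀ j : Fin (m+1), F μ j = μ j + (if j = 0 then (u - ∑ i, μ i) % (t+1) else 0) := by
        intro j
        by_cases h : j = 0 <;> simp [hF, h]
      rw [Finset.sum_congr rfl fun j _ => this j, Finset.sum_add_distrib,
        Finset.sum_ite_eq' univ (0 : Fin (m+1)) (fun _ => (u - ∑ i, μ i) % (t+1))]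
      simp
    apply Finset.card_le_card_of_injOn F
    · intro μ hμ
      obtain ⟨hl, hu⟩ := hCrange μ hμ
      set s := ∑ i, μ i
      have hdm := Nat.div_add_mod (u - s) (t+1)
      have hile : (u - s) / (t+1) < N := by
        rw [hN]
        have : (u - s) / (t+1) ≤ (u - l) / (t+1) :=
          Nat.div_le_div_right (by omega)
        omega
      apply mem_biUnion.mpr
      refine ⟨(u - s)/(t+1), mem_range.mpr hile, level_mem.mpr ?_⟩
      rw [hsumF]
      have := hmul _ hile
      rw [Nat.mul_comm]
      have hk : (u - ∑ i, μ i) % (t+1) = (u - s) % (t+1) := rfl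
      omega
    · intro μ hμ ν hν hFeq
      by_contra hne
      have hcoords : ∀ j : Fin (m+1), j ≠ 0 → μ j = ν j := by
        intro j hj
        have := congr_fun hFeq j
        simpa [hF, hj] using this
      have h0 : μ 0 + (u - ∑ i, μ i) % (t+1) = ν 0 + (u - ∑ i, ν i) % (t+1) := by
        have := congr_fun hFeq 0
        simpa [hF] using this
      have hsum : (∑ j, μ j) + (u - ∑ i, μ i) % (t+1)
          = (∑ j, ν j) + (u - ∑ i, ν i) % (t+1) := by
        rw [← hsumF, ← hsumF, hFeq]
      have hdμ : (u - ∑ i, μ i) % (t+1) ≤ t := by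
        have := Nat.mod_lt (u - ∑ i, μ i) (show 0 < t+1 by omega); omega
      have hdν : (u - ∑ i, ν i) % (t+1) ≤ t := by
        have := Nat.mod_lt (u - ∑ i, ν i) (show 0 < t+1 by omega); omega
      have h00 : μ 0 ≠ ν 0 := by
        intro h
        apply hne
        funext j
        by_cases hj : j = 0
        · rw [hj]; exact h
        · exact hcoords j hj
      rcases Nat.lt_or_ge (μ 0) (ν 0) with h | h
      · have hle : ∀ i, μ i ≤ ν i := by
          intro i
          by_cases hi : i = 0
          · rw [hi]; omega
          · rw [hcoords i hi]
        have := hCcode μ hμ ν hν hne hle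
        omega
      · have h' : ν 0 < μ 0 := by omega
        have hle : ∀ i, ν i ≤ μ i := by
          intro i
          by_cases hi : i = 0
          · rw [hi]; omega
          · rw [hcoords i hi]
        have := hCcode ν hν μ hμ (Ne.symm hne) hle
        omega
end

section
/- Let F be a finite field, let n be an even natural number, let t ≥ 1, and let r ∈ {1, …, t}. Denoting by g(ℓ) the number of ℓ-dimensional linear subspaces of F^n (with g(ℓ) = 0 for ℓ < 0 or ℓ > n), one has Σ_{ℓ ≡ n/2 (mod t+1), 0 ≤ ℓ ≤ n} g(ℓ) ≥ Σ_{ℓ ≡ n/2 + r (mod t+1), 0 ≤ ℓ ≤ n} g(ℓ). -/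
open Module Submodule

section Aux

variable {F : Type*} [Field F] [Fintype F]

lemma fiber_card (X : Type*) [AddCommGroup X] [Module F X] [Fintype X]
    [FiniteDimensional F X] (L : Submodule F X) (hL : finrank F L = 1) :
    Nat.card {x : {x : X // x ≠ 0} // (F ∙ x.1) = L} = Fintype.card F - 1 := by
  classical
  have e : {x : {x : X // x ≠ 0} // (F ∙ x.1) = L} ≃ {y : L // y ≠ 0} :=
    { toFun := fun z => ⟨⟨z.1.1, by
        have hm : z.1.1 ∈ (F ∙ z.1.1) := Submodule.mem_span_singleton_self z.1.1
        rwa [z.2] at hm⟩, by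
        intro h
        exact z.1.2 (by simpa using congrArg Subtype.val h)⟩
      invFun := fun y => ⟨⟨y.1.1, by simpa using y.2⟩, by
        refine Submodule.eq_of_le_of_finrank_le ?_ ?_
        · rw [Submodule.span_le, Set.singleton_subset_iff]; exact y.1.2
        · rw [hL, finrank_span_singleton (by simpa using y.2)]⟩
      left_inv := fun z => rfl
      right_inv := fun y => rfl }
  rw [Nat.card_congr e, Nat.card_eq_fintype_card]
  have h1 : Fintype.card {y : L // y ≠ 0} = Fintype.card L - 1 := by
    simpa using Set.card_ne_eq (0 : L)
  rw [h1, card_eq_pow_finrank (K := F) (V := L), hL, pow_one]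

lemma lines_mul (X : Type*) [AddCommGroup X] [Module F X] [Finite X] :
    Nat.card {L : Submodule F X // finrank F L = 1} * (Fintype.card F - 1)
      = Fintype.card F ^ finrank F X - 1 := by
  classical
  have : Fintype X := Fintype.ofFinite X
  have hFD : FiniteDimensional F X := Module.Finite.of_finite (R := F) (M := X)
  have : Fintype (Submodule F X) := Fintype.ofFinite _
  let f : {x : X // x ≠ 0} → {L : Submodule F X // finrank F L = 1} :=
    fun x => ⟨F ∙ x.1, finrank_span_singleton x.2⟩
  have hcount : Fintype.card {x : X // x ≠ 0}
      = ∑ L : {L : Submodule F X // finrank F L = 1},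
          (Finset.univ.filter (fun x => f x = L)).card := by
    rw [← Finset.card_univ, Finset.card_eq_sum_card_fiberwise
      (fun x _ => Finset.mem_univ (f x))]
  have hfib : ∀ L : {L : Submodule F X // finrank F L = 1},
      (Finset.univ.filter (fun x => f x = L)).card = Fintype.card F - 1 := by
    intro L
    rw [← Fintype.card_subtype]
    have h2 : ∀ x : {x : X // x ≠ 0}, (f x = L) ↔ ((F ∙ x.1) = L.1) := by
      intro x; constructor
      · intro h; rw [← h]
      · intro h; exact Subtype.ext h
    rw [Fintype.card_congr (Equiv.subtypeEquivRight h2), ← Nat.card_eq_fintype_card]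
    exact fiber_card X L.1 L.2
  have hnz : Fintype.card {x : X // x ≠ 0} = Fintype.card F ^ finrank F X - 1 := by
    have h3 := Set.card_ne_eq (0 : X)
    simp only [Set.coe_setOf] at h3
    rw [h3, card_eq_pow_finrank (K := F) (V := X)]
  rw [← hnz, hcount, Finset.sum_congr rfl (fun L _ => hfib L), Finset.sum_const,
    Finset.card_univ, Nat.card_eq_fintype_card, smul_eq_mul]

lemma card_subspace_symm (X : Type*) [AddCommGroup X] [Module F X] [FiniteDimensional F X]
    (k : ℕ) (hk : k ≤ finrank F X) :
    Nat.card {U : Submodule F X // finrank F U = k}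
      = Nat.card {U : Submodule F X // finrank F U = finrank F X - k} := by
  classical
  have hann : ∀ U : Submodule F X,
      finrank F U.dualAnnihilator = finrank F X - finrank F U := by
    intro U
    have h1 : finrank F (X ⧸ U) = finrank F U.dualAnnihilator :=
      (Subspace.quotEquivAnnihilator U).finrank_eq
    have h2 := U.finrank_quotient_add_finrank
    omega
  let eD : Dual F X ≃ₗ[F] X := (Basis.ofVectorSpace F X).toDualEquiv.symm
  let E : Submodule F X ≃ Submodule F X :=
    ((Subspace.orderIsoFiniteDimensional (K := F) (V := X)).toEquiv.trans
      OrderDual.ofDual).trans (Submodule.orderIsoMapComap eD).toEquiv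
  have hE : ∀ U : Submodule F X, E U = (U.dualAnnihilator).map (eD : Dual F X →ₗ[F] X) := fun U => rfl
  refine Nat.card_congr (Equiv.subtypeEquiv E (fun U => ?_))
  have h3 : finrank F (E U) = finrank F X - finrank F U := by
    rw [hE, show (map (eD : Dual F X →ₗ[F] X) U.dualAnnihilator)
        = map (↑eD : Dual F X →ₗ[F] X) U.dualAnnihilator from rfl,
      LinearEquiv.finrank_map_eq, hann]
  have h4 : finrank F U ≤ finrank F X := U.finrank_le
  constructor
  · intro h; rw [h3, h]
  · intro h; rw [h3] at h; omega

lemma hyper_lower (X : Type*) [AddCommGroup X] [Module F X] [Finite X]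
    (W : Submodule F X) (d : ℕ) (hW : finrank F W = d) (hd : 1 ≤ d) :
    Fintype.card F ^ d - 1
      ≤ Nat.card {U : Submodule F X // finrank F U = d - 1 ∧ U ≤ W} * (Fintype.card F - 1) := by
  classical
  have hFD : FiniteDimensional F X := Module.Finite.of_finite (R := F) (M := X)
  have hlines := lines_mul (F := F) (↥W)
  rw [hW] at hlines
  have hsymW := card_subspace_symm (F := F) (↥W) 1 (by rw [hW]; exact hd)
  rw [hW] at hsymW
  have hinj : Function.Injective
      (fun U' : {U' : Submodule F ↥W // finrank F U' = d - 1} =>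
        (⟨U'.1.map W.subtype, by
            rw [Submodule.finrank_map_subtype_eq]; exact U'.2, map_subtype_le _ _⟩ :
          {U : Submodule F X // finrank F U = d - 1 ∧ U ≤ W})) := by
    intro a b hab
    have := congrArg Subtype.val hab
    simp only at this
    exact Subtype.ext (Submodule.map_injective_of_injective W.injective_subtype this)
  have hle := Nat.card_le_card_of_injective _ hinj
  calc Fintype.card F ^ d - 1
      = Nat.card {L : Submodule F ↥W // finrank F L = 1} * (Fintype.card F - 1) := hlines.symm
    _ = Nat.card {U' : Submodule F ↥W // finrank F U' = d - 1} * (Fintype.card F - 1) := by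
        rw [hsymW]
    _ ≤ _ := Nat.mul_le_mul_right _ hle

lemma super_upper (X : Type*) [AddCommGroup X] [Module F X] [Finite X]
    (U : Submodule F X) (ℓ : ℕ) (hU : finrank F U = ℓ) :
    Nat.card {W : Submodule F X // finrank F W = ℓ + 1 ∧ U ≤ W} * (Fintype.card F - 1)
      ≤ Fintype.card F ^ (finrank F X - ℓ) - 1 := by
  classical
  have hFD : FiniteDimensional F X := Module.Finite.of_finite (R := F) (M := X)
  have hfinq : Finite (X ⧸ U) := Quotient.finite _
  have hfr : ∀ W : Submodule F X, finrank F W = ℓ + 1 → U ≤ W →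
      finrank F (W.map U.mkQ) = 1 := by
    intro W hW hUW
    let f : ↥W →ₗ[F] X ⧸ U := U.mkQ ∘ₗ W.subtype
    have hrange : LinearMap.range f = W.map U.mkQ := by
      rw [LinearMap.range_comp, Submodule.range_subtype]
    have hker : LinearMap.ker f = U.comap W.subtype := by
      rw [LinearMap.ker_comp, Submodule.ker_mkQ]
    have h1 := LinearMap.finrank_range_add_finrank_ker f
    have h2 : finrank F (U.comap W.subtype) = ℓ := by
      rw [← hU]
      exact (Submodule.comapSubtypeEquivOfLe hUW).finrank_eq
    rw [hrange, hker, h2, hW] at h1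
    omega
  have hinj : Function.Injective
      (fun W : {W : Submodule F X // finrank F W = ℓ + 1 ∧ U ≤ W} =>
        (⟨W.1.map U.mkQ, hfr W.1 W.2.1 W.2.2⟩ :
          {L : Submodule F (X ⧸ U) // finrank F L = 1})) := by
    intro a b hab
    have h := congrArg Subtype.val hab
    simp only at h
    have ha := Submodule.comap_map_mkQ U a.1
    have hb := Submodule.comap_map_mkQ U b.1
    rw [sup_eq_right.2 a.2.2] at ha
    rw [sup_eq_right.2 b.2.2] at hb
    exact Subtype.ext (by rw [← ha, ← hb, h])
  have hle := Nat.card_le_card_of_injective _ hinj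
  have hlines := lines_mul (F := F) (X ⧸ U)
  have hq : finrank F (X ⧸ U) = finrank F X - ℓ := by
    have h2 := U.finrank_quotient_add_finrank
    omega
  rw [hq] at hlines
  calc Nat.card {W : Submodule F X // finrank F W = ℓ + 1 ∧ U ≤ W} * (Fintype.card F - 1)
      ≤ Nat.card {L : Submodule F (X ⧸ U) // finrank F L = 1} * (Fintype.card F - 1) :=
        Nat.mul_le_mul_right _ hle
    _ = _ := hlines

lemma halving (X : Type*) [AddCommGroup X] [Module F X] [Finite X] (ℓ : ℕ)
    (h1 : finrank F X ≤ 2 * ℓ) (h2 : ℓ < finrank F X) :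
    2 * Nat.card {W : Submodule F X // finrank F W = ℓ + 1}
      ≤ Nat.card {U : Submodule F X // finrank F U = ℓ} := by
  classical
  set q := Fintype.card F with hqdef
  have hq : 2 ≤ q := Fintype.one_lt_card
  set n := finrank F X with hndef
  haveI : Fintype (Submodule F X) := Fintype.ofFinite _
  set gW := Nat.card {W : Submodule F X // finrank F W = ℓ + 1} with hgW
  set gU := Nat.card {U : Submodule F X // finrank F U = ℓ} with hgU
  let E1 := Σ W : {W : Submodule F X // finrank F W = ℓ + 1},
    {U : Submodule F X // finrank F U = ℓ ∧ U ≤ W.1}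
  let E2 := Σ U : {U : Submodule F X // finrank F U = ℓ},
    {W : Submodule F X // finrank F W = ℓ + 1 ∧ U.1 ≤ W}
  let e : E1 ≃ E2 :=
    { toFun := fun p => ⟨⟨p.2.1, p.2.2.1⟩, ⟨p.1.1, p.1.2, p.2.2.2⟩⟩
      invFun := fun p => ⟨⟨p.2.1, p.2.2.1⟩, ⟨p.1.1, p.1.2, p.2.2.2⟩⟩
      left_inv := fun p => rfl
      right_inv := fun p => rfl }
  have hEcard : Nat.card E1 = Nat.card E2 := Nat.card_congr e
  -- lower bound on card E1 * (q - 1)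
  have hlow : gW * (q ^ (ℓ + 1) - 1) ≤ Nat.card E1 * (q - 1) := by
    rw [Nat.card_eq_fintype_card, Fintype.card_sigma, Finset.sum_mul, hgW,
      Nat.card_eq_fintype_card, ← Finset.card_univ]
    have := Finset.card_nsmul_le_sum (Finset.univ)
      (fun W : {W : Submodule F X // finrank F W = ℓ + 1} =>
        Fintype.card {U : Submodule F X // finrank F U = ℓ ∧ U ≤ W.1} * (q - 1))
      (q ^ (ℓ + 1) - 1) (fun W _ => by
        simpa only [Nat.card_eq_fintype_card, Nat.add_sub_cancel] using
          hyper_lower (F := F) X W.1 (ℓ + 1) W.2 (by omega))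
    simpa [smul_eq_mul, mul_comm] using this
  have hup : Nat.card E2 * (q - 1) ≤ gU * (q ^ (n - ℓ) - 1) := by
    rw [Nat.card_eq_fintype_card, Fintype.card_sigma, Finset.sum_mul, hgU,
      Nat.card_eq_fintype_card, ← Finset.card_univ]
    have := Finset.sum_le_card_nsmul (Finset.univ)
      (fun U : {U : Submodule F X // finrank F U = ℓ} =>
        Fintype.card {W : Submodule F X // finrank F W = ℓ + 1 ∧ U.1 ≤ W} * (q - 1))
      (q ^ (n - ℓ) - 1) (fun U _ => by
        simpa only [Nat.card_eq_fintype_card] using super_upper (F := F) X U.1 ℓ U.2)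
    simpa [smul_eq_mul, mul_comm] using this
  have harith : 2 * (q ^ (n - ℓ) - 1) ≤ q ^ (ℓ + 1) - 1 := by
    have ha : q ^ (n - ℓ) ≤ q ^ ℓ := Nat.pow_le_pow_right (by omega) (by omega)
    have hb : 2 * q ^ ℓ ≤ q ^ (ℓ + 1) := by
      rw [pow_succ]
      calc 2 * q ^ ℓ = q ^ ℓ * 2 := by ring
        _ ≤ q ^ ℓ * q := Nat.mul_le_mul_left _ hq
    have hc : 1 ≤ q ^ (n - ℓ) := Nat.one_le_pow _ _ (by omega)
    omega
  have hpos : 0 < q ^ (n - ℓ) - 1 := by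
    have : 2 ≤ q ^ (n - ℓ) := by
      calc 2 = 2 ^ 1 := rfl
        _ ≤ q ^ (n - ℓ) := Nat.pow_le_pow_left hq _ |>.trans (Nat.pow_le_pow_right (by omega) (by omega)) |>.trans (le_refl _)
    omega
  have key : 2 * gW * (q ^ (n - ℓ) - 1) ≤ gU * (q ^ (n - ℓ) - 1) := by
    calc 2 * gW * (q ^ (n - ℓ) - 1) = gW * (2 * (q ^ (n - ℓ) - 1)) := by ring
      _ ≤ gW * (q ^ (ℓ + 1) - 1) := Nat.mul_le_mul_left _ harith
      _ ≤ Nat.card E1 * (q - 1) := hlow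
      _ = Nat.card E2 * (q - 1) := by rw [hEcard]
      _ ≤ gU * (q ^ (n - ℓ) - 1) := hup
  exact Nat.le_of_mul_le_mul_right key hpos

end Aux

/-- For even `n`, `t ≥ 1` and `1 ≤ r ≤ t`, the residue class of `n/2` modulo `t+1`
maximizes the sum of the sizes of the level sets of the subspace lattice of `F^n`:
the sum of the numbers `g(ℓ)` of `ℓ`-dimensional subspaces over `ℓ ≡ n/2 (mod t+1)`
is at least the corresponding sum over `ℓ ≡ n/2 + r (mod t+1)`. -/
theorem stmt10 (F : Type*) [Field F] [Fintype F] (n t r : ℕ)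
    (hn : Even n) (ht : 1 ≤ t) (hr1 : 1 ≤ r) (hrt : r ≤ t) :
    (∑ ℓ ∈ Finset.range (n + 1),
        if ℓ % (t + 1) = (n / 2) % (t + 1) then
          Nat.card {U : Submodule F (Fin n → F) // Module.finrank F U = ℓ}
        else 0) ≥
      ∑ ℓ ∈ Finset.range (n + 1),
        if ℓ % (t + 1) = (n / 2 + r) % (t + 1) then
          Nat.card {U : Submodule F (Fin n → F) // Module.finrank F U = ℓ}
        else 0 := by
  classical
  set g : ℕ → ℕ :=
    fun ℓ => Nat.card {U : Submodule F (Fin n → F) // Module.finrank F U = ℓ} with hg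
  have hV : finrank F (Fin n → F) = n := Module.finrank_fin_fun F
  set m := n / 2 with hmdef
  have hn2 : n % 2 = 0 := Nat.even_iff.mp hn
  have hnm : n = 2 * m := by omega
  set p := t + 1 with hp
  have hrp : r < p := by omega
  -- basic lemmas about g
  have hsym : ∀ ℓ ≤ n, g ℓ = g (n - ℓ) := by
    intro ℓ hℓ
    have h := card_subspace_symm (F := F) (Fin n → F) ℓ (by rw [hV]; exact hℓ)
    rw [hV] at h
    exact h
  have hhalf : ∀ ℓ, n ≤ 2 * ℓ → ℓ < n → 2 * g (ℓ + 1) ≤ g ℓ := by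
    intro ℓ h1 h2
    exact halving (F := F) (Fin n → F) ℓ (by rw [hV]; exact h1) (by rw [hV]; exact h2)
  have hmono : ∀ d a, n ≤ 2 * a → a + d ≤ n → g (a + d) ≤ g a := by
    intro d
    induction d with
    | zero => intro a _ _; simp
    | succ d ih =>
      intro a h1 h2
      have h3 := ih a h1 (by omega)
      have h4 := hhalf (a + d) (by omega) (by omega)
      have h5 : g (a + (d + 1)) = g (a + d + 1) := by rw [← Nat.add_assoc]
      omega
  have hhalf_up : ∀ a b, n ≤ 2 * a → a < b → b ≤ n → 2 * g b ≤ g a := by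
    intro a b h1 h2 h3
    have h4 := hhalf (b - 1) (by omega) (by omega)
    have h5 : g (a + (b - 1 - a)) ≤ g a := hmono (b - 1 - a) a h1 (by omega)
    rw [show a + (b - 1 - a) = b - 1 by omega] at h5
    rw [show b - 1 + 1 = b by omega] at h4
    omega
  have hhalf_down : ∀ a b, a < b → 2 * b ≤ n → 2 * g a ≤ g b := by
    intro a b h1 h2
    rw [hsym a (by omega), hsym b (by omega)]
    exact hhalf_up (n - b) (n - a) (by omega) (by omega) (by omega)
  -- rewrite sums as filtered sums
  rw [ge_iff_le, ← Finset.sum_filter, ← Finset.sum_filter]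
  set A := (Finset.range (n + 1)).filter (fun ℓ => ℓ % p = m % p) with hA
  set B := (Finset.range (n + 1)).filter (fun ℓ => ℓ % p = (m + r) % p) with hB
  have hsplit := Finset.sum_filter_add_sum_filter_not B (fun ℓ => m ≤ ℓ) g
  -- upper part
  have claim1 : 2 * ∑ ℓ ∈ B.filter (fun ℓ => m ≤ ℓ), g ℓ ≤ ∑ a ∈ A, g a := by
    have hmem : ∀ ℓ ∈ B.filter (fun ℓ => m ≤ ℓ),
        m + r ≤ ℓ ∧ ℓ ≤ n ∧ (ℓ - r) % p = m % p := by
      intro ℓ hℓ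
      simp only [hB, Finset.mem_filter, Finset.mem_range] at hℓ
      obtain ⟨⟨hrange, hmod⟩, hge⟩ := hℓ
      have hmodeq : Nat.ModEq p (m + (ℓ - m)) (m + r) := by
        rw [show m + (ℓ - m) = ℓ by omega]; exact hmod
      have hd : Nat.ModEq p (ℓ - m) r := Nat.ModEq.add_left_cancel' m hmodeq
      have hd2 : (ℓ - m) % p = r := by
        have hd' : (ℓ - m) % p = r % p := hd
        rwa [Nat.mod_eq_of_lt hrp] at hd'
      have hd3 : r ≤ ℓ - m := hd2 ▸ Nat.mod_le _ _
      refine ⟨by omega, by omega, ?_⟩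
      have h6 : Nat.ModEq p ((ℓ - r) + r) (m + r) := by
        rw [show ℓ - r + r = ℓ by omega]; exact hmod
      exact (Nat.ModEq.add_right_cancel' r h6 : (ℓ - r) % p = m % p)
    calc 2 * ∑ ℓ ∈ B.filter (fun ℓ => m ≤ ℓ), g ℓ
        = ∑ ℓ ∈ B.filter (fun ℓ => m ≤ ℓ), 2 * g ℓ := by rw [Finset.mul_sum]
      _ ≤ ∑ ℓ ∈ B.filter (fun ℓ => m ≤ ℓ), g (ℓ - r) := by
          refine Finset.sum_le_sum (fun ℓ hℓ => ?_)
          obtain ⟨h1, h2, _⟩ := hmem ℓ hℓ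
          exact hhalf_up (ℓ - r) ℓ (by omega) (by omega) h2
      _ = ∑ a ∈ (B.filter (fun ℓ => m ≤ ℓ)).image (fun ℓ => ℓ - r), g a := by
          rw [Finset.sum_image]
          intro a ha b hb hab
          obtain ⟨ha1, _, _⟩ := hmem a ha
          obtain ⟨hb1, _, _⟩ := hmem b hb
          simp only at hab
          omega
      _ ≤ ∑ a ∈ A, g a := by
          refine Finset.sum_le_sum_of_subset ?_
          intro a ha
          simp only [Finset.mem_image] at ha
          obtain ⟨ℓ, hℓ, rfl⟩ := ha
          obtain ⟨h1, h2, h3⟩ := hmem ℓ hℓ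
          simp only [hA, Finset.mem_filter, Finset.mem_range]
          exact ⟨by omega, h3⟩
  -- lower part
  have claim2 : 2 * ∑ ℓ ∈ B.filter (fun ℓ => ¬ m ≤ ℓ), g ℓ ≤ ∑ a ∈ A, g a := by
    have hmem : ∀ ℓ ∈ B.filter (fun ℓ => ¬ m ≤ ℓ),
        ℓ + (p - r) ≤ m ∧ (ℓ + (p - r)) % p = m % p := by
      intro ℓ hℓ
      simp only [hB, Finset.mem_filter, Finset.mem_range] at hℓ
      obtain ⟨⟨hrange, hmod⟩, hlt⟩ := hℓ
      have hlt' : ℓ < m := by omega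
      have hmodeq : Nat.ModEq p (m + (r + (m - ℓ))) (m + 0) := by
        have h1 : Nat.ModEq p (m + r) ℓ := (show Nat.ModEq p ℓ (m + r) from hmod).symm
        have h2 : Nat.ModEq p (m + r + (m - ℓ)) (ℓ + (m - ℓ)) := Nat.ModEq.add_right _ h1
        rw [show ℓ + (m - ℓ) = m by omega] at h2
        rw [show m + (r + (m - ℓ)) = m + r + (m - ℓ) by omega, show m + 0 = m by omega]
        exact h2
      have hdvd : p ∣ (r + (m - ℓ)) := by
        have := Nat.ModEq.add_left_cancel' m hmodeq
        exact (Nat.modEq_zero_iff_dvd).mp this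
      have hge : p ≤ r + (m - ℓ) := Nat.le_of_dvd (by omega) hdvd
      constructor
      · omega
      · have h7 : Nat.ModEq p (ℓ + (p - r)) (m + r + (p - r)) := Nat.ModEq.add_right _ hmod
        rw [show m + r + (p - r) = m + p by omega] at h7
        have h8 : (m + p) % p = m % p := Nat.add_mod_right m p
        exact (h7 : (ℓ + (p - r)) % p = (m + p) % p).trans h8
    calc 2 * ∑ ℓ ∈ B.filter (fun ℓ => ¬ m ≤ ℓ), g ℓ
        = ∑ ℓ ∈ B.filter (fun ℓ => ¬ m ≤ ℓ), 2 * g ℓ := by rw [Finset.mul_sum]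
      _ ≤ ∑ ℓ ∈ B.filter (fun ℓ => ¬ m ≤ ℓ), g (ℓ + (p - r)) := by
          refine Finset.sum_le_sum (fun ℓ hℓ => ?_)
          obtain ⟨h1, _⟩ := hmem ℓ hℓ
          exact hhalf_down ℓ (ℓ + (p - r)) (by omega) (by omega)
      _ = ∑ a ∈ (B.filter (fun ℓ => ¬ m ≤ ℓ)).image (fun ℓ => ℓ + (p - r)), g a := by
          rw [Finset.sum_image]
          intro a _ b _ hab
          simp only at hab
          omega
      _ ≤ ∑ a ∈ A, g a := by
          refine Finset.sum_le_sum_of_subset ?_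
          intro a ha
          simp only [Finset.mem_image] at ha
          obtain ⟨ℓ, hℓ, rfl⟩ := ha
          obtain ⟨h1, h2⟩ := hmem ℓ hℓ
          simp only [hA, Finset.mem_filter, Finset.mem_range]
          exact ⟨by omega, h2⟩
  have hfinal : ∑ ℓ ∈ B, g ℓ ≤ ∑ a ∈ A, g a := by omega
  exact hfinal
end

section
/- Let a ≥ 1, t, and ℓ̲ ≤ ℓ̄ be natural numbers. The maximum cardinality of a set C of words over the alphabet {0, 1, …, a−1} whose lengths all lie in [ℓ̲, ℓ̄], with the property that for all distinct x, y ∈ C, if y is a subsequence of x then len(x) − len(y) > t, equals Σ_{j=0}^{⌊(ℓ̄−ℓ̲)/(t+1)⌋} a^{ℓ̄ − j(t+1)}. -/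
open Finset List

/-- The finset of all lists of length `n` over `Fin a`. -/
def listsLen (a n : ℕ) : Finset (List (Fin a)) :=
  (Finset.univ : Finset (List.Vector (Fin a) n)).image List.Vector.toList

lemma mem_listsLen {a n : ℕ} {w : List (Fin a)} :
    w ∈ listsLen a n ↔ w.length = n := by
  constructor
  · rintro hw
    simp only [listsLen, Finset.mem_image] at hw
    obtain ⟨v, -, rfl⟩ := hw
    exact v.toList_length
  · intro h
    simp only [listsLen, Finset.mem_image]
    exact ⟨⟨w, h⟩, Finset.mem_univ _, rfl⟩

lemma card_listsLen (a n : ℕ) : (listsLen a n).card = a ^ n := by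
  rw [listsLen, Finset.card_image_of_injective _ List.Vector.toList_injective,
    Finset.card_univ, card_vector, Fintype.card_fin]

/-- Optimal codes detecting up to `t` deletions: among words over an alphabet of size
`a ≥ 1` whose lengths lie in `[l, u]`, the maximum size of a code such that no codeword
is a subsequence of another codeword of length within `t` of it equals
`Σ_{j=0}^{⌊(u-l)/(t+1)⌋} a^{u - j(t+1)}`. -/
theorem stmt12 (a t l u : ℕ) (ha : 1 ≤ a) (hlu : l ≤ u) :
    IsGreatest {k | ∃ C : Finset (List (Fin a)),
        (∀ x ∈ C, l ≤ x.length ∧ x.length ≤ u) ∧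
        (∀ x ∈ C, ∀ y ∈ C, x ≠ y → y.Sublist x → x.length - y.length > t) ∧
        C.card = k}
      (∑ j ∈ Finset.range ((u - l) / (t + 1) + 1), a ^ (u - j * (t + 1))) := by
  set J := (u - l) / (t + 1) with hJ
  have hJle : J * (t + 1) ≤ u - l := Nat.div_mul_le_self _ _
  -- injectivity of lengths for j ≤ J
  have hlen : ∀ i ≤ J, ∀ j ≤ J, i < j → u - j * (t + 1) < u - i * (t + 1) := by
    intro i hi j hj hij
    have h1 : (i + 1) * (t + 1) ≤ j * (t + 1) := Nat.mul_le_mul_right _ hij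
    have h2 : j * (t + 1) ≤ u - l := le_trans (Nat.mul_le_mul_right _ hj) hJle
    have h3 : (i + 1) * (t + 1) = i * (t + 1) + (t + 1) := by ring
    omega
  set T : Finset (List (Fin a)) :=
    (Finset.range (J + 1)).biUnion (fun j => listsLen a (u - j * (t + 1))) with hT
  have hmemT : ∀ w : List (Fin a),
      w ∈ T ↔ ∃ j ≤ J, w.length = u - j * (t + 1) := by
    intro w
    simp only [hT, Finset.mem_biUnion, Finset.mem_range, mem_listsLen, Nat.lt_succ_iff]
  have hcardT : T.card = ∑ j ∈ Finset.range (J + 1), a ^ (u - j * (t + 1)) := by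
    rw [hT, Finset.card_biUnion, ]
    · exact Finset.sum_congr rfl fun j _ => card_listsLen _ _
    · intro i hi j hj hij
      simp only [Finset.mem_coe, Finset.mem_range, Nat.lt_succ_iff] at hi hj
      rw [Function.onFun, Finset.disjoint_left]
      intro w hwi hwj
      rw [mem_listsLen] at hwi hwj
      rcases Nat.lt_or_ge i j with h | h
      · exact absurd (hwi ▸ hwj) (Nat.ne_of_lt (hlen i hi j hj h)).symm
      · rcases Nat.lt_or_ge j i with h' | h'
        · exact absurd (hwj ▸ hwi) (Nat.ne_of_lt (hlen j hj i hi h')).symm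
        · exact hij (le_antisymm h' h)
  constructor
  · -- membership : T is a witness
    refine ⟨T, ?_, ?_, hcardT⟩
    · intro x hx
      obtain ⟨j, hj, hxl⟩ := (hmemT x).1 hx
      have : j * (t + 1) ≤ u - l := le_trans (Nat.mul_le_mul_right _ hj) hJle
      omega
    · intro x hx y hy hxy hyx
      obtain ⟨j, hj, hxl⟩ := (hmemT x).1 hx
      obtain ⟨i, hi, hyl⟩ := (hmemT y).1 hy
      have hle : y.length ≤ x.length := hyx.length_le
      have hne : y.length ≠ x.length := fun h => hxy (hyx.eq_of_length h).symm
      have hlt : y.length < x.length := lt_of_le_of_ne hle hne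
      -- so u - i(t+1) < u - j(t+1), hence j < i
      have hji : j < i := by
        by_contra h
        push_neg at h
        rcases lt_or_eq_of_le h with h' | h'
        · exact absurd (hyl ▸ hxl ▸ hlt) (not_lt.2 (le_of_lt (hlen i hi j hj h')))
        · subst h'; omega
      have h1 : (j + 1) * (t + 1) ≤ i * (t + 1) := Nat.mul_le_mul_right _ hji
      have h2 : i * (t + 1) ≤ u - l := le_trans (Nat.mul_le_mul_right _ hi) hJle
      have h3 : (j + 1) * (t + 1) = j * (t + 1) + (t + 1) := by ring
      have h4 : j * (t + 1) ≤ u - l := le_trans (Nat.mul_le_mul_right _ hj) hJle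
      omega
  · -- upper bound
    rintro k ⟨C, h1, h2, rfl⟩
    rw [← hcardT]
    set d : Fin a := ⟨0, ha⟩ with hd
    set F : List (Fin a) → List (Fin a) :=
      fun x => x ++ List.replicate ((u - x.length) % (t + 1)) (x.getLastD d) with hF
    have hFlen : ∀ x : List (Fin a), (F x).length = x.length + (u - x.length) % (t + 1) := by
      intro x; simp [hF]
    apply Finset.card_le_card_of_injOn F
    · -- maps into T
      intro x hx
      obtain ⟨hxl, hxu⟩ := h1 x hx
      rw [Finset.mem_coe, hmemT, hFlen]
      refine ⟨(u - x.length) / (t + 1), ?_, ?_⟩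
      · exact Nat.div_le_div_right (Nat.sub_le_sub_left hxl u)
      · have h' := Nat.div_add_mod' (u - x.length) (t + 1)
        omega
    · -- injective on C
      have key : ∀ x ∈ C, ∀ y ∈ C, F x = F y → x.length ≤ y.length → x = y := by
        intro x hx y hy hFeq hxy
        have hlF : (F x).length = (F y).length := by rw [hFeq]
        rw [hFlen, hFlen] at hlF
        by_contra hne
        have hpx : x <+: F x := List.prefix_append _ _
        have hpy : y <+: F x := hFeq ▸ List.prefix_append y _
        have hsub : x.Sublist y :=
          (List.prefix_of_prefix_length_le hpx hpy hxy).sublist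
        have := h2 y hy x hx (fun h => hne h.symm) hsub
        have hmod : (u - x.length) % (t + 1) < t + 1 := Nat.mod_lt _ (Nat.succ_pos t)
        omega
      intro x hx y hy hFeq
      rcases le_total x.length y.length with h | h
      · exact key x hx y hy hFeq h
      · exact (key y hy x hx hFeq.symm h).symm
end

section
/- Let n, w ≤ n, and t be natural numbers. Identify each binary word of length n and Hamming weight w with the strictly increasing sequence λ = (λ(1) < λ(2) < ⋯ < λ(w)) of positions of its 1's in {1, …, n}, and define its rank as ρ(λ) = Σ_{i=1}^w (λ(i) − i). Then the maximum cardinality of a code C of such words having the property that for all distinct λ, μ ∈ C, λ(i) ≤ μ(i) for all i implies ρ(μ) − ρ(λ) > t, is at least the sum, over all ℓ with 0 ≤ ℓ ≤ w(n−w) and ℓ ≡ ⌊w(n−w)/2⌋ (mod t+1), of the number of weight-w length-n binary words of rank ℓ. -/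
lemma bs_step {n w : ℕ} (l : Fin w → Fin n) (h : StrictMono l) :
    ∀ (k : ℕ) (i : Fin w) (hk : (i : ℕ) + k < w), (l i : ℕ) + k ≤ l ⟨(i : ℕ) + k, hk⟩ := by
  intro k
  induction k with
  | zero => intro i hk; simp
  | succ k ih =>
      intro i hk
      have hk' : (i : ℕ) + k < w := by omega
      have h1 := ih i hk'
      have h2 : l ⟨(i : ℕ) + k, hk'⟩ < l ⟨(i : ℕ) + (k+1), hk⟩ := by
        apply h; simp [Fin.lt_def]
      omega

lemma bs_ge {n w : ℕ} (l : Fin w → Fin n) (h : StrictMono l) (i : Fin w) :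
    (i : ℕ) ≤ l i := by
  have h0 : ((⟨0, i.pos⟩ : Fin w) : ℕ) + (i : ℕ) < w := by simpa using i.isLt
  have h1 := bs_step l h (i : ℕ) ⟨0, i.pos⟩ h0
  have h2 : (⟨((⟨0, i.pos⟩ : Fin w) : ℕ) + (i : ℕ), h0⟩ : Fin w) = i := Fin.ext (by simp)
  rw [h2] at h1
  omega

lemma bs_le {n w : ℕ} (l : Fin w → Fin n) (h : StrictMono l) (i : Fin w) :
    (l i : ℕ) ≤ n - w + i := by
  have hiw : (i : ℕ) < w := i.isLt
  have hk : (i : ℕ) + (w - 1 - (i : ℕ)) < w := by omega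
  have h1 := bs_step l h (w - 1 - (i : ℕ)) i hk
  have h2 : (l ⟨(i : ℕ) + (w - 1 - (i : ℕ)), hk⟩ : ℕ) < n := (l _).isLt
  have hb : (i : ℕ) + (w - 1 - (i : ℕ)) = w - 1 := by omega
  omega

lemma bs_rank_bound {n w : ℕ} (l : Fin w → Fin n) (h : StrictMono l) :
    (∑ i, ((l i : ℕ) - (i : ℕ))) ≤ w * (n - w) := by
  calc (∑ i, ((l i : ℕ) - (i : ℕ))) ≤ ∑ _i : Fin w, (n - w) := by
        apply Finset.sum_le_sum
        intro i _
        have := bs_le l h i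
        omega
    _ = w * (n - w) := by simp [Finset.sum_const, mul_comm]

/-- Bit-shift (timing) channel: binary words of length `n` and Hamming weight `w` are
identified with strictly increasing position sequences `λ : Fin w → Fin n`, with rank
`ρ(λ) = Σ_i (λ i - i)`. The maximum cardinality of a code detecting up to `t`
right-shifts (distinct coordinatewise-comparable codewords have ranks differing by more
than `t`) is at least the sum of the level-set sizes over all ranks
`ℓ ≡ ⌊w(n-w)/2⌋ (mod t+1)`. -/
theorem stmt13 (n w t : ℕ) (hw : w ≤ n) :
    ∃ C : Finset {l : Fin w → Fin n // StrictMono l},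
      (∀ x ∈ C, ∀ y ∈ C, x ≠ y → (∀ i, x.1 i ≤ y.1 i) →
        (∑ i, ((y.1 i : ℕ) - (i : ℕ))) - (∑ i, ((x.1 i : ℕ) - (i : ℕ))) > t) ∧
      (∑ ℓ ∈ Finset.range (w * (n - w) + 1),
        if ℓ % (t + 1) = (w * (n - w) / 2) % (t + 1) then
          Nat.card {l : Fin w → Fin n // StrictMono l ∧ ∑ i, ((l i : ℕ) - (i : ℕ)) = ℓ}
        else 0) ≤ C.card := by
  classical
  set m := (w * (n - w) / 2) % (t + 1) with hm
  set S := {l : Fin w → Fin n // StrictMono l}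
  set ρ : S → ℕ := fun x => ∑ i, ((x.1 i : ℕ) - (i : ℕ)) with hρ
  refine ⟨Finset.univ.filter (fun x : S => ρ x % (t + 1) = m), ?_, ?_⟩
  · intro x hx y hy hxy hle
    have hxm : ρ x % (t + 1) = m := (Finset.mem_filter.mp hx).2
    have hym : ρ y % (t + 1) = m := (Finset.mem_filter.mp hy).2
    have hxsum : ρ x + (∑ i : Fin w, (i : ℕ)) = ∑ i, (x.1 i : ℕ) := by
      rw [hρ, ← Finset.sum_add_distrib]
      exact Finset.sum_congr rfl fun i _ => Nat.sub_add_cancel (bs_ge x.1 x.2 i)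
    have hysum : ρ y + (∑ i : Fin w, (i : ℕ)) = ∑ i, (y.1 i : ℕ) := by
      rw [hρ, ← Finset.sum_add_distrib]
      exact Finset.sum_congr rfl fun i _ => Nat.sub_add_cancel (bs_ge y.1 y.2 i)
    have hex : ∃ i, x.1 i ≠ y.1 i := by
      by_contra hc
      push_neg at hc
      exact hxy (Subtype.ext (funext hc))
    obtain ⟨i0, hi0⟩ := hex
    have hlt : (∑ i, (x.1 i : ℕ)) < ∑ i, (y.1 i : ℕ) := by
      apply Finset.sum_lt_sum (fun i _ => by exact_mod_cast hle i)
      exact ⟨i0, Finset.mem_univ i0, by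
        have := hle i0
        exact_mod_cast lt_of_le_of_ne this (by simpa using hi0)⟩
    have hρlt : ρ x < ρ y := by omega
    have hmeq : Nat.ModEq (t + 1) (ρ x) (ρ y) := by
      unfold Nat.ModEq; rw [hxm, hym]
    have hdvd : (t + 1) ∣ (ρ y - ρ x) := (Nat.modEq_iff_dvd' hρlt.le).mp hmeq
    have hle' := Nat.le_of_dvd (by omega) hdvd
    show ρ y - ρ x > t
    omega
  · have hcard : ∀ ℓ : ℕ,
        Nat.card {l : Fin w → Fin n // StrictMono l ∧ ∑ i, ((l i : ℕ) - (i : ℕ)) = ℓ}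
          = (Finset.univ.filter (fun x : S => ρ x = ℓ)).card := by
      intro ℓ
      rw [Nat.card_eq_fintype_card, ← Fintype.card_subtype]
      exact Fintype.card_congr
        (Equiv.subtypeSubtypeEquivSubtypeInter
          (fun l : Fin w → Fin n => StrictMono l)
          (fun l => ∑ i, ((l i : ℕ) - (i : ℕ)) = ℓ)).symm
    set C : Finset S := Finset.univ.filter (fun x : S => ρ x % (t + 1) = m) with hC
    have hfib : ∀ ℓ ∈ Finset.range (w * (n - w) + 1),
        (if ℓ % (t + 1) = m then
          Nat.card {l : Fin w → Fin n // StrictMono l ∧ ∑ i, ((l i : ℕ) - (i : ℕ)) = ℓ}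
        else 0) = (C.filter (fun x => ρ x = ℓ)).card := by
      intro ℓ _
      by_cases hc : ℓ % (t + 1) = m
      · rw [if_pos hc, hcard ℓ]
        congr 1
        rw [hC, Finset.filter_filter]
        refine (Finset.filter_congr fun x _ => ?_).symm
        constructor
        · exact fun h => h.2
        · exact fun h => ⟨by rw [h]; exact hc, h⟩
      · rw [if_neg hc]
        symm
        rw [Finset.card_eq_zero, Finset.filter_eq_empty_iff]
        intro x hx
        have hxm : ρ x % (t + 1) = m := (Finset.mem_filter.mp hx).2
        intro h
        exact hc (by rw [← h, hxm])
    rw [Finset.sum_congr rfl hfib]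
    apply le_of_eq
    symm
    apply Finset.card_eq_sum_card_fiberwise
    intro x _
    rw [Finset.mem_coe, Finset.mem_range]
    have := bs_rank_bound x.1 x.2
    show ρ x < w * (n - w) + 1
    simp only [hρ]
    omega
end

section
/- Let n and w ≤ n be natural numbers. Identify each binary word of length n and Hamming weight w with the strictly increasing sequence λ = (λ(1) < ⋯ < λ(w)) of positions of its 1's in {1, …, n}, and define ρ(λ) = Σ_{i=1}^w (λ(i) − i). Then the maximum cardinality of a code C of such words having the property that for all distinct λ, μ ∈ C it is not the case that λ(i) ≤ μ(i) for all i, equals the number of weight-w length-n binary words x with ρ(x) = ⌊w(n−w)/2⌋. -/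
open Finset

namespace Stmt14

variable {n w : ℕ}

abbrev T (n w : ℕ) := {l : Fin w → Fin n // StrictMono l}

def rk (x : T n w) : ℕ := ∑ i, ((x.1 i : ℕ) - (i : ℕ))

lemma lt_iff (x : T n w) {p q : Fin w} (h : p < q) : (x.1 p : ℕ) < (x.1 q : ℕ) :=
  Fin.lt_def.mp (x.2 h)

lemma le_apply (x : T n w) (i : Fin w) : (i : ℕ) ≤ (x.1 i : ℕ) := by
  have key : ∀ k : ℕ, ∀ i : Fin w, (i : ℕ) = k → k ≤ (x.1 i : ℕ) := by
    intro k
    induction k with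
    | zero => intro i _; exact Nat.zero_le _
    | succ j ih =>
        intro i hi
        have hj : j < w := by omega
        have h1 : (⟨j, hj⟩ : Fin w) < i := Fin.lt_def.mpr (by simpa using by omega)
        have h2 := lt_iff x h1
        have h3 := ih ⟨j, hj⟩ rfl
        omega
  exact key _ i rfl

lemma add_le_apply (x : T n w) (i j : Fin w) (d : ℕ) (h : (i : ℕ) + d = (j : ℕ)) :
    (x.1 i : ℕ) + d ≤ (x.1 j : ℕ) := by
  induction d generalizing j with
  | zero => have : i = j := Fin.ext (by omega); subst this; omega
  | succ d ih =>
      have hd : (i : ℕ) + d < w := by have := j.isLt; omega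
      have hmid := ih ⟨(i : ℕ) + d, hd⟩ rfl
      have hlt : (⟨(i : ℕ) + d, hd⟩ : Fin w) < j := Fin.lt_def.mpr (by simp only [Fin.val_mk]; omega)
      have := lt_iff x hlt
      omega

lemma apply_le (hw : w ≤ n) (x : T n w) (i : Fin w) : (x.1 i : ℕ) ≤ n - w + (i : ℕ) := by
  have hw0 : 0 < w := Nat.pos_of_ne_zero (by rintro rfl; exact absurd i.isLt (by omega))
  have hlast : w - 1 < w := by omega
  have h1 := add_le_apply x i ⟨w - 1, hlast⟩ (w - 1 - (i : ℕ))
    (by simp only [Fin.val_mk]; have := i.isLt; omega)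
  have h2 := (x.1 ⟨w - 1, hlast⟩).isLt
  have := i.isLt
  omega

lemma rk_le (hw : w ≤ n) (x : T n w) : rk x ≤ w * (n - w) := by
  calc rk x ≤ ∑ _i : Fin w, (n - w) := by
        apply Finset.sum_le_sum
        intro i _
        have := apply_le hw x i
        omega
    _ = w * (n - w) := by simp [Finset.sum_const, mul_comm]

def CanUp (x : T n w) (a : Fin w) : Prop :=
  ((x.1 a : ℕ) + 1 < n) ∧ ∀ k, a < k → (x.1 a : ℕ) + 1 < (x.1 k : ℕ)

def CanDown (x : T n w) (b : Fin w) : Prop :=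
  0 < (x.1 b : ℕ) ∧ ∀ k, k < b → (x.1 k : ℕ) + 1 < (x.1 b : ℕ)

def raise (x : T n w) (a : Fin w) (h : CanUp x a) : T n w :=
  ⟨Function.update x.1 a ⟨(x.1 a : ℕ) + 1, h.1⟩, by
    intro p q hpq
    by_cases hp : p = a <;> by_cases hq : q = a
    · subst hp; subst hq; exact absurd hpq (lt_irrefl _)
    · subst hp
      rw [Function.update_self, Function.update_of_ne hq, Fin.lt_def]
      exact h.2 q hpq
    · subst hq
      rw [Function.update_self, Function.update_of_ne hp, Fin.lt_def]
      have := lt_iff x hpq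
      simp only [Fin.val_mk]
      omega
    · rw [Function.update_of_ne hp, Function.update_of_ne hq]
      exact x.2 hpq⟩

def low (x : T n w) (b : Fin w) (h : CanDown x b) : T n w :=
  ⟨Function.update x.1 b ⟨(x.1 b : ℕ) - 1, by have := (x.1 b).isLt; omega⟩, by
    intro p q hpq
    by_cases hp : p = b <;> by_cases hq : q = b
    · subst hp; subst hq; exact absurd hpq (lt_irrefl _)
    · subst hp
      rw [Function.update_self, Function.update_of_ne hq, Fin.lt_def]
      have := lt_iff x hpq
      simp only [Fin.val_mk]
      omega
    · subst hq
      rw [Function.update_self, Function.update_of_ne hp, Fin.lt_def]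
      have := h.2 p hpq
      simp only [Fin.val_mk]
      omega
    · rw [Function.update_of_ne hp, Function.update_of_ne hq]
      exact x.2 hpq⟩

lemma raise_self (x : T n w) (a : Fin w) (h : CanUp x a) :
    ((raise x a h).1 a : ℕ) = (x.1 a : ℕ) + 1 := by
  show ((Function.update x.1 a _ a : Fin n) : ℕ) = _
  rw [Function.update_self]

lemma raise_ne_apply (x : T n w) (a : Fin w) (h : CanUp x a) (k : Fin w) (hk : k ≠ a) :
    (raise x a h).1 k = x.1 k := by
  show (Function.update x.1 a _ k : Fin n) = _
  rw [Function.update_of_ne hk]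

lemma low_self (x : T n w) (b : Fin w) (h : CanDown x b) :
    ((low x b h).1 b : ℕ) = (x.1 b : ℕ) - 1 := by
  show ((Function.update x.1 b _ b : Fin n) : ℕ) = _
  rw [Function.update_self]

lemma low_ne_apply (x : T n w) (b : Fin w) (h : CanDown x b) (k : Fin w) (hk : k ≠ b) :
    (low x b h).1 k = x.1 k := by
  show (Function.update x.1 b _ k : Fin n) = _
  rw [Function.update_of_ne hk]

lemma rk_raise (x : T n w) (a : Fin w) (h : CanUp x a) : rk (raise x a h) = rk x + 1 := by
  unfold rk
  rw [← Finset.add_sum_erase _ _ (Finset.mem_univ a), ← Finset.add_sum_erase _ _ (Finset.mem_univ a)]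
  have h1 : ∑ i ∈ univ.erase a, (((raise x a h).1 i : ℕ) - (i : ℕ)) =
      ∑ i ∈ univ.erase a, ((x.1 i : ℕ) - (i : ℕ)) := by
    apply Finset.sum_congr rfl
    intro i hi
    rw [raise_ne_apply x a h i (Finset.ne_of_mem_erase hi)]
  rw [h1, raise_self]
  have := le_apply x a
  omega

lemma rk_low (x : T n w) (b : Fin w) (h : CanDown x b) : rk (low x b h) + 1 = rk x := by
  unfold rk
  rw [← Finset.add_sum_erase _ _ (Finset.mem_univ b), ← Finset.add_sum_erase _ _ (Finset.mem_univ b)]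
  have h1 : ∑ i ∈ univ.erase b, (((low x b h).1 i : ℕ) - (i : ℕ)) =
      ∑ i ∈ univ.erase b, ((x.1 i : ℕ) - (i : ℕ)) := by
    apply Finset.sum_congr rfl
    intro i hi
    rw [low_ne_apply x b h i (Finset.ne_of_mem_erase hi)]
  rw [h1, low_self]
  have hb : (b : ℕ) < (x.1 b : ℕ) ∨ (b : ℕ) = 0 := by
    rcases Nat.eq_zero_or_pos (b : ℕ) with h0 | h0
    · right; exact h0
    · left
      have hlt : (b : ℕ) - 1 < w := by have := b.isLt; omega
      have h2 := h.2 ⟨(b : ℕ) - 1, hlt⟩ (Fin.lt_def.mpr (by simp only [Fin.val_mk]; omega))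
      have h3 := le_apply x ⟨(b : ℕ) - 1, hlt⟩
      simp only [Fin.val_mk] at h2 h3
      omega
  have := le_apply x b
  have := h.1
  omega

lemma canDown_raise (x : T n w) (a : Fin w) (h : CanUp x a) : CanDown (raise x a h) a := by
  constructor
  · rw [raise_self]; omega
  · intro k hk
    rw [raise_ne_apply x a h k (ne_of_lt hk), raise_self]
    have := lt_iff x hk
    omega

lemma canUp_low (x : T n w) (b : Fin w) (h : CanDown x b) : CanUp (low x b h) b := by
  constructor
  · rw [low_self]; have := (x.1 b).isLt; have := h.1; omega
  · intro k hk
    rw [low_ne_apply x b h k (ne_of_gt hk), low_self]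
    have := lt_iff x hk
    have := h.1
    omega

lemma low_raise (x : T n w) (a : Fin w) (h : CanUp x a) (h' : CanDown (raise x a h) a) :
    low (raise x a h) a h' = x := by
  apply Subtype.ext
  funext k
  rcases eq_or_ne k a with hk | hk
  · subst hk; apply Fin.ext; rw [low_self, raise_self]; omega
  · rw [low_ne_apply _ _ _ _ hk, raise_ne_apply _ _ _ _ hk]

lemma raise_low (x : T n w) (b : Fin w) (h : CanDown x b) (h' : CanUp (low x b h) b) :
    raise (low x b h) b h' = x := by
  apply Subtype.ext
  funext k
  rcases eq_or_ne k b with hk | hk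
  · subst hk; apply Fin.ext; rw [raise_self, low_self]; have := h.1; omega
  · rw [raise_ne_apply _ _ _ _ hk, low_ne_apply _ _ _ _ hk]

lemma raise_le (x : T n w) (a : Fin w) (h : CanUp x a) (i : Fin w) :
    x.1 i ≤ (raise x a h).1 i := by
  rcases eq_or_ne i a with hi | hi
  · subst hi; rw [Fin.le_def, raise_self]; omega
  · rw [raise_ne_apply _ _ _ _ hi]

lemma raise_ne (x : T n w) (a : Fin w) (h : CanUp x a) : x ≠ raise x a h := by
  intro he
  have : (x.1 a : ℕ) = (x.1 a : ℕ) + 1 := by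
    conv_lhs => rw [he]
    rw [raise_self]
  omega

lemma low_le (x : T n w) (b : Fin w) (h : CanDown x b) (i : Fin w) :
    (low x b h).1 i ≤ x.1 i := by
  rcases eq_or_ne i b with hi | hi
  · subst hi; rw [Fin.le_def, low_self]; omega
  · rw [low_ne_apply _ _ _ _ hi]

lemma low_ne (x : T n w) (b : Fin w) (h : CanDown x b) : low x b h ≠ x := by
  intro he
  have : (x.1 b : ℕ) - 1 = (x.1 b : ℕ) := by
    conv_lhs => rw [← low_self x b h, he]
  have := h.1
  omega

section Exchange

variable {n w : ℕ} {x : T n w} {a b : Fin w}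

lemma lem_ud_1 (hab : a ≠ b) (h : CanUp x a) (h' : CanDown (raise x a h) b) : CanDown x b := by
  constructor
  · have := h'.1
    rwa [raise_ne_apply x a h b (Ne.symm hab)] at this
  · intro k hk
    have h2 := h'.2 k hk
    rw [raise_ne_apply x a h b (Ne.symm hab)] at h2
    rcases eq_or_ne k a with hka | hka
    · subst hka
      rw [raise_self] at h2
      omega
    · rwa [raise_ne_apply x a h k hka] at h2

lemma lem_ud_2 (hab : a ≠ b) (h : CanUp x a) (h' : CanDown (raise x a h) b)
    (hb : CanDown x b) : CanUp (low x b hb) a := by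
  constructor
  · rw [low_ne_apply x b hb a hab]; exact h.1
  · intro k hk
    rw [low_ne_apply x b hb a hab]
    rcases eq_or_ne k b with hkb | hkb
    · rw [hkb, low_self]
      have h2 := h'.2 a (hkb ▸ hk)
      rw [raise_self, raise_ne_apply x a h b (Ne.symm hab)] at h2
      omega
    · rw [low_ne_apply x b hb k hkb]
      exact h.2 k hk

lemma lem_du_1 (hab : a ≠ b) (h : CanDown x b) (h' : CanUp (low x b h) a) : CanUp x a := by
  constructor
  · have := h'.1
    rwa [low_ne_apply x b h a hab] at this
  · intro k hk
    have h2 := h'.2 k hk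
    rw [low_ne_apply x b h a hab] at h2
    rcases eq_or_ne k b with hkb | hkb
    · subst hkb
      rw [low_self] at h2
      omega
    · rwa [low_ne_apply x b h k hkb] at h2

lemma lem_du_2 (hab : a ≠ b) (h : CanDown x b) (h' : CanUp (low x b h) a)
    (ha : CanUp x a) : CanDown (raise x a ha) b := by
  constructor
  · rw [raise_ne_apply x a ha b (Ne.symm hab)]; exact h.1
  · intro k hk
    rw [raise_ne_apply x a ha b (Ne.symm hab)]
    rcases eq_or_ne k a with hka | hka
    · rw [hka, raise_self]
      have h2 := h'.2 b (hka ▸ hk)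
      rw [low_self, low_ne_apply x b h a hab] at h2
      have := h.1
      omega
    · rw [raise_ne_apply x a ha k hka]
      exact h.2 k hk

lemma lem_eq (hab : a ≠ b) (ha : CanUp x a) (hb : CanDown x b)
    (h1 : CanDown (raise x a ha) b) (h2 : CanUp (low x b hb) a) :
    low (raise x a ha) b h1 = raise (low x b hb) a h2 := by
  apply Subtype.ext
  funext k
  rcases eq_or_ne k a with hka | hka
  · subst hka
    apply Fin.ext
    rw [low_ne_apply _ _ _ _ hab, raise_self, raise_self, low_ne_apply _ _ _ _ hab]
  · rcases eq_or_ne k b with hkb | hkb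
    · subst hkb
      apply Fin.ext
      rw [low_self, raise_ne_apply _ _ _ _ (Ne.symm hab), raise_ne_apply _ _ _ _ (Ne.symm hab),
        low_self]
    · rw [low_ne_apply _ _ _ _ hkb, raise_ne_apply _ _ _ _ hka, raise_ne_apply _ _ _ _ hka,
        low_ne_apply _ _ _ _ hkb]

end Exchange
section Operators

open scoped Classical

variable {n w : ℕ}

noncomputable def Eop (f : T n w → ℚ) : T n w → ℚ := fun x =>
  ∑ a, if h : CanUp x a then
    ((((x.1 a : ℕ) + 1) * (n - 1 - (x.1 a : ℕ)) : ℕ) : ℚ) * f (raise x a h) else 0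

noncomputable def Fop (f : T n w → ℚ) : T n w → ℚ := fun x =>
  ∑ b, if h : CanDown x b then f (low x b h) else 0

lemma Eop_smul (c : ℚ) (f : T n w → ℚ) : Eop (c • f) = c • Eop f := by
  funext x
  simp only [Eop, Pi.smul_apply, smul_eq_mul, Finset.mul_sum]
  apply Finset.sum_congr rfl
  intro a _
  by_cases h : CanUp x a <;> simp [h] <;> ring

lemma Fop_smul (c : ℚ) (f : T n w → ℚ) : Fop (c • f) = c • Fop f := by
  funext x
  simp only [Fop, Pi.smul_apply, smul_eq_mul, Finset.mul_sum]
  apply Finset.sum_congr rfl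
  intro a _
  by_cases h : CanDown x a <;> simp [h]

lemma Eop_add (f g : T n w → ℚ) : Eop (f + g) = Eop f + Eop g := by
  funext x
  simp only [Eop, Pi.add_apply, ← Finset.sum_add_distrib]
  apply Finset.sum_congr rfl
  intro a _
  by_cases h : CanUp x a <;> simp [h] <;> ring

lemma Fop_add (f g : T n w → ℚ) : Fop (f + g) = Fop f + Fop g := by
  funext x
  simp only [Fop, Pi.add_apply, ← Finset.sum_add_distrib]
  apply Finset.sum_congr rfl
  intro a _
  by_cases h : CanDown x a <;> simp [h]

lemma Fop_zero : Fop (0 : T n w → ℚ) = 0 := by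
  funext x; simp [Fop]

lemma Eop_zero : Eop (0 : T n w → ℚ) = 0 := by
  funext x; simp [Eop]

end Operators
section Comm

open scoped Classical

variable {n w : ℕ}

private noncomputable def Gc (x : T n w) (a : Fin w) : ℚ :=
  ((((x.1 a : ℕ) + 1) * (n - 1 - (x.1 a : ℕ)) : ℕ) : ℚ)

private noncomputable def Hc (x : T n w) (b : Fin w) : ℚ :=
  (((x.1 b : ℕ) * (n - (x.1 b : ℕ)) : ℕ) : ℚ)

lemma sum_ite_up (x : T n w) (a : Fin w) :
    (if CanUp x a then Gc x a else 0)
      = Gc x a - ∑ b, (if (x.1 b : ℕ) = (x.1 a : ℕ) + 1 then Gc x a else 0) := by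
  by_cases hex : ∃ b, (x.1 b : ℕ) = (x.1 a : ℕ) + 1
  · obtain ⟨b0, hb0⟩ := hex
    have hsum : ∑ b, (if (x.1 b : ℕ) = (x.1 a : ℕ) + 1 then Gc x a else 0) = Gc x a := by
      rw [Finset.sum_eq_single b0]
      · rw [if_pos hb0]
      · intro b _ hb
        rw [if_neg]
        intro hcon
        exact hb (x.2.injective (Fin.ext (by omega)))
      · intro hb; exact absurd (Finset.mem_univ b0) hb
    have hnot : ¬ CanUp x a := by
      intro hc
      have hlt : a < b0 := by
        have := hb0
        by_contra hab
        push_neg at hab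
        rcases lt_or_eq_of_le hab with h1 | h1
        · have := lt_iff x h1; omega
        · rw [h1] at this; omega
      have := hc.2 b0 hlt
      omega
    rw [if_neg hnot, hsum]
    ring
  · push_neg at hex
    have hsum : ∑ b, (if (x.1 b : ℕ) = (x.1 a : ℕ) + 1 then Gc x a else 0) = 0 := by
      apply Finset.sum_eq_zero
      intro b _
      rw [if_neg (hex b)]
    rw [hsum]
    by_cases hn : (x.1 a : ℕ) + 1 < n
    · have hcu : CanUp x a := by
        refine ⟨hn, fun k hk => ?_⟩
        have h1 := lt_iff x hk
        have h2 := hex k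
        omega
      rw [if_pos hcu]; ring
    · have : Gc x a = 0 := by
        unfold Gc
        have := (x.1 a).isLt
        have : n - 1 - (x.1 a : ℕ) = 0 := by omega
        simp [this]
      rw [this]
      simp
  
lemma sum_ite_down (x : T n w) (b : Fin w) :
    (if CanDown x b then Hc x b else 0)
      = Hc x b - ∑ a, (if (x.1 b : ℕ) = (x.1 a : ℕ) + 1 then Hc x b else 0) := by
  by_cases hex : ∃ a, (x.1 b : ℕ) = (x.1 a : ℕ) + 1
  · obtain ⟨a0, ha0⟩ := hex
    have hsum : ∑ a, (if (x.1 b : ℕ) = (x.1 a : ℕ) + 1 then Hc x b else 0) = Hc x b := by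
      rw [Finset.sum_eq_single a0]
      · rw [if_pos ha0]
      · intro a _ ha
        rw [if_neg]
        intro hcon
        exact ha (x.2.injective (Fin.ext (by omega)))
      · intro ha; exact absurd (Finset.mem_univ a0) ha
    have hnot : ¬ CanDown x b := by
      intro hc
      have hlt : a0 < b := by
        by_contra hab
        push_neg at hab
        rcases lt_or_eq_of_le hab with h1 | h1
        · have := lt_iff x h1; omega
        · rw [h1] at ha0; omega
      have := hc.2 a0 hlt
      omega
    rw [if_neg hnot, hsum]
    ring
  · push_neg at hex
    have hsum : ∑ a, (if (x.1 b : ℕ) = (x.1 a : ℕ) + 1 then Hc x b else 0) = 0 := by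
      apply Finset.sum_eq_zero
      intro a _
      rw [if_neg (hex a)]
    rw [hsum]
    by_cases h0 : 0 < (x.1 b : ℕ)
    · have hcd : CanDown x b := by
        refine ⟨h0, fun k hk => ?_⟩
        have h1 := lt_iff x hk
        have h2 := hex k
        omega
      rw [if_pos hcd]; ring
    · have : Hc x b = 0 := by
        unfold Hc
        have : (x.1 b : ℕ) = 0 := by omega
        simp [this]
      rw [this]
      simp

lemma diag_identity (hw : w ≤ n) (x : T n w) :
    (∑ a, if CanUp x a then Gc x a else 0) - (∑ b, if CanDown x b then Hc x b else 0)
      = ((w * (n - w) : ℕ) : ℚ) - 2 * (rk x : ℚ) := by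
  have h1 : ∀ a, (if CanUp x a then Gc x a else 0)
      = Gc x a - ∑ b, (if (x.1 b : ℕ) = (x.1 a : ℕ) + 1 then Gc x a else 0) := sum_ite_up x
  have h2 : ∀ b, (if CanDown x b then Hc x b else 0)
      = Hc x b - ∑ a, (if (x.1 b : ℕ) = (x.1 a : ℕ) + 1 then Hc x b else 0) := sum_ite_down x
  have hGH : ∀ a b, (if (x.1 b : ℕ) = (x.1 a : ℕ) + 1 then Gc x a else 0)
      = (if (x.1 b : ℕ) = (x.1 a : ℕ) + 1 then Hc x b else 0) := by
    intro a b
    by_cases hab : (x.1 b : ℕ) = (x.1 a : ℕ) + 1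
    · rw [if_pos hab, if_pos hab]
      unfold Gc Hc
      congr 1
      have := (x.1 b).isLt
      have hsub : n - 1 - (x.1 a : ℕ) = n - (x.1 b : ℕ) := by omega
      rw [hab, hsub]
      rw [hab]
    · rw [if_neg hab, if_neg hab]
  have hdouble : ∑ a, ∑ b, (if (x.1 b : ℕ) = (x.1 a : ℕ) + 1 then Gc x a else 0)
      = ∑ b, ∑ a, (if (x.1 b : ℕ) = (x.1 a : ℕ) + 1 then Hc x b else 0) := by
    rw [Finset.sum_comm]
    exact Finset.sum_congr rfl fun b _ => Finset.sum_congr rfl fun a _ => hGH a b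
  have hrk : (rk x : ℚ) = ∑ a : Fin w, (((x.1 a : ℕ) : ℚ) - ((a : ℕ) : ℚ)) := by
    unfold rk
    rw [Nat.cast_sum]
    exact Finset.sum_congr rfl fun a _ => Nat.cast_sub (le_apply x a)
  have key : ∑ a : Fin w, (((n:ℚ) - 1) - 2 * ((a:ℕ):ℚ)) = ((w * (n - w) : ℕ) : ℚ) := by
    rcases Nat.eq_zero_or_pos w with hw0 | hw0
    · subst hw0; simp
    · have hsum2 : (∑ a : Fin w, ((a:ℕ):ℚ)) * 2 = (w:ℚ) * ((w:ℚ) - 1) := by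
        have hn := Finset.sum_range_id_mul_two w
        have hc : ((∑ i ∈ Finset.range w, i : ℕ) : ℚ) * 2 = ((w * (w-1) : ℕ) : ℚ) := by
          exact_mod_cast congrArg (Nat.cast : ℕ → ℚ) hn
        rw [Fin.sum_univ_eq_sum_range (fun i => ((i:ℕ):ℚ)) w, ← Nat.cast_sum]
        rw [hc]
        push_cast [Nat.cast_sub (by omega : 1 ≤ w)]
        ring
      have hc2 : ((w * (n - w) : ℕ) : ℚ) = (w:ℚ) * ((n:ℚ) - (w:ℚ)) := by
        push_cast [Nat.cast_sub hw]
        ring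
      rw [hc2, Finset.sum_sub_distrib, Finset.sum_const, Finset.card_univ, Fintype.card_fin,
        ← Finset.mul_sum, nsmul_eq_mul]
      nlinarith [hsum2]
  calc (∑ a, if CanUp x a then Gc x a else 0) - (∑ b, if CanDown x b then Hc x b else 0)
      = (∑ a, Gc x a) - (∑ b, Hc x b) := by
        simp only [h1, h2, Finset.sum_sub_distrib]
        rw [hdouble]
        ring
    _ = ∑ a, (Gc x a - Hc x a) := by rw [Finset.sum_sub_distrib]
    _ = ∑ a : Fin w, ((n : ℚ) - 1 - 2 * ((x.1 a : ℕ) : ℚ)) := by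
        apply Finset.sum_congr rfl
        intro a _
        unfold Gc Hc
        have hlt := (x.1 a).isLt
        push_cast [Nat.sub_sub, Nat.cast_sub (by omega : 1 + (x.1 a : ℕ) ≤ n),
          Nat.cast_sub (by omega : (x.1 a : ℕ) ≤ n)]
        ring
    _ = (∑ a : Fin w, (((n:ℚ) - 1) - 2 * ((a:ℕ):ℚ)))
          - 2 * ∑ a : Fin w, (((x.1 a : ℕ) : ℚ) - ((a : ℕ) : ℚ)) := by
        rw [Finset.mul_sum, ← Finset.sum_sub_distrib]
        exact Finset.sum_congr rfl fun a _ => by ring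
    _ = ((w * (n - w) : ℕ) : ℚ) - 2 * (rk x : ℚ) := by rw [key, hrk]

private noncomputable def Pterm (f : T n w → ℚ) (x : T n w) (a b : Fin w) : ℚ :=
  if h : CanUp x a then
    (if h' : CanDown (raise x a h) b then Gc x a * f (low (raise x a h) b h') else 0)
  else 0

private noncomputable def Qterm (f : T n w → ℚ) (x : T n w) (a b : Fin w) : ℚ :=
  if h : CanDown x b then
    (if h' : CanUp (low x b h) a then
      Gc (low x b h) a * f (raise (low x b h) a h') else 0)
  else 0

lemma Pterm_eq_Qterm (f : T n w → ℚ) (x : T n w) (a b : Fin w) (hab : a ≠ b) :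
    Pterm f x a b = Qterm f x a b := by
  unfold Pterm Qterm
  by_cases h : CanUp x a
  · by_cases h' : CanDown (raise x a h) b
    · have hb : CanDown x b := lem_ud_1 hab h h'
      have ha2 : CanUp (low x b hb) a := lem_ud_2 hab h h' hb
      rw [dif_pos h, dif_pos h', dif_pos hb, dif_pos ha2]
      have hcoef : Gc (low x b hb) a = Gc x a := by
        unfold Gc
        rw [low_ne_apply x b hb a hab]
      rw [hcoef, lem_eq hab h hb h' ha2]
    · rw [dif_pos h, dif_neg h']
      by_cases hb : CanDown x b
      · by_cases ha2 : CanUp (low x b hb) a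
        · exact absurd (lem_du_2 hab hb ha2 h) h'
        · rw [dif_pos hb, dif_neg ha2]
      · rw [dif_neg hb]
  · rw [dif_neg h]
    by_cases hb : CanDown x b
    · by_cases ha2 : CanUp (low x b hb) a
      · exact absurd (lem_du_1 hab hb ha2) h
      · rw [dif_pos hb, dif_neg ha2]
    · rw [dif_neg hb]

lemma comm_op (hw : w ≤ n) (f : T n w → ℚ) (x : T n w) :
    Eop (Fop f) x - Fop (Eop f) x = (((w * (n - w) : ℕ) : ℚ) - 2 * (rk x : ℚ)) * f x := by
  have hEF : Eop (Fop f) x = ∑ a, ∑ b, Pterm f x a b := by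
    unfold Eop
    apply Finset.sum_congr rfl
    intro a _
    by_cases h : CanUp x a
    · rw [dif_pos h]
      unfold Fop Pterm
      rw [Finset.mul_sum]
      apply Finset.sum_congr rfl
      intro b _
      rw [dif_pos h]
      by_cases h' : CanDown (raise x a h) b
      · rw [dif_pos h', dif_pos h']
        rfl
      · rw [dif_neg h', dif_neg h', mul_zero]
    · rw [dif_neg h]
      unfold Pterm
      rw [Finset.sum_eq_zero]
      intro b _
      rw [dif_neg h]
  have hFE : Fop (Eop f) x = ∑ a, ∑ b, Qterm f x a b := by
    rw [Finset.sum_comm]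
    unfold Fop
    apply Finset.sum_congr rfl
    intro b _
    by_cases h : CanDown x b
    · rw [dif_pos h]
      unfold Eop Qterm
      apply Finset.sum_congr rfl
      intro a _
      rw [dif_pos h]
      by_cases h' : CanUp (low x b h) a
      · rw [dif_pos h', dif_pos h']
        rfl
      · rw [dif_neg h', dif_neg h']
    · rw [dif_neg h]
      unfold Qterm
      rw [Finset.sum_eq_zero]
      intro a _
      rw [dif_neg h]
  rw [hEF, hFE, ← Finset.sum_sub_distrib]
  have hdiag : ∀ a : Fin w, (∑ b, Pterm f x a b) - (∑ b, Qterm f x a b)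
      = ((if CanUp x a then Gc x a else 0) - (if CanDown x a then Hc x a else 0)) * f x := by
    intro a
    have hP : ∑ b, (Pterm f x a b - Qterm f x a b) = Pterm f x a a - Qterm f x a a := by
      apply Finset.sum_eq_single a
      · intro b _ hb
        rw [Pterm_eq_Qterm f x a b (Ne.symm hb)]
        ring
      · intro ha; exact absurd (Finset.mem_univ a) ha
    rw [← Finset.sum_sub_distrib, hP]
    have hPaa : Pterm f x a a = (if CanUp x a then Gc x a else 0) * f x := by
      unfold Pterm
      by_cases h : CanUp x a
      · rw [dif_pos h, if_pos h, dif_pos (canDown_raise x a h), low_raise x a h]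
      · rw [dif_neg h, if_neg h, zero_mul]
    have hQaa : Qterm f x a a = (if CanDown x a then Hc x a else 0) * f x := by
      unfold Qterm
      by_cases h : CanDown x a
      · rw [dif_pos h, if_pos h, dif_pos (canUp_low x a h), raise_low x a h]
        have : Gc (low x a h) a = Hc x a := by
          unfold Gc Hc
          rw [low_self]
          have h1 := h.1
          have h2 := (x.1 a).isLt
          have e1 : (x.1 a : ℕ) - 1 + 1 = (x.1 a : ℕ) := by omega
          have e2 : n - 1 - ((x.1 a : ℕ) - 1) = n - (x.1 a : ℕ) := by omega
          rw [e1, e2]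
        rw [this]
      · rw [dif_neg h, if_neg h, zero_mul]
    rw [hPaa, hQaa]
    ring
  calc ∑ a, ((∑ b, Pterm f x a b) - (∑ b, Qterm f x a b))
      = ∑ a, ((if CanUp x a then Gc x a else 0) - (if CanDown x a then Hc x a else 0)) * f x := by
        exact Finset.sum_congr rfl fun a _ => hdiag a
    _ = ((∑ a, if CanUp x a then Gc x a else 0) - (∑ a, if CanDown x a then Hc x a else 0)) * f x := by
        rw [← Finset.sum_mul, Finset.sum_sub_distrib]
    _ = (((w * (n - w) : ℕ) : ℚ) - 2 * (rk x : ℚ)) * f x := by rw [diag_identity hw x]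

end Comm
section SL2

variable {α : Type*} [Fintype α]

def supON (rk : α → ℕ) (k : ℕ) (f : α → ℚ) : Prop := ∀ x, rk x ≠ k → f x = 0

theorem sl2_inj (rk : α → ℕ) (N : ℕ) (E F : (α → ℚ) → (α → ℚ))
    (hEsmul : ∀ (c : ℚ) (f : α → ℚ), E (c • f) = c • E f)
    (hE : ∀ (k : ℕ) (f : α → ℚ), supON rk (k + 1) f → supON rk k (E f))
    (hE0 : ∀ f : α → ℚ, supON rk 0 f → E f = 0)
    (hF0 : F 0 = 0)
    (hcomm : ∀ (f : α → ℚ) (x : α), E (F f) x - F (E f) x = ((N : ℚ) - 2 * (rk x : ℚ)) * f x)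
    (k : ℕ) (hk : 2 * k < N) (v : α → ℚ) (hv : supON rk k v) (hFv : F v = 0) : v = 0 := by
  have hE0' : E (0 : α → ℚ) = 0 := by
    have := hEsmul 0 0
    simpa using this
  set u : ℕ → (α → ℚ) := fun r => E^[r] v with hu
  have hu_succ : ∀ r, u (r + 1) = E (u r) := by
    intro r
    simp [hu, Function.iterate_succ_apply']
  have h_sup : ∀ r, r ≤ k → supON rk (k - r) (u r) := by
    intro r
    induction r with
    | zero => intro _; simpa [hu] using hv
    | succ s ih =>
        intro hs
        rw [hu_succ]
        have h1 : supON rk (k - s) (u s) := ih (by omega)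
        have h2 : k - s = (k - (s + 1)) + 1 := by omega
        rw [h2] at h1
        exact hE _ _ h1
  have hukk : u (k + 1) = 0 := by
    rw [hu_succ]
    apply hE0
    simpa using h_sup k (le_refl k)
  have key : ∀ r, r ≤ k →
      F (u (r + 1)) = (-((r : ℚ) + 1) * ((N : ℚ) - 2 * (k : ℚ) + (r : ℚ))) • u r := by
    intro r
    induction r with
    | zero =>
        intro _
        funext y
        have hc := hcomm v y
        rw [hFv, hE0'] at hc
        simp only [Pi.zero_apply] at hc
        have hFEv : F (E v) y = -(((N : ℚ) - 2 * (rk y : ℚ)) * v y) := by linarith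
        show F (E v) y = _
        rw [hFEv]
        by_cases hy : v y = 0
        · simp [hy, hu]
        · have : rk y = k := by
            by_contra hne
            exact hy (hv y hne)
          rw [this]
          simp [hu]
          ring
    | succ s ih =>
        intro hs
        have ihs := ih (by omega)
        funext y
        have hc := hcomm (u (s + 1)) y
        have hEFu : E (F (u (s + 1))) = (-((s : ℚ) + 1) * ((N : ℚ) - 2 * (k : ℚ) + (s : ℚ))) • u (s + 1) := by
          rw [ihs, hEsmul, ← hu_succ]
        rw [hEFu] at hc
        have hsup := h_sup (s + 1) hs
        rw [hu_succ (s+1)]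
        by_cases hy : u (s + 1) y = 0
        · have h1 : F (E (u (s + 1))) y = 0 := by
            simp only [Pi.smul_apply, smul_eq_mul, hy, mul_zero] at hc
            linarith
          rw [h1]
          simp [hy]
        · have hrky : rk y = k - (s + 1) := by
            by_contra hne
            exact hy (hsup y hne)
          have hcast : ((k - (s + 1) : ℕ) : ℚ) = (k : ℚ) - (s : ℚ) - 1 := by
            have : ((k - (s+1) : ℕ) : ℚ) = (k : ℚ) - ((s + 1 : ℕ) : ℚ) := Nat.cast_sub hs
            rw [this]
            push_cast
            ring
          simp only [Pi.smul_apply, smul_eq_mul] at hc ⊢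
          rw [hrky, hcast] at hc
          push_cast at hc ⊢
          ring_nf at hc ⊢
          linarith
  have hzero : ∀ t, t ≤ k + 1 → u (k + 1 - t) = 0 := by
    intro t
    induction t with
    | zero => intro _; simpa using hukk
    | succ s ih =>
        intro hs
        have h1 : u (k + 1 - s) = 0 := ih (by omega)
        have hsk : k - s ≤ k := by omega
        have h2 : k + 1 - s = (k - s) + 1 := by omega
        rw [h2] at h1
        have h3 := key (k - s) hsk
        rw [h1, hF0] at h3
        have hc : (-(((k - s : ℕ) : ℚ) + 1) * ((N : ℚ) - 2 * (k : ℚ) + ((k - s : ℕ) : ℚ))) ≠ 0 := by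
      
      
        
        
        
        
        
          have hpos1 : (0:ℚ) < ((k - s : ℕ) : ℚ) + 1 := by positivity
          have hpos2 : (0:ℚ) < (N : ℚ) - 2 * (k : ℚ) + ((k - s : ℕ) : ℚ) := by
            have hNk : (2 * k + 1 : ℕ) ≤ N := hk
            have : ((2 * k + 1 : ℕ) : ℚ) ≤ (N : ℚ) := Nat.cast_le.mpr hNk
            push_cast at this
            have : (0:ℚ) ≤ ((k - s : ℕ) : ℚ) := Nat.cast_nonneg _
            push_cast at *
            nlinarith
          intro hcon
          rw [neg_mul] at hcon
          have := neg_eq_zero.mp hcon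
          have := mul_eq_zero.mp this
          rcases this with h | h
          · linarith
          · linarith
        have h4 : u (k - s) = 0 := by
          have := h3.symm
          rw [eq_comm] at this
          have hsmul : (-(((k - s : ℕ):ℚ) + 1) * ((N : ℚ) - 2 * (k:ℚ) + ((k - s : ℕ):ℚ))) • u (k - s) = 0 := by
            rw [← h3]
          exact (smul_eq_zero.mp hsmul).resolve_left hc
        have h5 : k + 1 - (s + 1) = k - s := by omega
        rw [h5, h4]
  have := hzero (k + 1) (le_refl _)
  simpa [hu] using this

end SL2
section Inj

variable {n w : ℕ}

lemma supON_Eop (k : ℕ) (f : T n w → ℚ) (h : supON rk (k + 1) f) : supON rk k (Eop f) := by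
  intro x hx
  unfold Eop
  apply Finset.sum_eq_zero
  intro a _
  by_cases hc : CanUp x a
  · rw [dif_pos hc]
    have : f (raise x a hc) = 0 := by
      apply h
      rw [rk_raise]
      omega
    rw [this, mul_zero]
  · rw [dif_neg hc]

lemma supON_Eop0 (f : T n w → ℚ) (h : supON rk 0 f) : Eop f = 0 := by
  funext x
  show Eop f x = 0
  unfold Eop
  apply Finset.sum_eq_zero
  intro a _
  by_cases hc : CanUp x a
  · rw [dif_pos hc]
    have : f (raise x a hc) = 0 := by
      apply h
      rw [rk_raise]
      omega
    rw [this, mul_zero]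
  · rw [dif_neg hc]

lemma Fop_inj (hw : w ≤ n) (k : ℕ) (hk : 2 * k < w * (n - w)) (v : T n w → ℚ)
    (hv : supON rk k v) (hFv : Fop v = 0) : v = 0 := by
  exact sl2_inj rk (w * (n - w)) Eop Fop Eop_smul supON_Eop supON_Eop0 Fop_zero
    (comm_op hw) k hk v hv hFv

lemma supON_Fop' (hw : w ≤ n) (k : ℕ) (f : T n w → ℚ)
    (h : supON (fun x => w * (n - w) - rk x) (k + 1) f) :
    supON (fun x => w * (n - w) - rk x) k (Fop f) := by
  intro x hx
  unfold Fop
  apply Finset.sum_eq_zero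
  intro b _
  by_cases hc : CanDown x b
  · rw [dif_pos hc]
    apply h
    have h1 := rk_low x b hc
    have h2 := rk_le hw x
    have hx' : w * (n - w) - rk x ≠ k := hx
    show w * (n - w) - rk (low x b hc) ≠ k + 1
    omega
  · rw [dif_neg hc]

lemma supON_Fop0' (hw : w ≤ n) (f : T n w → ℚ)
    (h : supON (fun x => w * (n - w) - rk x) 0 f) : Fop f = 0 := by
  funext x
  show Fop f x = 0
  unfold Fop
  apply Finset.sum_eq_zero
  intro b _
  by_cases hc : CanDown x b
  · rw [dif_pos hc]
    apply h
    have h1 := rk_low x b hc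
    have h2 := rk_le hw (low x b hc)
    have h3 := rk_le hw x
    show w * (n - w) - rk (low x b hc) ≠ 0
    omega
  · rw [dif_neg hc]

lemma comm_op' (hw : w ≤ n) (f : T n w → ℚ) (x : T n w) :
    Fop (Eop f) x - Eop (Fop f) x
      = (((w * (n - w) : ℕ) : ℚ) - 2 * ((w * (n - w) - rk x : ℕ) : ℚ)) * f x := by
  have h1 := comm_op hw f x
  have h2 := rk_le hw x
  have h3 : ((w * (n - w) - rk x : ℕ) : ℚ) = ((w * (n - w) : ℕ) : ℚ) - (rk x : ℚ) :=
    Nat.cast_sub h2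
  rw [h3]
  linarith

lemma Eop_inj (hw : w ≤ n) (k : ℕ) (hk : w * (n - w) < 2 * k) (v : T n w → ℚ)
    (hv : supON rk k v) (hEv : Eop v = 0) : v = 0 := by
  by_cases hkN : k ≤ w * (n - w)
  · apply sl2_inj (fun x => w * (n - w) - rk x) (w * (n - w)) Fop Eop Fop_smul
      (supON_Fop' hw) (supON_Fop0' hw) Eop_zero (comm_op' hw) (w * (n - w) - k)
      (by omega) v _ hEv
    intro x hx
    apply hv
    have := rk_le hw x
    have hx' : w * (n - w) - rk x ≠ w * (n - w) - k := hx
    omega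
  · funext x
    show v x = 0
    apply hv
    have := rk_le hw x
    omega

end Inj
section Dim

open scoped Classical

lemma card_le_of_linear {α : Type*} [Fintype α] [DecidableEq α]
    (O : (α → ℚ) →ₗ[ℚ] (α → ℚ)) (A B : Finset α)
    (hsupp : ∀ x ∈ A, ∀ y, O (Pi.single x 1) y ≠ 0 → y ∈ B)
    (hinj : ∀ f : α → ℚ, (∀ t, t ∉ A → f t = 0) → O f = 0 → f = 0) :
    A.card ≤ B.card := by
  have hext_lin : ∀ (c : {x // x ∈ A} → ℚ),
      (fun t => if h : t ∈ A then c ⟨t, h⟩ else 0) = ∑ x : {x // x ∈ A}, c x • (Pi.single (x : α) (1:ℚ) : α → ℚ) := by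
    intro c
    funext t
    rw [Finset.sum_apply]
    by_cases ht : t ∈ A
    · rw [dif_pos ht]
      rw [Finset.sum_eq_single (⟨t, ht⟩ : {x // x ∈ A})]
      · simp [Pi.single_apply]
      · intro x _ hx
        have : t ≠ (x : α) := by
          intro hh
          exact hx (Subtype.ext hh.symm)
        simp [Pi.single_apply, this]
      · intro hh; exact absurd (Finset.mem_univ _) hh
    · rw [dif_neg ht]
      symm
      apply Finset.sum_eq_zero
      intro x _
      have : t ≠ (x : α) := by
        intro hh
        rw [hh] at ht
        exact ht x.2
      simp [Pi.single_apply, this]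
  let ext : ({x // x ∈ A} → ℚ) →ₗ[ℚ] (α → ℚ) :=
    { toFun := fun c => fun t => if h : t ∈ A then c ⟨t, h⟩ else 0
      map_add' := by
        intro c d
        funext t
        by_cases ht : t ∈ A <;> simp [ht]
      map_smul' := by
        intro m c
        funext t
        by_cases ht : t ∈ A <;> simp [ht] }
  let resB : (α → ℚ) →ₗ[ℚ] ({y // y ∈ B} → ℚ) := LinearMap.funLeft ℚ ℚ Subtype.val
  have hker : ∀ c, (resB ∘ₗ O ∘ₗ ext) c = 0 → c = 0 := by
    intro c hc
    set f : α → ℚ := ext c with hf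
    have hfA : ∀ t, t ∉ A → f t = 0 := by
      intro t ht
      show (if h : t ∈ A then c ⟨t, h⟩ else 0) = 0
      rw [dif_neg ht]
    have hOf : O f = 0 := by
      funext y
      by_cases hy : y ∈ B
      · have := congrFun hc ⟨y, hy⟩
        exact this
      · have hsum : f = ∑ x : {x // x ∈ A}, c x • (Pi.single (x : α) (1:ℚ) : α → ℚ) := hext_lin c
        rw [hsum, map_sum]
        rw [Finset.sum_apply]
        apply Finset.sum_eq_zero
        intro x _
        rw [map_smul]
        simp only [Pi.smul_apply, smul_eq_mul]
        by_cases hz : O (Pi.single (x : α) 1) y = 0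
        · rw [hz, mul_zero]
        · exact absurd (hsupp (x : α) x.2 y hz) hy
    have hf0 : f = 0 := hinj f hfA hOf
    funext x
    have := congrFun hf0 (x : α)
    show c x = 0
    have hcx : c x = f (x : α) := by
      show c x = (if h : (x : α) ∈ A then c ⟨(x : α), h⟩ else 0)
      rw [dif_pos x.2]
    rw [hcx]
    exact this
  have hinj' : Function.Injective (resB ∘ₗ O ∘ₗ ext) :=
    LinearMap.ker_eq_bot.mp (LinearMap.ker_eq_bot'.mpr hker)
  calc A.card = Fintype.card {x // x ∈ A} := (Fintype.card_coe A).symm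
    _ = Module.finrank ℚ ({x // x ∈ A} → ℚ) := (Module.finrank_fintype_fun_eq_card ℚ).symm
    _ ≤ Module.finrank ℚ ({y // y ∈ B} → ℚ) := LinearMap.finrank_le_finrank_of_injective hinj'
    _ = Fintype.card {y // y ∈ B} := Module.finrank_fintype_fun_eq_card ℚ
    _ = B.card := Fintype.card_coe B

end Dim
section Matching

open scoped Classical

variable {n w : ℕ}

noncomputable def FopL : (T n w → ℚ) →ₗ[ℚ] (T n w → ℚ) :=
  { toFun := Fop
    map_add' := Fop_add
    map_smul' := by intro c f; simp only [RingHom.id_apply]; exact Fop_smul c f }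

noncomputable def EopL : (T n w → ℚ) →ₗ[ℚ] (T n w → ℚ) :=
  { toFun := Eop
    map_add' := Eop_add
    map_smul' := by intro c f; simp only [RingHom.id_apply]; exact Eop_smul c f }

lemma exists_matching_up (hw : w ≤ n) (k : ℕ) (hk : 2 * k < w * (n - w)) :
    ∃ g : T n w → T n w, Set.InjOn g {x | rk x = k} ∧
      ∀ x, rk x = k → rk (g x) = k + 1 ∧ (∀ i, x.1 i ≤ (g x).1 i) ∧ x ≠ g x := by
  set A : Finset (T n w) := Finset.univ.filter (fun x => rk x = k) with hA
  set t : {x // x ∈ A} → Finset (T n w) :=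
    fun x => Finset.univ.filter (fun y => ∃ (a : Fin w) (h : CanUp x.1 a), raise x.1 a h = y) with ht
  have hall : ∀ s : Finset {x // x ∈ A}, s.card ≤ (s.biUnion t).card := by
    intro s
    have hcard : s.card = (s.image Subtype.val).card :=
      (Finset.card_image_of_injective s Subtype.val_injective).symm
    rw [hcard]
    apply card_le_of_linear (FopL : (T n w → ℚ) →ₗ[ℚ] (T n w → ℚ)) (s.image Subtype.val) (s.biUnion t)
    · intro x hx y hy
      have : Fop (Pi.single x (1:ℚ)) y ≠ 0 := hy
      unfold Fop at this
      obtain ⟨b, _, hb⟩ := Finset.exists_ne_zero_of_sum_ne_zero this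
      rw [Finset.mem_image] at hx
      obtain ⟨z, hz, hzx⟩ := hx
      rw [Finset.mem_biUnion]
      refine ⟨z, hz, ?_⟩
      by_cases hc : CanDown y b
      · rw [dif_pos hc] at hb
        have hlow : low y b hc = x := by
          by_contra hne
          rw [Pi.single_apply, if_neg hne] at hb
          exact hb rfl
        rw [ht]
        simp only [Finset.mem_filter, Finset.mem_univ, true_and]
        have hzl : (z : T n w) = low y b hc := by rw [hzx, hlow]
        rw [hzl]
        exact ⟨b, canUp_low y b hc, raise_low y b hc _⟩
      · rw [dif_neg hc] at hb
        exact absurd rfl hb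
    · intro f hfA hOf
      apply Fop_inj hw k hk f _ hOf
      intro x hx
      apply hfA
      intro hmem
      rw [Finset.mem_image] at hmem
      obtain ⟨z, hz, hzx⟩ := hmem
      have hmm2 : rk (z : T n w) = k := (Finset.mem_filter.mp z.2).2
      exact hx (hzx ▸ hmm2)
  obtain ⟨Ff, hFinj, hFmem⟩ := (Finset.all_card_le_biUnion_card_iff_exists_injective t).mp hall
  refine ⟨fun x => if h : rk x = k then Ff ⟨x, by rw [hA]; simp [h]⟩ else x, ?_, ?_⟩
  · intro x hx y hy hxy
    simp only [Set.mem_setOf_eq] at hx hy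
    simp only [dif_pos hx, dif_pos hy] at hxy
    have := hFinj hxy
    exact congrArg Subtype.val this
  · intro x hx
    simp only [dif_pos hx]
    have hmem := hFmem ⟨x, by rw [hA]; simp [hx]⟩
    rw [ht] at hmem
    simp only [Finset.mem_filter, Finset.mem_univ, true_and] at hmem
    obtain ⟨a, h, hra⟩ := hmem
    refine ⟨?_, ?_, ?_⟩
    · rw [← hra, rk_raise, hx]
    · intro i; rw [← hra]; exact raise_le x a h i
    · rw [← hra]; exact raise_ne x a h

lemma exists_matching_down (hw : w ≤ n) (k : ℕ) (hk : w * (n - w) < 2 * k) :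
    ∃ g : T n w → T n w, Set.InjOn g {x | rk x = k} ∧
      ∀ x, rk x = k → rk (g x) + 1 = k ∧ (∀ i, (g x).1 i ≤ x.1 i) ∧ x ≠ g x := by
  set A : Finset (T n w) := Finset.univ.filter (fun x => rk x = k) with hA
  set t : {x // x ∈ A} → Finset (T n w) :=
    fun x => Finset.univ.filter (fun y => ∃ (b : Fin w) (h : CanDown x.1 b), low x.1 b h = y) with ht
  have hall : ∀ s : Finset {x // x ∈ A}, s.card ≤ (s.biUnion t).card := by
    intro s
    have hcard : s.card = (s.image Subtype.val).card :=
      (Finset.card_image_of_injective s Subtype.val_injective).symm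
    rw [hcard]
    apply card_le_of_linear (EopL : (T n w → ℚ) →ₗ[ℚ] (T n w → ℚ)) (s.image Subtype.val) (s.biUnion t)
    · intro x hx y hy
      have : Eop (Pi.single x (1:ℚ)) y ≠ 0 := hy
      unfold Eop at this
      obtain ⟨a, _, ha⟩ := Finset.exists_ne_zero_of_sum_ne_zero this
      rw [Finset.mem_image] at hx
      obtain ⟨z, hz, hzx⟩ := hx
      rw [Finset.mem_biUnion]
      refine ⟨z, hz, ?_⟩
      by_cases hc : CanUp y a
      · rw [dif_pos hc] at ha
        have hraise : raise y a hc = x := by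
          by_contra hne
          rw [Pi.single_apply, if_neg hne, mul_zero] at ha
          exact ha rfl
        rw [ht]
        simp only [Finset.mem_filter, Finset.mem_univ, true_and]
        have hzl : (z : T n w) = raise y a hc := by rw [hzx, hraise]
        rw [hzl]
        exact ⟨a, canDown_raise y a hc, low_raise y a hc _⟩
      · rw [dif_neg hc] at ha
        exact absurd rfl ha
    · intro f hfA hOf
      apply Eop_inj hw k hk f _ hOf
      intro x hx
      apply hfA
      intro hmem
      rw [Finset.mem_image] at hmem
      obtain ⟨z, hz, hzx⟩ := hmem
      have hmm2 : rk (z : T n w) = k := (Finset.mem_filter.mp z.2).2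
      exact hx (hzx ▸ hmm2)
  obtain ⟨Ff, hFinj, hFmem⟩ := (Finset.all_card_le_biUnion_card_iff_exists_injective t).mp hall
  refine ⟨fun x => if h : rk x = k then Ff ⟨x, by rw [hA]; simp [h]⟩ else x, ?_, ?_⟩
  · intro x hx y hy hxy
    simp only [Set.mem_setOf_eq] at hx hy
    simp only [dif_pos hx, dif_pos hy] at hxy
    have := hFinj hxy
    exact congrArg Subtype.val this
  · intro x hx
    simp only [dif_pos hx]
    have hmem := hFmem ⟨x, by rw [hA]; simp [hx]⟩
    rw [ht] at hmem
    simp only [Finset.mem_filter, Finset.mem_univ, true_and] at hmem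
    obtain ⟨b, h, hlb⟩ := hmem
    refine ⟨?_, ?_, ?_⟩
    · rw [← hlb, rk_low, hx]
    · intro i; rw [← hlb]; exact low_le x b h i
    · rw [← hlb]; exact (low_ne x b h).symm

end Matching
section Step

open scoped Classical

variable {n w : ℕ}

noncomputable def upFn (hw : w ≤ n) (k : ℕ) : T n w → T n w :=
  if h : 2 * k < w * (n - w) then (exists_matching_up hw k h).choose else id

noncomputable def downFn (hw : w ≤ n) (k : ℕ) : T n w → T n w :=
  if h : w * (n - w) < 2 * k then (exists_matching_down hw k h).choose else id

noncomputable def stepF (hw : w ≤ n) : T n w → T n w := fun x =>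
  if rk x < w * (n - w) / 2 then upFn hw (rk x) x
  else if w * (n - w) / 2 < rk x then downFn hw (rk x) x else x

lemma stepF_lt (hw : w ≤ n) (x : T n w) (h : rk x < w * (n - w) / 2) :
    rk (stepF hw x) = rk x + 1 ∧ (∀ i, x.1 i ≤ (stepF hw x).1 i) := by
  have h2 : 2 * rk x < w * (n - w) := by omega
  have hs : stepF hw x = (exists_matching_up hw (rk x) h2).choose x := by
    unfold stepF upFn
    rw [if_pos h, dif_pos h2]
  obtain ⟨hinj, hspec⟩ := (exists_matching_up hw (rk x) h2).choose_spec
  obtain ⟨h1, h2', _⟩ := hspec x rfl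
  rw [hs]
  exact ⟨h1, h2'⟩

lemma stepF_lt_inj (hw : w ≤ n) (x y : T n w) (hxy : rk x = rk y)
    (h : rk x < w * (n - w) / 2) (he : stepF hw x = stepF hw y) : x = y := by
  have h2 : 2 * rk x < w * (n - w) := by omega
  have hs : stepF hw x = (exists_matching_up hw (rk x) h2).choose x := by
    unfold stepF upFn
    rw [if_pos h, dif_pos h2]
  have hsy : stepF hw y = (exists_matching_up hw (rk x) h2).choose y := by
    unfold stepF upFn
    rw [if_pos (hxy ▸ h), ← hxy, dif_pos h2]
  obtain ⟨hinj, hspec⟩ := (exists_matching_up hw (rk x) h2).choose_spec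
  rw [hs, hsy] at he
  exact hinj rfl hxy.symm he

lemma stepF_gt (hw : w ≤ n) (x : T n w) (h : w * (n - w) / 2 < rk x) :
    rk (stepF hw x) + 1 = rk x ∧ (∀ i, (stepF hw x).1 i ≤ x.1 i) := by
  have h2 : w * (n - w) < 2 * rk x := by
    have := rk_le hw x
    omega
  have hs : stepF hw x = (exists_matching_down hw (rk x) h2).choose x := by
    unfold stepF downFn
    rw [if_neg (by omega), if_pos h, dif_pos h2]
  obtain ⟨hinj, hspec⟩ := (exists_matching_down hw (rk x) h2).choose_spec
  obtain ⟨h1, h2', _⟩ := hspec x rfl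
  rw [hs]
  exact ⟨h1, h2'⟩

lemma stepF_gt_inj (hw : w ≤ n) (x y : T n w) (hxy : rk x = rk y)
    (h : w * (n - w) / 2 < rk x) (he : stepF hw x = stepF hw y) : x = y := by
  have h2 : w * (n - w) < 2 * rk x := by
    have := rk_le hw x
    omega
  have hs : stepF hw x = (exists_matching_down hw (rk x) h2).choose x := by
    unfold stepF downFn
    rw [if_neg (by omega), if_pos h, dif_pos h2]
  have hsy : stepF hw y = (exists_matching_down hw (rk x) h2).choose y := by
    unfold stepF downFn
    rw [if_neg (by omega : ¬ rk y < w * (n - w) / 2), if_pos (hxy ▸ h), ← hxy, dif_pos h2]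
  obtain ⟨hinj, hspec⟩ := (exists_matching_down hw (rk x) h2).choose_spec
  rw [hs, hsy] at he
  exact hinj rfl hxy.symm he

lemma stepF_eq (hw : w ≤ n) (x : T n w) (h : rk x = w * (n - w) / 2) :
    stepF hw x = x := by
  unfold stepF
  rw [if_neg (by omega), if_neg (by omega)]

lemma iter_low (hw : w ≤ n) (t : ℕ) (x : T n w) (h : rk x ≤ w * (n - w) / 2) :
    rk ((stepF hw)^[t] x) = min (rk x + t) (w * (n - w) / 2) ∧
      (∀ i, x.1 i ≤ ((stepF hw)^[t] x).1 i) := by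
  induction t with
  | zero => simp; omega
  | succ s ih =>
      obtain ⟨ih1, ih2⟩ := ih
      rw [Function.iterate_succ_apply']
      set z := (stepF hw)^[s] x with hz
      by_cases hzm : rk z < w * (n - w) / 2
      · obtain ⟨a1, a2⟩ := stepF_lt hw z hzm
        constructor
        · rw [a1, ih1]; omega
        · intro i; exact le_trans (ih2 i) (a2 i)
      · have hzeq : rk z = w * (n - w) / 2 := by omega
        rw [stepF_eq hw z hzeq]
        constructor
        · rw [ih1] at hzeq ⊢; omega
        · exact ih2
  
lemma iter_high (hw : w ≤ n) (t : ℕ) (x : T n w) (h : w * (n - w) / 2 ≤ rk x) :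
    rk ((stepF hw)^[t] x) = max (rk x - t) (w * (n - w) / 2) ∧
      (∀ i, ((stepF hw)^[t] x).1 i ≤ x.1 i) := by
  induction t with
  | zero => simp; omega
  | succ s ih =>
      obtain ⟨ih1, ih2⟩ := ih
      rw [Function.iterate_succ_apply']
      set z := (stepF hw)^[s] x with hz
      by_cases hzm : w * (n - w) / 2 < rk z
      · obtain ⟨a1, a2⟩ := stepF_gt hw z hzm
        constructor
        · rw [ih1] at a1; omega
        · intro i; exact le_trans (a2 i) (ih2 i)
      · have hzeq : rk z = w * (n - w) / 2 := by
          rw [ih1]; rw [ih1] at hzm; omega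
        rw [stepF_eq hw z hzeq]
        constructor
        · rw [ih1] at hzeq ⊢; omega
        · exact ih2

lemma iter_inj_low (hw : w ≤ n) (t : ℕ) :
    ∀ x y : T n w, rk x = rk y → rk x ≤ w * (n - w) / 2 →
      (stepF hw)^[t] x = (stepF hw)^[t] y → x = y := by
  induction t with
  | zero => intro x y _ _ h; simpa using h
  | succ s ih =>
      intro x y hxy hxm he
      rw [Function.iterate_succ_apply, Function.iterate_succ_apply] at he
      by_cases hlt : rk x < w * (n - w) / 2
      · have h1 := (stepF_lt hw x hlt).1
        have h2 := (stepF_lt hw y (hxy ▸ hlt)).1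
        have := ih (stepF hw x) (stepF hw y) (by omega) (by omega) he
        exact stepF_lt_inj hw x y hxy hlt this
      · have hxem : rk x = w * (n - w) / 2 := by omega
        rw [stepF_eq hw x hxem, stepF_eq hw y (hxy ▸ hxem)] at he
        exact ih x y hxy hxm he

lemma iter_inj_high (hw : w ≤ n) (t : ℕ) :
    ∀ x y : T n w, rk x = rk y → w * (n - w) / 2 ≤ rk x →
      (stepF hw)^[t] x = (stepF hw)^[t] y → x = y := by
  induction t with
  | zero => intro x y _ _ h; simpa using h
  | succ s ih =>
      intro x y hxy hxm he
      rw [Function.iterate_succ_apply, Function.iterate_succ_apply] at he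
      by_cases hgt : w * (n - w) / 2 < rk x
      · have h1 := (stepF_gt hw x hgt).1
        have h2 := (stepF_gt hw y (hxy ▸ hgt)).1
        have := ih (stepF hw x) (stepF hw y) (by omega) (by omega) he
        exact stepF_gt_inj hw x y hxy hgt this
      · have hxem : rk x = w * (n - w) / 2 := by omega
        rw [stepF_eq hw x hxem, stepF_eq hw y (hxy ▸ hxem)] at he
        exact ih x y hxy hxm he

end Step
section Final

open scoped Classical

variable {n w : ℕ}

noncomputable def Phi (hw : w ≤ n) : T n w → T n w := fun x =>
  if rk x ≤ w * (n - w) / 2 then (stepF hw)^[w * (n - w) / 2 - rk x] x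
  else (stepF hw)^[rk x - w * (n - w) / 2] x

lemma Phi_rk (hw : w ≤ n) (x : T n w) : rk (Phi hw x) = w * (n - w) / 2 := by
  unfold Phi
  by_cases h : rk x ≤ w * (n - w) / 2
  · rw [if_pos h, (iter_low hw _ x h).1]; omega
  · rw [if_neg h, (iter_high hw _ x (by omega)).1]
    have := rk_le hw x
    omega

lemma Phi_le_low (hw : w ≤ n) (x : T n w) (h : rk x ≤ w * (n - w) / 2) (i : Fin w) :
    x.1 i ≤ (Phi hw x).1 i := by
  unfold Phi
  rw [if_pos h]
  exact (iter_low hw _ x h).2 i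

lemma Phi_le_high (hw : w ≤ n) (x : T n w) (h : ¬ rk x ≤ w * (n - w) / 2) (i : Fin w) :
    (Phi hw x).1 i ≤ x.1 i := by
  unfold Phi
  rw [if_neg h]
  exact (iter_high hw _ x (by omega)).2 i

lemma aux_low (hw : w ≤ n) (x y : T n w) (hxy : rk x ≤ rk y) (hy : rk y ≤ w * (n - w) / 2)
    (hP : Phi hw x = Phi hw y) : ∀ i, x.1 i ≤ y.1 i := by
  set m := w * (n - w) / 2 with hm
  set d := rk y - rk x with hd
  set z := (stepF hw)^[d] x with hz
  have hrz : rk z = rk y := by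
    rw [hz, (iter_low hw d x (by omega)).1]
    omega
  have hxz : ∀ i, x.1 i ≤ z.1 i := (iter_low hw d x (by omega)).2
  have hPx : Phi hw x = (stepF hw)^[m - rk y] z := by
    unfold Phi
    rw [if_pos (by omega), hz, ← Function.iterate_add_apply]
    congr 1
    omega
  have hPy : Phi hw y = (stepF hw)^[m - rk y] y := by
    unfold Phi
    rw [if_pos hy]
  have hzy : z = y :=
    iter_inj_low hw (m - rk y) z y hrz (by omega) (by rw [← hPx, ← hPy]; exact hP)
  intro i
  exact hzy ▸ hxz i

lemma aux_high (hw : w ≤ n) (x y : T n w) (hxy : rk y ≤ rk x) (hy : w * (n - w) / 2 ≤ rk y)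
    (hP : Phi hw x = Phi hw y) : ∀ i, y.1 i ≤ x.1 i := by
  set m := w * (n - w) / 2 with hm
  set d := rk x - rk y with hd
  set z := (stepF hw)^[d] x with hz
  have hrz : rk z = rk y := by
    rw [hz, (iter_high hw d x (by omega)).1]
    omega
  have hxz : ∀ i, z.1 i ≤ x.1 i := (iter_high hw d x (by omega)).2
  have hPx : Phi hw x = (stepF hw)^[rk y - m] z := by
    by_cases hxm : rk x ≤ m
    · have hde : d = 0 ∧ rk y = rk x := by omega
      unfold Phi
      rw [if_pos hxm, hz, hde.1]
      simp only [Function.iterate_zero, id_eq]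
      congr 1
      omega
    · unfold Phi
      rw [if_neg hxm, hz, ← Function.iterate_add_apply]
      congr 1
      omega
  have hPy : Phi hw y = (stepF hw)^[rk y - m] y := by
    by_cases hym : rk y ≤ m
    · have : rk y = m := by omega
      unfold Phi
      rw [if_pos hym]
      congr 1
      omega
    · unfold Phi
      rw [if_neg hym]
  have hzy : z = y :=
    iter_inj_high hw (rk y - m) z y hrz (by omega) (by rw [← hPx, ← hPy]; exact hP)
  intro i
  exact hzy ▸ hxz i

lemma antichain_card_le (hw : w ≤ n) (C : Finset (T n w))
    (hanti : ∀ x ∈ C, ∀ y ∈ C, x ≠ y → ¬ (∀ i, x.1 i ≤ y.1 i)) :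
    C.card ≤ (Finset.univ.filter (fun x : T n w => rk x = w * (n - w) / 2)).card := by
  apply Finset.card_le_card_of_injOn (Phi hw)
  · intro x _
    simp only [Finset.mem_coe, Finset.mem_filter, Finset.mem_univ, true_and]
    exact Phi_rk hw x
  · intro x hx y hy hP
    by_contra hne
    by_cases hxm : rk x ≤ w * (n - w) / 2
    · by_cases hym : rk y ≤ w * (n - w) / 2
      · rcases le_total (rk x) (rk y) with hle | hle
        · exact hanti x hx y hy hne (aux_low hw x y hle hym hP)
        · exact hanti y hy x hx (Ne.symm hne) (aux_low hw y x hle hxm hP.symm)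
      · -- rk x ≤ m < rk y
        apply hanti x hx y hy hne
        intro i
        calc x.1 i ≤ (Phi hw x).1 i := Phi_le_low hw x hxm i
          _ = (Phi hw y).1 i := by rw [hP]
          _ ≤ y.1 i := Phi_le_high hw y hym i
    · by_cases hym : rk y ≤ w * (n - w) / 2
      · apply hanti y hy x hx (Ne.symm hne)
        intro i
        calc y.1 i ≤ (Phi hw y).1 i := Phi_le_low hw y hym i
          _ = (Phi hw x).1 i := by rw [hP]
          _ ≤ x.1 i := Phi_le_high hw x hxm i
      · rcases le_total (rk x) (rk y) with hle | hle
        · exact hanti x hx y hy hne (aux_high hw y x hle (by omega) hP.symm)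
        · exact hanti y hy x hx (Ne.symm hne) (aux_high hw x y hle (by omega) hP)

lemma mid_antichain (x y : T n w) (hr : rk x = rk y) (hle : ∀ i, x.1 i ≤ y.1 i) : x = y := by
  have hsum : ∀ z : T n w, (∑ i, ((z.1 i : ℕ))) = rk z + ∑ i : Fin w, (i : ℕ) := by
    intro z
    unfold rk
    rw [← Finset.sum_add_distrib]
    apply Finset.sum_congr rfl
    intro i _
    have := le_apply z i
    omega
  have hs : (∑ i, ((x.1 i : ℕ))) = ∑ i, ((y.1 i : ℕ)) := by
    rw [hsum x, hsum y, hr]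
  have hco : ∀ i, (x.1 i : ℕ) = (y.1 i : ℕ) := by
    by_contra hcon
    push_neg at hcon
    obtain ⟨i0, hi0⟩ := hcon
    have hlt : (x.1 i0 : ℕ) < (y.1 i0 : ℕ) := lt_of_le_of_ne (hle i0) hi0
    have : (∑ i, ((x.1 i : ℕ))) < ∑ i, ((y.1 i : ℕ)) := by
      apply Finset.sum_lt_sum
      · intro i _; exact hle i
      · exact ⟨i0, Finset.mem_univ i0, hlt⟩
    omega
  apply Subtype.ext
  funext i
  exact Fin.ext (hco i)

end Final
section Assemble

open scoped Classical

variable {n w : ℕ}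

lemma card_eq_natCard (hw : w ≤ n) :
    (Finset.univ.filter (fun x : T n w => rk x = w * (n - w) / 2)).card
      = Nat.card {l : Fin w → Fin n // StrictMono l ∧
          ∑ i, ((l i : ℕ) - (i : ℕ)) = w * (n - w) / 2} := by
  have e1 : {l : Fin w → Fin n // StrictMono l ∧
      ∑ i, ((l i : ℕ) - (i : ℕ)) = w * (n - w) / 2}
      ≃ {x : T n w // rk x = w * (n - w) / 2} :=
    (Equiv.subtypeSubtypeEquivSubtypeInter (fun l : Fin w → Fin n => StrictMono l)
      (fun l => ∑ i, ((l i : ℕ) - (i : ℕ)) = w * (n - w) / 2)).symm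
  rw [Nat.card_congr e1, Nat.card_eq_fintype_card, Fintype.card_subtype]

end Assemble
end Stmt14

/-- Sperner property of the poset `L(n-w, w)`: the maximum cardinality of a code of
binary words of length `n` and Hamming weight `w` (identified with strictly increasing
position sequences `λ : Fin w → Fin n`) detecting all patterns of right-shifts, i.e.,
an antichain for the coordinatewise order, equals the number of such words of rank
`⌊w(n-w)/2⌋`, where the rank is `ρ(λ) = Σ_i (λ i - i)`. -/
theorem stmt14 (n w : ℕ) (hw : w ≤ n) :
    IsGreatest {k | ∃ C : Finset {l : Fin w → Fin n // StrictMono l},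
        (∀ x ∈ C, ∀ y ∈ C, x ≠ y → ¬ (∀ i, x.1 i ≤ y.1 i)) ∧ C.card = k}
      (Nat.card {l : Fin w → Fin n // StrictMono l ∧
        ∑ i, ((l i : ℕ) - (i : ℕ)) = w * (n - w) / 2}) := by
  classical
  constructor
  · refine ⟨Finset.univ.filter (fun x : Stmt14.T n w => Stmt14.rk x = w * (n - w) / 2), ?_, ?_⟩
    · intro x hx y hy hne hle
      rw [Finset.mem_filter] at hx hy
      exact hne (Stmt14.mid_antichain x y (hx.2.trans hy.2.symm) hle)
    · exact Stmt14.card_eq_natCard hw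
  · rintro k ⟨C, hC, hcard⟩
    rw [← Stmt14.card_eq_natCard hw, ← hcard]
    exact Stmt14.antichain_card_le hw C hC
end
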